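/- arXiv:2310.02403 — 3 statements merged into one kernel-verified Lean document; each statement's English description precedes it below -/
import Mathlib

section
/- Over the Laurent polynomial ring (Z/5Z)[v,v^{-1}], the ordered product of the Burau matrices B_{i_1}*...*B_{i_174}, where (i_1,...,i_174) is the word W1 = (1,2,1,3,2,2,1,3,1,3,2,2,2,1,3,1,2,2,1,3,1,2,2,1,3,1,3,1,2,3,2,1,1,2,3,2,2,1,3,1,2,3,2,2,1,3,1,3,2,2,2,1,3,1,2,2,1,3,1,2,2,2,1,3,1,2,3,2,2,1,3,1,2,3,2,2,1,3,1,2,3,2,1,1,3,1,3,1,3,2,2,1,3,1,2,2,1,3,1,2,2,2,1,3,2,2,1,3,1,3,2,1,2,1,3,1,3,2,1,2,1,3,1,2,3,2,1,1,3,2,2,1,3,3,2,2,1,3,3,2,2,1,3,1,2,3,2,1,1,3,2,1,2,1,3,1,3,2,1,2,1,3,1,3,2,2,1,3,2,2,2,1,3,1), equals -v^{116} * J, where J is the 3x3 antidiagonal permutation matrix. (This matrix equals the 5-Burau matrix of Delta^{29}; hence W1 yields a kernel element Delta^{-29}*W1 of the mod-5 Burau representation of B4 of Garside length 59.) -/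
open LaurentPolynomial

/-- The reduced Burau matrices for the 4-strand braid group over `R[v,v⁻¹]` (with `v = T 1`),
indexed so that `BurauB R k` is the Burau matrix of the Artin generator `s_k` for `k = 1, 2, 3`. -/
noncomputable def BurauB (R : Type) [CommRing R] : ℕ → Matrix (Fin 3) (Fin 3) (LaurentPolynomial R)
  | 1 => !![-(T 1)^2, -(T 1), 0; 0, 1, 0; 0, 0, 1]
  | 2 => !![1, 0, 0; -(T 1), -(T 1)^2, -(T 1); 0, 0, 1]
  | 3 => !![1, 0, 0; 0, 1, 0; 0, -(T 1), -(T 1)^2]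
  | _ => 1

/-- The 3×3 antidiagonal permutation matrix `J`. -/
noncomputable def Jmat (R : Type) [CommRing R] : Matrix (Fin 3) (Fin 3) (LaurentPolynomial R) :=
  !![0, 0, 1; 0, 1, 0; 1, 0, 0]

/-- The word `W1` in the Artin generators (of length 174). -/
def W1word : List ℕ :=
  [1, 2, 1, 3, 2, 2, 1, 3, 1, 3, 2, 2, 2, 1, 3, 1, 2, 2, 1, 3, 1, 2, 2, 1, 3, 1,
   3, 1, 2, 3, 2, 1, 1, 2, 3, 2, 2, 1, 3, 1, 2, 3, 2, 2, 1, 3, 1, 3, 2, 2, 2, 1,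
   3, 1, 2, 2, 1, 3, 1, 2, 2, 2, 1, 3, 1, 2, 3, 2, 2, 1, 3, 1, 2, 3, 2, 2, 1, 3,
   1, 2, 3, 2, 1, 1, 3, 1, 3, 1, 3, 2, 2, 1, 3, 1, 2, 2, 1, 3, 1, 2, 2, 2, 1, 3,
   2, 2, 1, 3, 1, 3, 2, 1, 2, 1, 3, 1, 3, 2, 1, 2, 1, 3, 1, 2, 3, 2, 1, 1, 3, 2,
   2, 1, 3, 3, 2, 2, 1, 3, 3, 2, 2, 1, 3, 1, 2, 3, 2, 1, 1, 3, 2, 1, 2, 1, 3, 1,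
   3, 2, 1, 2, 1, 3, 1, 3, 2, 2, 1, 3, 2, 2, 2, 1, 3, 1]


set_option maxHeartbeats 1000000
noncomputable abbrev LL := LaurentPolynomial (ZMod 5)

lemma h5 : (5 : LL) = 0 := by
  rw [show (5:LL) = algebraMap (ZMod 5) LL 5 from (map_ofNat _ 5).symm,
    show (5:ZMod 5) = 0 from rfl, map_zero]

lemma smul3 (s a b c d e f g h i : LL) :
    s • (!![a,b,c;d,e,f;g,h,i] : Matrix (Fin 3) (Fin 3) LL) =
      !![s*a,s*b,s*c;s*d,s*e,s*f;s*g,s*h,s*i] := by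
  ext i j; fin_cases i <;> fin_cases j <;> simp

noncomputable def prodw (l : List ℕ) : Matrix (Fin 3) (Fin 3) LL :=
  (l.map (BurauB (ZMod 5))).prod

lemma prodw_append (a b : List ℕ) : prodw (a ++ b) = prodw a * prodw b := by
  simp [prodw]

noncomputable def m0 : Matrix (Fin 3) (Fin 3) LL := !![-(T 1)^2, -(T 1), 0; 0, 1, 0; 0, 0, 1]

noncomputable def m1 : Matrix (Fin 3) (Fin 3) LL := !![1, 0, 0; -(T 1), -(T 1)^2, -(T 1); 0, 0, 1]

noncomputable def m2 : Matrix (Fin 3) (Fin 3) LL := !![0, (T 1)^3, (T 1)^2; 4*(T 1), 4*(T 1)^2, 4*(T 1); 0, 0, 1]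

noncomputable def m3 : Matrix (Fin 3) (Fin 3) LL := !![1, 0, 0; 0, 1, 0; 0, -(T 1), -(T 1)^2]

noncomputable def m4 : Matrix (Fin 3) (Fin 3) LL := !![1, 0, 0; 4*(T 1), 4*(T 1)^2, 4*(T 1); (T 1)^2, (T 1)^3, 0]

noncomputable def m5 : Matrix (Fin 3) (Fin 3) LL := !![0, (T 1)^3, (T 1)^2; 4*(T 1), 4*(T 1)^2, 4*(T 1); (T 1)^2, (T 1)^3, 0]

noncomputable def m6 : Matrix (Fin 3) (Fin 3) LL := !![0, 0, 4*(T 1)^4; 0, 4*(T 1)^4, 0; (T 1)^2, (T 1)^3, 0]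

noncomputable def m7 : Matrix (Fin 3) (Fin 3) LL := !![4*(T 1)^2, 4*(T 1), 0; (T 1)^3, 0, 4*(T 1); 0, 0, 1]

noncomputable def m8 : Matrix (Fin 3) (Fin 3) LL := !![4*(T 1)^2, 4*(T 1), 0; 0, 1, 0; 0, 4*(T 1), 4*(T 1)^2]

noncomputable def m9 : Matrix (Fin 3) (Fin 3) LL := !![4*(T 1)^2, 4*(T 1), 0; 0, 1, 0; 0, 4*(T 1) + (T 1)^3, (T 1)^4]

noncomputable def m10 : Matrix (Fin 3) (Fin 3) LL := !![(T 1)^4, 4*(T 1) + (T 1)^3, 0; 4*(T 1)^5, (T 1)^2 + 3*(T 1)^4, 4*(T 1)^5; 0, 4*(T 1) + (T 1)^3, (T 1)^4]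

noncomputable def m11 : Matrix (Fin 3) (Fin 3) LL := !![0, (T 1)^5 + 4*(T 1)^7, 4*(T 1)^8; (T 1)^9, 4*(T 1)^6 + 2*(T 1)^8, (T 1)^9; (T 1)^6 + 4*(T 1)^8, 4*(T 1)^3 + 2*(T 1)^5 + 3*(T 1)^7, 4*(T 1)^8]

noncomputable def m12 : Matrix (Fin 3) (Fin 3) LL := !![1, 0, 0; 4*(T 1) + (T 1)^3, (T 1)^4, 4*(T 1) + (T 1)^3; 0, 0, 1]

noncomputable def m13 : Matrix (Fin 3) (Fin 3) LL := !![4*(T 1)^2, 4*(T 1), 0; (T 1)^3, (T 1)^2, (T 1)^3; 0, 4*(T 1), 4*(T 1)^2]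

noncomputable def m14 : Matrix (Fin 3) (Fin 3) LL := !![4*(T 1)^2, 4*(T 1), 0; (T 1)^3 + 4*(T 1)^5 + (T 1)^7, 2*(T 1)^2 + 3*(T 1)^4 + (T 1)^6, (T 1)^3 + 4*(T 1)^5 + (T 1)^7; 0, 4*(T 1), 4*(T 1)^2]

noncomputable def m15 : Matrix (Fin 3) (Fin 3) LL := !![4*(T 1)^4, 4*(T 1)^5, (T 1)^2 + 4*(T 1)^4; 4*(T 1) + (T 1)^3, (T 1)^4, 4*(T 1) + (T 1)^3; 0, 0, 1]

noncomputable def m16 : Matrix (Fin 3) (Fin 3) LL := !![(T 1)^4, 4*(T 1) + (T 1)^3, 0; 0, 1, 0; 0, 4*(T 1), 4*(T 1)^2]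

noncomputable def m17 : Matrix (Fin 3) (Fin 3) LL := !![4*(T 1)^8, 4*(T 1)^3 + (T 1)^5 + 4*(T 1)^7, 4*(T 1)^4 + (T 1)^6; 4*(T 1)^5 + (T 1)^7, 2*(T 1)^2 + 3*(T 1)^4 + (T 1)^6, (T 1)^3 + 4*(T 1)^5; 0, 4*(T 1), 4*(T 1)^2]

noncomputable def m18 : Matrix (Fin 3) (Fin 3) LL := !![(T 1)^6 + 4*(T 1)^8 + (T 1)^10, 3*(T 1)^3 + 3*(T 1)^5 + 3*(T 1)^7 + (T 1)^9, 4*(T 1)^4 + 2*(T 1)^6 + 4*(T 1)^8; 3*(T 1)^7 + 4*(T 1)^9 + (T 1)^11 + 2*(T 1)^13 + 4*(T 1)^15, 3*(T 1)^4 + 2*(T 1)^6 + 4*(T 1)^8 + 3*(T 1)^10 + 3*(T 1)^12 + 4*(T 1)^14, (T 1)^5 + (T 1)^7 + 4*(T 1)^9 + 2*(T 1)^11 + (T 1)^13; (T 1)^6 + 4*(T 1)^8, 4*(T 1)^3 + 2*(T 1)^5 + 4*(T 1)^7, (T 1)^6]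

noncomputable def m19 : Matrix (Fin 3) (Fin 3) LL := !![3*(T 1)^12 + 3*(T 1)^16 + (T 1)^18 + 2*(T 1)^20 + (T 1)^22, 3*(T 1)^9 + (T 1)^19 + (T 1)^21, (T 1)^10 + 2*(T 1)^14 + 3*(T 1)^16 + 4*(T 1)^18 + 4*(T 1)^20; 2*(T 1)^13 + 4*(T 1)^15 + (T 1)^19 + 3*(T 1)^23, 2*(T 1)^10 + (T 1)^12 + 2*(T 1)^16 + 4*(T 1)^18 + 2*(T 1)^20 + 3*(T 1)^22, 4*(T 1)^11 + (T 1)^15 + 3*(T 1)^19 + 2*(T 1)^21; 2*(T 1)^10 + 3*(T 1)^12 + 3*(T 1)^14 + 2*(T 1)^18 + 4*(T 1)^20 + 2*(T 1)^22, 2*(T 1)^7 + 2*(T 1)^9 + 4*(T 1)^13 + 4*(T 1)^15 + 2*(T 1)^19 + 2*(T 1)^21, 4*(T 1)^8 + 4*(T 1)^12 + (T 1)^16 + 3*(T 1)^18 + 3*(T 1)^20]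

noncomputable def m20 : Matrix (Fin 3) (Fin 3) LL := !![(T 1)^4, 4*(T 1) + (T 1)^3, 0; 4*(T 1)^5 + (T 1)^7, 2*(T 1)^2 + 3*(T 1)^4 + (T 1)^6, (T 1)^3 + 4*(T 1)^5; 0, 4*(T 1), 4*(T 1)^2]

noncomputable def m21 : Matrix (Fin 3) (Fin 3) LL := !![4*(T 1)^2, 4*(T 1), 0; (T 1)^3, 0, 4*(T 1); 4*(T 1)^4, 0, 0]

noncomputable def m22 : Matrix (Fin 3) (Fin 3) LL := !![0, 0, 4*(T 1)^4; (T 1)^3, (T 1)^2, (T 1)^3; 4*(T 1)^4 + (T 1)^6, 4*(T 1)^3, 4*(T 1)^4]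

noncomputable def m23 : Matrix (Fin 3) (Fin 3) LL := !![4*(T 1)^4 + (T 1)^6, 4*(T 1)^3 + (T 1)^5, 4*(T 1)^4 + (T 1)^6 + 4*(T 1)^8; 2*(T 1)^5 + 2*(T 1)^7 + 3*(T 1)^9 + 4*(T 1)^11, 2*(T 1)^4 + 2*(T 1)^6 + 2*(T 1)^8, 2*(T 1)^5 + 2*(T 1)^7 + 3*(T 1)^9 + 4*(T 1)^11; 4*(T 1)^4 + (T 1)^6 + 4*(T 1)^8, 4*(T 1)^3 + (T 1)^5, 4*(T 1)^4 + (T 1)^6]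

noncomputable def m24 : Matrix (Fin 3) (Fin 3) LL := !![1, 0, 0; 4*(T 1) + (T 1)^3, (T 1)^4, 4*(T 1) + (T 1)^3; (T 1)^2 + 4*(T 1)^4, 4*(T 1)^5, 4*(T 1)^4]

noncomputable def m25 : Matrix (Fin 3) (Fin 3) LL := !![0, 0, 4*(T 1)^4; 4*(T 1), 0, (T 1)^3; (T 1)^2 + 4*(T 1)^4, 4*(T 1)^5, 4*(T 1)^4]

noncomputable def m26 : Matrix (Fin 3) (Fin 3) LL := !![1, 0, 0; 4*(T 1), 0, (T 1)^3; (T 1)^2, (T 1)^3, 0]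

noncomputable def m27 : Matrix (Fin 3) (Fin 3) LL := !![(T 1)^2, 0, 4*(T 1)^4 + (T 1)^6; 4*(T 1), 0, (T 1)^3; (T 1)^2 + 4*(T 1)^4, 4*(T 1)^5, 4*(T 1)^4]

noncomputable def m28 : Matrix (Fin 3) (Fin 3) LL := !![4*(T 1)^6 + (T 1)^8, (T 1)^9, (T 1)^8; 4*(T 1)^3 + (T 1)^5 + 4*(T 1)^7, 4*(T 1)^8, (T 1)^5 + 3*(T 1)^7; (T 1)^4 + 4*(T 1)^6 + (T 1)^8, (T 1)^9, 4*(T 1)^6 + 2*(T 1)^8 + 4*(T 1)^10]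

noncomputable def m29 : Matrix (Fin 3) (Fin 3) LL := !![(T 1)^6 + 2*(T 1)^8 + 4*(T 1)^12 + 3*(T 1)^14 + 4*(T 1)^16, (T 1)^11 + 2*(T 1)^13 + 2*(T 1)^15 + 4*(T 1)^17, 4*(T 1)^8 + 4*(T 1)^10 + 4*(T 1)^12 + 2*(T 1)^16 + (T 1)^18; 3*(T 1)^7 + 2*(T 1)^9 + (T 1)^11 + 3*(T 1)^13 + 3*(T 1)^17 + 3*(T 1)^19, 3*(T 1)^12 + 2*(T 1)^14 + 2*(T 1)^16 + (T 1)^18 + 3*(T 1)^20, 2*(T 1)^9 + (T 1)^11 + 2*(T 1)^13 + 2*(T 1)^15 + 3*(T 1)^17 + 4*(T 1)^19 + (T 1)^21; (T 1)^6 + 2*(T 1)^8 + 3*(T 1)^14 + 4*(T 1)^16, (T 1)^11 + 2*(T 1)^13 + 2*(T 1)^15 + 4*(T 1)^17, 4*(T 1)^8 + 4*(T 1)^10 + 4*(T 1)^12 + 4*(T 1)^14 + 3*(T 1)^16]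

noncomputable def m30 : Matrix (Fin 3) (Fin 3) LL := !![(T 1)^18 + (T 1)^20 + 4*(T 1)^22 + 2*(T 1)^24 + (T 1)^26 + 2*(T 1)^28 + (T 1)^32 + 3*(T 1)^40, (T 1)^23 + (T 1)^25 + 3*(T 1)^27 + 2*(T 1)^29 + 4*(T 1)^31 + 2*(T 1)^33 + 3*(T 1)^35 + 4*(T 1)^37 + 3*(T 1)^39 + 3*(T 1)^41, 4*(T 1)^20 + 4*(T 1)^24 + 4*(T 1)^26 + (T 1)^28 + 2*(T 1)^32 + (T 1)^34 + 2*(T 1)^36 + (T 1)^38 + (T 1)^40 + (T 1)^42; 2*(T 1)^19 + 3*(T 1)^21 + 3*(T 1)^23 + 3*(T 1)^25 + 2*(T 1)^29 + 3*(T 1)^31 + 2*(T 1)^33 + (T 1)^35 + 2*(T 1)^39 + 4*(T 1)^41, 2*(T 1)^24 + 3*(T 1)^26 + (T 1)^32 + 3*(T 1)^34 + (T 1)^36 + 4*(T 1)^38 + (T 1)^40 + 4*(T 1)^42, 3*(T 1)^21 + 4*(T 1)^23 + 4*(T 1)^25 + (T 1)^27 + 3*(T 1)^33 + (T 1)^35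 + 2*(T 1)^37 + 2*(T 1)^39 + 2*(T 1)^41 + 3*(T 1)^43; 2*(T 1)^18 + 2*(T 1)^20 + 3*(T 1)^22 + 4*(T 1)^24 + 2*(T 1)^26 + (T 1)^28 + 2*(T 1)^32 + 2*(T 1)^34 + (T 1)^40, 2*(T 1)^23 + 2*(T 1)^27 + 3*(T 1)^29 + 4*(T 1)^31 + (T 1)^33 + 3*(T 1)^35 + 3*(T 1)^37 + (T 1)^39 + (T 1)^41, 3*(T 1)^20 + 3*(T 1)^24 + 2*(T 1)^26 + 2*(T 1)^28 + 2*(T 1)^30 + 3*(T 1)^32 + (T 1)^34 + 3*(T 1)^36 + 2*(T 1)^38 + 2*(T 1)^40 + 2*(T 1)^42]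

noncomputable def m31 : Matrix (Fin 3) (Fin 3) LL := !![1, 0, 0; 4*(T 1) + (T 1)^3 + 4*(T 1)^5, 4*(T 1)^6, 4*(T 1) + (T 1)^3 + 4*(T 1)^5; 0, 0, 1]

noncomputable def m32 : Matrix (Fin 3) (Fin 3) LL := !![(T 1)^4, 4*(T 1) + (T 1)^3, 0; 4*(T 1)^5 + (T 1)^7 + 4*(T 1)^9, 2*(T 1)^2 + 2*(T 1)^4 + 2*(T 1)^6 + 4*(T 1)^8, (T 1)^3 + 4*(T 1)^5 + (T 1)^7; 0, 4*(T 1), 4*(T 1)^2]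

noncomputable def m33 : Matrix (Fin 3) (Fin 3) LL := !![(T 1)^6 + 4*(T 1)^8 + 2*(T 1)^10 + 4*(T 1)^12, 3*(T 1)^3 + 4*(T 1)^5 + (T 1)^7 + 3*(T 1)^9 + 4*(T 1)^11, 4*(T 1)^4 + 2*(T 1)^6 + 3*(T 1)^8 + (T 1)^10; 4*(T 1)^7 + 2*(T 1)^9 + 2*(T 1)^11 + 2*(T 1)^13, 2*(T 1)^4 + 2*(T 1)^8 + 2*(T 1)^12, (T 1)^5 + 3*(T 1)^7 + 3*(T 1)^9 + 3*(T 1)^11; (T 1)^6 + 3*(T 1)^8 + 2*(T 1)^10 + 4*(T 1)^12, 3*(T 1)^3 + 4*(T 1)^5 + 3*(T 1)^9 + 4*(T 1)^11, 4*(T 1)^4 + (T 1)^6 + 3*(T 1)^8 + (T 1)^10]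

noncomputable def m34 : Matrix (Fin 3) (Fin 3) LL := !![(T 1)^6 + 4*(T 1)^8 + 2*(T 1)^10 + 4*(T 1)^12, 3*(T 1)^3 + 4*(T 1)^5 + (T 1)^7 + 3*(T 1)^9 + 4*(T 1)^11, 4*(T 1)^4 + 2*(T 1)^6 + 3*(T 1)^8 + (T 1)^10; 3*(T 1)^7 + 3*(T 1)^9 + (T 1)^11 + 3*(T 1)^13 + 4*(T 1)^15, 3*(T 1)^4 + 2*(T 1)^6 + 2*(T 1)^10 + 4*(T 1)^12 + 4*(T 1)^14, (T 1)^5 + 2*(T 1)^7 + 2*(T 1)^11 + (T 1)^13; (T 1)^6 + 4*(T 1)^8 + (T 1)^10, 4*(T 1)^3 + 3*(T 1)^5 + 3*(T 1)^7 + (T 1)^9, (T 1)^6 + 4*(T 1)^8]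

noncomputable def m35 : Matrix (Fin 3) (Fin 3) LL := !![3*(T 1)^10 + (T 1)^14 + 2*(T 1)^18 + (T 1)^20 + 3*(T 1)^22 + (T 1)^26, (T 1)^9 + 2*(T 1)^11 + 3*(T 1)^13 + 4*(T 1)^15 + 3*(T 1)^17 + 3*(T 1)^19 + 4*(T 1)^21 + 4*(T 1)^23 + (T 1)^25, 3*(T 1)^8 + 3*(T 1)^10 + (T 1)^14 + 2*(T 1)^16 + (T 1)^18 + (T 1)^20 + 4*(T 1)^24; 2*(T 1)^11 + 2*(T 1)^13 + 2*(T 1)^15 + 3*(T 1)^17 + (T 1)^19 + 2*(T 1)^23 + 4*(T 1)^25 + 3*(T 1)^27, (T 1)^10 + 2*(T 1)^12 + 2*(T 1)^14 + 3*(T 1)^16 + 2*(T 1)^20 + (T 1)^22 + (T 1)^24 + 3*(T 1)^26, 2*(T 1)^9 + (T 1)^11 + 2*(T 1)^15 + (T 1)^17 + 2*(T 1)^19 + (T 1)^23 + 2*(T 1)^25; 3*(T 1)^10 + 4*(T 1)^12 + 3*(T 1)^14 + 2*(T 1)^16 + 4*(T 1)^18 + 4*(T 1)^20 + 4*(T 1)^22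 + (T 1)^26, 2*(T 1)^9 + 3*(T 1)^11 + 4*(T 1)^13 + 2*(T 1)^15 + 3*(T 1)^17 + 4*(T 1)^23 + (T 1)^25, 3*(T 1)^8 + 3*(T 1)^10 + 4*(T 1)^12 + 3*(T 1)^14 + 4*(T 1)^16 + 3*(T 1)^18 + 4*(T 1)^24]

noncomputable def m36 : Matrix (Fin 3) (Fin 3) LL := !![1, 0, 0; 4*(T 1), 0, (T 1)^3; 0, 4*(T 1), 4*(T 1)^2]

noncomputable def m37 : Matrix (Fin 3) (Fin 3) LL := !![4*(T 1)^2, 4*(T 1), 0; (T 1)^3 + 4*(T 1)^5, (T 1)^2, 4*(T 1) + (T 1)^3; 0, 0, 1]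

noncomputable def m38 : Matrix (Fin 3) (Fin 3) LL := !![4*(T 1)^2, 4*(T 1), 0; (T 1)^3, (T 1)^2, (T 1)^3; 4*(T 1)^4 + (T 1)^6, 4*(T 1)^3, 4*(T 1)^4]

noncomputable def m39 : Matrix (Fin 3) (Fin 3) LL := !![0, 0, 4*(T 1)^4; 4*(T 1), 0, (T 1)^3; (T 1)^2 + 4*(T 1)^4 + (T 1)^6, (T 1)^7, 4*(T 1)^4 + (T 1)^6]

noncomputable def m40 : Matrix (Fin 3) (Fin 3) LL := !![(T 1)^2, 0, 4*(T 1)^4 + (T 1)^6; 4*(T 1)^3 + (T 1)^5 + 4*(T 1)^7 + (T 1)^9, (T 1)^10, (T 1)^5 + 3*(T 1)^7 + (T 1)^9; (T 1)^4 + 4*(T 1)^6 + (T 1)^8 + 4*(T 1)^10, 4*(T 1)^11, 4*(T 1)^6 + 2*(T 1)^8 + 3*(T 1)^10]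

noncomputable def m41 : Matrix (Fin 3) (Fin 3) LL := !![0, 0, 4*(T 1)^4; 4*(T 1), 0, (T 1)^3; 0, 4*(T 1), 4*(T 1)^2]

noncomputable def m42 : Matrix (Fin 3) (Fin 3) LL := !![(T 1)^2, 0, 4*(T 1)^4 + (T 1)^6; 4*(T 1), 0, (T 1)^3; (T 1)^2, (T 1)^3, 0]

noncomputable def m43 : Matrix (Fin 3) (Fin 3) LL := !![(T 1)^4, 4*(T 1) + (T 1)^3, 0; 0, 1, 0; 0, 0, 1]

noncomputable def m44 : Matrix (Fin 3) (Fin 3) LL := !![(T 1)^4, 4*(T 1) + (T 1)^3, 0; 4*(T 1)^5, 4*(T 1)^4, 4*(T 1); 0, 0, 1]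

noncomputable def m45 : Matrix (Fin 3) (Fin 3) LL := !![4*(T 1)^6, 4*(T 1) + (T 1)^3 + 4*(T 1)^5, 0; (T 1)^7, (T 1)^2 + 3*(T 1)^4 + (T 1)^6, 4*(T 1)^5; 0, 4*(T 1) + (T 1)^3, (T 1)^4]

noncomputable def m46 : Matrix (Fin 3) (Fin 3) LL := !![4*(T 1)^8, 4*(T 1)^3 + 2*(T 1)^5 + 2*(T 1)^7 + (T 1)^9, 4*(T 1)^8 + (T 1)^10; (T 1)^7, (T 1)^2 + 3*(T 1)^4 + 2*(T 1)^6, (T 1)^7; 4*(T 1)^8 + (T 1)^10, 4*(T 1)^3 + 2*(T 1)^5 + 2*(T 1)^7 + (T 1)^9, 4*(T 1)^8]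

noncomputable def m47 : Matrix (Fin 3) (Fin 3) LL := !![4*(T 1)^10 + (T 1)^12 + 3*(T 1)^14 + (T 1)^16, 4*(T 1)^5 + 3*(T 1)^7 + 4*(T 1)^9 + (T 1)^11 + (T 1)^13 + (T 1)^15, 4*(T 1)^10 + 2*(T 1)^12 + 4*(T 1)^14; (T 1)^11 + 3*(T 1)^13 + 4*(T 1)^15 + 2*(T 1)^17 + (T 1)^19, (T 1)^6 + (T 1)^8 + (T 1)^12 + 3*(T 1)^14 + 3*(T 1)^16 + 2*(T 1)^18, (T 1)^11 + 2*(T 1)^13 + 4*(T 1)^15 + 3*(T 1)^17 + (T 1)^19; 4*(T 1)^12 + 2*(T 1)^14 + (T 1)^16 + 4*(T 1)^18 + 3*(T 1)^20, 4*(T 1)^7 + 4*(T 1)^9 + 2*(T 1)^19, 4*(T 1)^12 + 3*(T 1)^14 + (T 1)^16 + 3*(T 1)^18 + 4*(T 1)^20]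

noncomputable def m48 : Matrix (Fin 3) (Fin 3) LL := !![(T 1)^22 + (T 1)^26 + 4*(T 1)^28 + (T 1)^30 + 2*(T 1)^32 + 4*(T 1)^36 + 4*(T 1)^38 + (T 1)^40 + 3*(T 1)^42 + 3*(T 1)^44, (T 1)^17 + 3*(T 1)^19 + 3*(T 1)^21 + 4*(T 1)^23 + 4*(T 1)^25 + (T 1)^27 + 2*(T 1)^29 + 3*(T 1)^33 + 3*(T 1)^35 + 2*(T 1)^37 + (T 1)^39 + 2*(T 1)^41, (T 1)^22 + 4*(T 1)^24 + 4*(T 1)^26 + 4*(T 1)^28 + 2*(T 1)^30 + (T 1)^32 + (T 1)^34 + (T 1)^36 + 4*(T 1)^38 + 2*(T 1)^40 + 4*(T 1)^42 + 2*(T 1)^44; 2*(T 1)^21 + 3*(T 1)^23 + 2*(T 1)^25 + 3*(T 1)^27 + 2*(T 1)^31 + 2*(T 1)^33 + 2*(T 1)^37 + 4*(T 1)^41 + (T 1)^43 + 4*(T 1)^45, 2*(T 1)^16 + 4*(T 1)^18 + 2*(T 1)^22 + (T 1)^26 + (T 1)^28 + 2*(T 1)^32 + (T 1)^34 + (T 1)^38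 + (T 1)^40 + (T 1)^42, 2*(T 1)^21 + (T 1)^23 + 2*(T 1)^27 + 3*(T 1)^31 + (T 1)^33 + (T 1)^35 + 4*(T 1)^37 + 2*(T 1)^39 + 3*(T 1)^41 + (T 1)^45; (T 1)^20 + (T 1)^22 + (T 1)^24 + (T 1)^26 + (T 1)^28 + 3*(T 1)^32 + (T 1)^36 + (T 1)^38 + 4*(T 1)^40 + 3*(T 1)^42 + 3*(T 1)^44, (T 1)^15 + 4*(T 1)^17 + (T 1)^19 + 2*(T 1)^21 + 3*(T 1)^23 + (T 1)^25 + 3*(T 1)^27 + 4*(T 1)^29 + 2*(T 1)^31 + (T 1)^33 + 4*(T 1)^37 + (T 1)^39 + 2*(T 1)^41, (T 1)^20 + 3*(T 1)^24 + 4*(T 1)^26 + (T 1)^28 + 2*(T 1)^30 + (T 1)^34 + 3*(T 1)^36 + 4*(T 1)^38 + 4*(T 1)^40 + 4*(T 1)^42 + 2*(T 1)^44]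

noncomputable def m49 : Matrix (Fin 3) (Fin 3) LL := !![4*(T 1)^46 + 4*(T 1)^48 + (T 1)^52 + 3*(T 1)^56 + 4*(T 1)^58 + 3*(T 1)^60 + 3*(T 1)^62 + 4*(T 1)^64 + 4*(T 1)^66 + 3*(T 1)^68 + (T 1)^70 + 3*(T 1)^72 + 3*(T 1)^74, 4*(T 1)^47 + 3*(T 1)^51 + (T 1)^53 + 2*(T 1)^57 + 3*(T 1)^59 + 3*(T 1)^61 + 4*(T 1)^65 + 2*(T 1)^67 + (T 1)^69 + 2*(T 1)^71, 4*(T 1)^46 + 3*(T 1)^50 + 2*(T 1)^52 + (T 1)^54 + 4*(T 1)^60 + 2*(T 1)^66 + 2*(T 1)^70 + 4*(T 1)^72 + 2*(T 1)^74; 3*(T 1)^47 + 2*(T 1)^49 + 2*(T 1)^53 + (T 1)^55 + 2*(T 1)^57 + (T 1)^59 + (T 1)^63 + 4*(T 1)^65 + 3*(T 1)^67 + 3*(T 1)^69 + 3*(T 1)^71 + (T 1)^73 + 4*(T 1)^75, 3*(T 1)^48 + 4*(T 1)^50 + 2*(T 1)^52 + 4*(T 1)^54 + (T 1)^56 + 4*(T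 1)^58 + 2*(T 1)^60 + (T 1)^64 + 4*(T 1)^66 + 2*(T 1)^68 + (T 1)^70 + (T 1)^72, 3*(T 1)^47 + 4*(T 1)^49 + 2*(T 1)^51 + (T 1)^53 + 2*(T 1)^55 + 3*(T 1)^57 + (T 1)^59 + (T 1)^65 + 3*(T 1)^67 + 4*(T 1)^71 + (T 1)^75; 3*(T 1)^46 + 3*(T 1)^48 + 2*(T 1)^52 + 4*(T 1)^54 + 2*(T 1)^58 + 4*(T 1)^60 + 4*(T 1)^62 + (T 1)^64 + 3*(T 1)^66 + (T 1)^68 + 2*(T 1)^70 + (T 1)^72 + (T 1)^74, 3*(T 1)^47 + (T 1)^51 + (T 1)^53 + 4*(T 1)^55 + 4*(T 1)^57 + 2*(T 1)^59 + 3*(T 1)^61 + 3*(T 1)^65 + 4*(T 1)^67 + 2*(T 1)^69 + 4*(T 1)^71, 3*(T 1)^46 + (T 1)^50 + 4*(T 1)^52 + (T 1)^54 + 2*(T 1)^58 + 3*(T 1)^60 + 4*(T 1)^62 + 2*(T 1)^64 + 4*(T 1)^66 + 4*(T 1)^70 + 3*(T 1)^72 + 4*(T 1)^74]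

noncomputable def m50 : Matrix (Fin 3) (Fin 3) LL := !![(T 1)^6, 0, (T 1)^2 + 4*(T 1)^4; (T 1)^3 + 4*(T 1)^5, (T 1)^2, 4*(T 1) + (T 1)^3; 4*(T 1)^4 + (T 1)^6, 4*(T 1)^3, 4*(T 1)^4]

noncomputable def m51 : Matrix (Fin 3) (Fin 3) LL := !![4*(T 1)^6 + 2*(T 1)^8 + 4*(T 1)^10 + (T 1)^12, 4*(T 1)^5 + (T 1)^7, 4*(T 1)^6 + 2*(T 1)^8 + 4*(T 1)^10; 2*(T 1)^5 + 2*(T 1)^7 + 2*(T 1)^9 + 4*(T 1)^11, 2*(T 1)^4 + 4*(T 1)^6, 4*(T 1)^3 + 3*(T 1)^5 + 2*(T 1)^7 + (T 1)^9; 4*(T 1)^6 + 2*(T 1)^8 + 3*(T 1)^10 + (T 1)^12, 4*(T 1)^5 + (T 1)^7, (T 1)^4 + 3*(T 1)^6 + 3*(T 1)^8 + 4*(T 1)^10]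

noncomputable def m52 : Matrix (Fin 3) (Fin 3) LL := !![4*(T 1)^4 + (T 1)^6, (T 1)^7, (T 1)^2 + 4*(T 1)^4 + (T 1)^6; 4*(T 1) + (T 1)^3 + 4*(T 1)^5, 4*(T 1)^6, 4*(T 1) + (T 1)^3 + 4*(T 1)^5; (T 1)^2 + 4*(T 1)^4 + (T 1)^6, (T 1)^7, 4*(T 1)^4 + (T 1)^6]

noncomputable def m53 : Matrix (Fin 3) (Fin 3) LL := !![(T 1)^6, 4*(T 1)^3 + (T 1)^5, 4*(T 1)^4 + (T 1)^6; (T 1)^3 + 4*(T 1)^5, 2*(T 1)^2 + 4*(T 1)^4, (T 1)^3 + 4*(T 1)^5; 4*(T 1)^4 + (T 1)^6, 4*(T 1)^3 + (T 1)^5, (T 1)^6]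

noncomputable def m54 : Matrix (Fin 3) (Fin 3) LL := !![4*(T 1)^6 + 2*(T 1)^8 + 3*(T 1)^10 + (T 1)^12, 4*(T 1)^5 + 3*(T 1)^7 + 3*(T 1)^9 + (T 1)^11, 2*(T 1)^8 + 3*(T 1)^10 + (T 1)^12; (T 1)^5 + 2*(T 1)^7 + 2*(T 1)^9 + 4*(T 1)^11, 2*(T 1)^4 + (T 1)^6 + 2*(T 1)^8 + 4*(T 1)^10, (T 1)^5 + 2*(T 1)^7 + 2*(T 1)^9 + 4*(T 1)^11; 2*(T 1)^8 + 3*(T 1)^10 + (T 1)^12, 4*(T 1)^5 + 3*(T 1)^7 + 3*(T 1)^9 + (T 1)^11, 4*(T 1)^6 + 2*(T 1)^8 + 3*(T 1)^10 + (T 1)^12]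

noncomputable def m55 : Matrix (Fin 3) (Fin 3) LL := !![4*(T 1)^10 + 4*(T 1)^14 + (T 1)^16 + 4*(T 1)^18 + (T 1)^22 + (T 1)^24, 3*(T 1)^9 + 3*(T 1)^11 + 4*(T 1)^13 + (T 1)^15 + 2*(T 1)^17 + (T 1)^19 + (T 1)^21 + (T 1)^23, 4*(T 1)^10 + 4*(T 1)^14 + (T 1)^16 + (T 1)^22 + (T 1)^24; 2*(T 1)^9 + 4*(T 1)^11 + 2*(T 1)^13 + (T 1)^15 + (T 1)^19 + 4*(T 1)^23, 2*(T 1)^10 + (T 1)^12 + 4*(T 1)^14 + 3*(T 1)^16 + 4*(T 1)^22, 3*(T 1)^9 + 3*(T 1)^11 + 2*(T 1)^13 + 2*(T 1)^15 + 4*(T 1)^17 + (T 1)^19 + 4*(T 1)^23; 4*(T 1)^10 + 2*(T 1)^12 + 2*(T 1)^16 + 4*(T 1)^18 + 3*(T 1)^20 + (T 1)^24, 2*(T 1)^9 + 2*(T 1)^11 + 3*(T 1)^13 + 3*(T 1)^15 + (T 1)^17 + 4*(T 1)^19 + (T 1)^23, 3*(T 1)^10 + 3*(T 1)^12 + 4*(T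 1)^14 + (T 1)^16 + 3*(T 1)^20 + (T 1)^24]

noncomputable def m56 : Matrix (Fin 3) (Fin 3) LL := !![0, (T 1)^3, (T 1)^2; (T 1)^3, 0, 4*(T 1); 0, 0, 1]

noncomputable def m57 : Matrix (Fin 3) (Fin 3) LL := !![4*(T 1)^4, 4*(T 1)^5, (T 1)^2 + 4*(T 1)^4; (T 1)^3, 0, 4*(T 1); 4*(T 1)^4, 0, 0]

noncomputable def m58 : Matrix (Fin 3) (Fin 3) LL := !![4*(T 1)^4, 4*(T 1)^5, (T 1)^2 + 4*(T 1)^4; (T 1)^3, 0, 4*(T 1); 4*(T 1)^4 + (T 1)^6, 0, (T 1)^2]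

noncomputable def m59 : Matrix (Fin 3) (Fin 3) LL := !![4*(T 1)^6 + 2*(T 1)^8 + 4*(T 1)^10, (T 1)^9, (T 1)^4 + 4*(T 1)^6 + (T 1)^8; (T 1)^5 + 3*(T 1)^7, 4*(T 1)^8, 4*(T 1)^3 + (T 1)^5 + 4*(T 1)^7; (T 1)^8, (T 1)^9, 4*(T 1)^6 + (T 1)^8]

noncomputable def m60 : Matrix (Fin 3) (Fin 3) LL := !![(T 1)^2, (T 1)^3 + 4*(T 1)^5, (T 1)^2 + 4*(T 1)^4; 4*(T 1)^3, 4*(T 1)^4 + (T 1)^6, (T 1)^5; (T 1)^2, (T 1)^3, 0]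

noncomputable def m61 : Matrix (Fin 3) (Fin 3) LL := !![(T 1)^2, (T 1)^3 + 4*(T 1)^5, (T 1)^2 + 4*(T 1)^4; 4*(T 1)^3, 4*(T 1)^4 + (T 1)^6, (T 1)^5; 0, 4*(T 1)^7, 4*(T 1)^6]

noncomputable def m62 : Matrix (Fin 3) (Fin 3) LL := !![(T 1)^4 + 4*(T 1)^6 + (T 1)^8, (T 1)^5 + 3*(T 1)^7 + (T 1)^9, (T 1)^4 + 4*(T 1)^6; 4*(T 1)^5 + (T 1)^7 + 4*(T 1)^9, 4*(T 1)^6 + 2*(T 1)^8 + 3*(T 1)^10, 4*(T 1)^5 + (T 1)^7 + 4*(T 1)^9; (T 1)^4 + 4*(T 1)^6, (T 1)^5 + 3*(T 1)^7 + (T 1)^9, (T 1)^4 + 4*(T 1)^6 + (T 1)^8]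

noncomputable def m63 : Matrix (Fin 3) (Fin 3) LL := !![(T 1)^8 + 2*(T 1)^10 + 4*(T 1)^14 + 4*(T 1)^16 + 3*(T 1)^18, (T 1)^9 + (T 1)^11 + 3*(T 1)^13 + 2*(T 1)^17 + 2*(T 1)^19, (T 1)^8 + 2*(T 1)^10 + (T 1)^12 + 4*(T 1)^14 + 3*(T 1)^16 + 4*(T 1)^18; 4*(T 1)^7 + 3*(T 1)^9 + 2*(T 1)^15 + (T 1)^17, 4*(T 1)^8 + 4*(T 1)^10 + 2*(T 1)^12 + 4*(T 1)^14 + 2*(T 1)^18, 4*(T 1)^7 + 3*(T 1)^9 + 4*(T 1)^11 + 3*(T 1)^15 + (T 1)^17; 4*(T 1)^10 + 3*(T 1)^12 + 2*(T 1)^14 + 2*(T 1)^16 + 4*(T 1)^18, 4*(T 1)^11 + 4*(T 1)^13 + 4*(T 1)^15 + 4*(T 1)^17 + 3*(T 1)^19, 4*(T 1)^10 + 3*(T 1)^12 + (T 1)^14 + 2*(T 1)^16 + 4*(T 1)^18]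

noncomputable def m64 : Matrix (Fin 3) (Fin 3) LL := !![2*(T 1)^16 + 4*(T 1)^20 + 2*(T 1)^22 + (T 1)^24 + (T 1)^28 + 4*(T 1)^30 + (T 1)^34 + 4*(T 1)^36 + 4*(T 1)^40 + 2*(T 1)^42, 2*(T 1)^17 + 3*(T 1)^19 + 4*(T 1)^21 + 4*(T 1)^25 + 2*(T 1)^27 + 4*(T 1)^29 + 2*(T 1)^31 + 4*(T 1)^33 + 2*(T 1)^39 + 3*(T 1)^41, 2*(T 1)^16 + (T 1)^20 + 3*(T 1)^22 + (T 1)^24 + 2*(T 1)^26 + 4*(T 1)^28 + 3*(T 1)^30 + 4*(T 1)^32 + 4*(T 1)^34 + 4*(T 1)^36 + 4*(T 1)^38 + 4*(T 1)^40 + 3*(T 1)^42; 4*(T 1)^27 + 2*(T 1)^29 + 4*(T 1)^31 + 2*(T 1)^33 + 4*(T 1)^35 + 4*(T 1)^37 + 3*(T 1)^39 + 3*(T 1)^41, 3*(T 1)^30 + (T 1)^32 + 2*(T 1)^34 + 2*(T 1)^36 + (T 1)^38 + 2*(T 1)^40, 4*(T 1)^27 + (T 1)^29 + 3*(T 1)^33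 + 2*(T 1)^35 + 4*(T 1)^39 + 2*(T 1)^41; 3*(T 1)^16 + 3*(T 1)^18 + (T 1)^22 + (T 1)^24 + 2*(T 1)^30 + 4*(T 1)^34 + 2*(T 1)^36 + 4*(T 1)^38 + 2*(T 1)^40 + 2*(T 1)^42, 3*(T 1)^17 + 2*(T 1)^21 + 4*(T 1)^23 + 3*(T 1)^25 + 2*(T 1)^31 + 3*(T 1)^33 + (T 1)^35 + 4*(T 1)^39 + 3*(T 1)^41, 3*(T 1)^16 + 3*(T 1)^18 + 3*(T 1)^20 + 3*(T 1)^22 + 4*(T 1)^24 + 2*(T 1)^26 + 2*(T 1)^28 + (T 1)^30 + 2*(T 1)^32 + 2*(T 1)^34 + 4*(T 1)^36 + 2*(T 1)^38 + (T 1)^40 + 3*(T 1)^42]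

noncomputable def m65 : Matrix (Fin 3) (Fin 3) LL := !![1, 0, 0; 4*(T 1), 4*(T 1)^2, 4*(T 1); (T 1)^2 + 4*(T 1)^4, (T 1)^3 + 4*(T 1)^5, (T 1)^2]

noncomputable def m66 : Matrix (Fin 3) (Fin 3) LL := !![0, (T 1)^3, (T 1)^2; (T 1)^5, 4*(T 1)^4 + (T 1)^6, 4*(T 1)^3; (T 1)^2 + 4*(T 1)^4, (T 1)^3 + 4*(T 1)^5, (T 1)^2]

noncomputable def m67 : Matrix (Fin 3) (Fin 3) LL := !![4*(T 1)^4, 4*(T 1)^5, (T 1)^2 + 4*(T 1)^4; 2*(T 1)^5 + 4*(T 1)^7, (T 1)^6 + 4*(T 1)^8, 4*(T 1)^3 + (T 1)^5 + 4*(T 1)^7; (T 1)^2 + 3*(T 1)^4 + (T 1)^6, 4*(T 1)^5 + (T 1)^7, (T 1)^2 + 4*(T 1)^4 + (T 1)^6]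

noncomputable def m68 : Matrix (Fin 3) (Fin 3) LL := !![(T 1)^4 + 3*(T 1)^6 + 3*(T 1)^8 + 4*(T 1)^10, 4*(T 1)^7 + 2*(T 1)^9 + 4*(T 1)^11, (T 1)^4 + 3*(T 1)^6 + 2*(T 1)^8 + 4*(T 1)^10; 4*(T 1)^5 + 2*(T 1)^7 + (T 1)^9 + 3*(T 1)^11 + 4*(T 1)^13, (T 1)^8 + 2*(T 1)^10 + 2*(T 1)^12 + 4*(T 1)^14, 4*(T 1)^5 + 3*(T 1)^7 + (T 1)^9 + 2*(T 1)^11 + 4*(T 1)^13; (T 1)^4 + 2*(T 1)^6 + 4*(T 1)^8 + 2*(T 1)^10 + (T 1)^12, 3*(T 1)^7 + 3*(T 1)^9 + 3*(T 1)^11 + (T 1)^13, 2*(T 1)^4 + (T 1)^6 + 4*(T 1)^8 + 3*(T 1)^10 + (T 1)^12]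

noncomputable def m69 : Matrix (Fin 3) (Fin 3) LL := !![4*(T 1)^4, 4*(T 1)^5, (T 1)^2 + 4*(T 1)^4; (T 1)^5, (T 1)^6, (T 1)^5; 4*(T 1)^4, 0, 0]

noncomputable def m70 : Matrix (Fin 3) (Fin 3) LL := !![4*(T 1)^6 + (T 1)^8 + 4*(T 1)^10, 4*(T 1)^7, (T 1)^4 + 4*(T 1)^6; (T 1)^5 + 4*(T 1)^7, (T 1)^6, 4*(T 1)^3 + (T 1)^5; 4*(T 1)^6 + (T 1)^8, 4*(T 1)^7 + (T 1)^9, (T 1)^4 + 4*(T 1)^6 + (T 1)^8]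

noncomputable def m71 : Matrix (Fin 3) (Fin 3) LL := !![3*(T 1)^10 + 3*(T 1)^14 + (T 1)^16 + (T 1)^18 + (T 1)^20, 3*(T 1)^11 + 4*(T 1)^13 + 3*(T 1)^17 + 4*(T 1)^19, 2*(T 1)^8 + 2*(T 1)^12 + 4*(T 1)^14 + 3*(T 1)^16 + 4*(T 1)^18; 2*(T 1)^11 + 4*(T 1)^13 + 3*(T 1)^19 + (T 1)^21 + (T 1)^23, 2*(T 1)^12 + 3*(T 1)^16 + 3*(T 1)^18 + 3*(T 1)^20 + 4*(T 1)^22, 3*(T 1)^9 + (T 1)^11 + (T 1)^15 + 2*(T 1)^17 + 3*(T 1)^19 + 4*(T 1)^21; 2*(T 1)^10 + 3*(T 1)^12 + 4*(T 1)^14 + (T 1)^16 + 2*(T 1)^18 + 4*(T 1)^20 + 4*(T 1)^22, 2*(T 1)^11 + 2*(T 1)^13 + (T 1)^15 + 2*(T 1)^17 + 2*(T 1)^19 + (T 1)^21, 3*(T 1)^8 + 2*(T 1)^10 + 2*(T 1)^12 + 3*(T 1)^14 + 3*(T 1)^16 + 2*(T 1)^18 + (T 1)^20]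

noncomputable def m72 : Matrix (Fin 3) (Fin 3) LL := !![0, 0, 4*(T 1)^4; (T 1)^7, (T 1)^2 + 4*(T 1)^4 + (T 1)^6, (T 1)^3; 0, 4*(T 1), 4*(T 1)^2]

noncomputable def m73 : Matrix (Fin 3) (Fin 3) LL := !![4*(T 1)^8 + (T 1)^10, 4*(T 1)^3 + 2*(T 1)^5 + 3*(T 1)^7 + (T 1)^9, 4*(T 1)^4 + (T 1)^6 + 4*(T 1)^8; (T 1)^9 + 3*(T 1)^11, (T 1)^4 + 3*(T 1)^6 + 3*(T 1)^8 + 3*(T 1)^10, (T 1)^5 + 4*(T 1)^7 + (T 1)^9; 4*(T 1)^8 + (T 1)^10, 4*(T 1)^3 + (T 1)^5 + 3*(T 1)^7 + (T 1)^9, 4*(T 1)^4]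

noncomputable def m74 : Matrix (Fin 3) (Fin 3) LL := !![4*(T 1)^2, 4*(T 1), 0; (T 1)^3 + 4*(T 1)^5, 2*(T 1)^2 + 4*(T 1)^4, (T 1)^3 + 4*(T 1)^5; 4*(T 1)^4 + (T 1)^6, 4*(T 1)^3 + (T 1)^5, (T 1)^6]

noncomputable def m75 : Matrix (Fin 3) (Fin 3) LL := !![4*(T 1)^8 + (T 1)^10, 4*(T 1)^3 + 2*(T 1)^5 + 3*(T 1)^7 + (T 1)^9, 4*(T 1)^4 + (T 1)^6 + 4*(T 1)^8; 4*(T 1)^7 + 2*(T 1)^9 + 2*(T 1)^11 + (T 1)^13, 2*(T 1)^4 + (T 1)^8 + (T 1)^10 + (T 1)^12, (T 1)^5 + 3*(T 1)^7 + 3*(T 1)^9 + 4*(T 1)^11; 4*(T 1)^10 + 2*(T 1)^12 + 4*(T 1)^14, 4*(T 1)^5 + 2*(T 1)^7 + (T 1)^9 + 3*(T 1)^11 + 4*(T 1)^13, 4*(T 1)^6 + (T 1)^8 + 3*(T 1)^10 + (T 1)^12]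

noncomputable def m76 : Matrix (Fin 3) (Fin 3) LL := !![(T 1)^10 + (T 1)^12 + (T 1)^16 + 2*(T 1)^18 + 3*(T 1)^20 + 2*(T 1)^22, 3*(T 1)^7 + 3*(T 1)^11 + 2*(T 1)^13 + 4*(T 1)^15 + (T 1)^17 + (T 1)^19 + 2*(T 1)^21, 4*(T 1)^8 + 4*(T 1)^14 + 3*(T 1)^16 + 2*(T 1)^18 + 3*(T 1)^20; 4*(T 1)^11 + 4*(T 1)^13 + 4*(T 1)^15 + 2*(T 1)^17 + 4*(T 1)^19 + 2*(T 1)^23, 2*(T 1)^8 + 4*(T 1)^12 + 2*(T 1)^14 + (T 1)^18 + 3*(T 1)^20 + 2*(T 1)^22, (T 1)^9 + (T 1)^13 + 4*(T 1)^15 + (T 1)^17 + 3*(T 1)^21; (T 1)^10 + 2*(T 1)^12 + 3*(T 1)^14 + 3*(T 1)^18 + (T 1)^20 + (T 1)^22, 3*(T 1)^7 + 3*(T 1)^9 + 4*(T 1)^11 + 3*(T 1)^13 + 4*(T 1)^15 + 3*(T 1)^17 + (T 1)^21, 4*(T 1)^8 + 4*(T 1)^10 + 3*(T 1)^12 + 4*(T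 1)^14 + 2*(T 1)^16 + 4*(T 1)^18 + 4*(T 1)^20]

noncomputable def m77 : Matrix (Fin 3) (Fin 3) LL := !![2*(T 1)^18 + 2*(T 1)^20 + 3*(T 1)^22 + 4*(T 1)^24 + 3*(T 1)^26 + (T 1)^28 + 2*(T 1)^30 + 4*(T 1)^32 + 4*(T 1)^36, (T 1)^15 + 3*(T 1)^23 + (T 1)^25 + 4*(T 1)^29 + 4*(T 1)^31 + 3*(T 1)^33 + 4*(T 1)^35, 3*(T 1)^16 + 2*(T 1)^20 + 3*(T 1)^22 + 2*(T 1)^24 + 3*(T 1)^26 + 3*(T 1)^28 + 4*(T 1)^30 + 4*(T 1)^32; 3*(T 1)^19 + 4*(T 1)^21 + (T 1)^25 + 2*(T 1)^31 + (T 1)^35 + 3*(T 1)^37, 4*(T 1)^16 + 3*(T 1)^18 + (T 1)^20 + 2*(T 1)^22 + 4*(T 1)^24 + 2*(T 1)^26 + 4*(T 1)^28 + 3*(T 1)^30 + 3*(T 1)^32 + 4*(T 1)^34, 2*(T 1)^17 + 4*(T 1)^19 + (T 1)^21 + 4*(T 1)^23 + 2*(T 1)^27 + 2*(T 1)^29 +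 (T 1)^31 + (T 1)^35 + 4*(T 1)^37; 3*(T 1)^18 + 3*(T 1)^22 + (T 1)^24 + (T 1)^26 + 4*(T 1)^30 + (T 1)^32 + 2*(T 1)^34 + (T 1)^36, 4*(T 1)^15 + (T 1)^17 + 2*(T 1)^19 + 4*(T 1)^21 + 3*(T 1)^25 + 3*(T 1)^27 + (T 1)^29 + 4*(T 1)^31 + 4*(T 1)^35, 2*(T 1)^16 + 3*(T 1)^18 + 4*(T 1)^20 + (T 1)^22 + 4*(T 1)^24 + (T 1)^26 + 2*(T 1)^30 + 2*(T 1)^32 + (T 1)^36]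

noncomputable def m78 : Matrix (Fin 3) (Fin 3) LL := !![2*(T 1)^44 + 2*(T 1)^46 + 2*(T 1)^48 + (T 1)^50 + (T 1)^52 + 3*(T 1)^54 + 4*(T 1)^56 + 4*(T 1)^58 + (T 1)^60 + 4*(T 1)^62 + 4*(T 1)^64 + 3*(T 1)^66 + (T 1)^68 + 2*(T 1)^70, (T 1)^41 + 2*(T 1)^45 + 4*(T 1)^47 + (T 1)^49 + 2*(T 1)^55 + 2*(T 1)^57 + 2*(T 1)^59 + 2*(T 1)^61 + 2*(T 1)^63 + 3*(T 1)^65 + 3*(T 1)^67, 3*(T 1)^42 + 3*(T 1)^46 + 3*(T 1)^52 + 4*(T 1)^54 + 3*(T 1)^58 + 2*(T 1)^60 + 3*(T 1)^62 + (T 1)^64 + 3*(T 1)^66 + 4*(T 1)^68 + (T 1)^70; (T 1)^59 + 4*(T 1)^63 + (T 1)^65 + (T 1)^67 + 3*(T 1)^69, 3*(T 1)^56 + 2*(T 1)^58 + 4*(T 1)^62 + 2*(T 1)^66, 4*(T 1)^57 + (T 1)^59 + (T 1)^61 + 3*(T 1)^63 + 2*(T 1)^67 + 4*(T 1)^69;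 3*(T 1)^44 + (T 1)^46 + 3*(T 1)^50 + 4*(T 1)^54 + 4*(T 1)^56 + 4*(T 1)^60 + 3*(T 1)^62 + 2*(T 1)^64 + 4*(T 1)^68 + 2*(T 1)^70, 4*(T 1)^41 + 4*(T 1)^43 + 2*(T 1)^49 + 3*(T 1)^51 + 4*(T 1)^53 + 2*(T 1)^55 + 2*(T 1)^57 + (T 1)^63 + 3*(T 1)^67, 2*(T 1)^42 + 2*(T 1)^44 + 3*(T 1)^46 + 2*(T 1)^52 + 3*(T 1)^54 + 3*(T 1)^56 + 3*(T 1)^58 + 3*(T 1)^60 + 3*(T 1)^62 + 3*(T 1)^66 + 3*(T 1)^68 + (T 1)^70]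

noncomputable def m79 : Matrix (Fin 3) (Fin 3) LL := !![0, 0, 4*(T 1)^116; 0, 4*(T 1)^116, 0; 4*(T 1)^116, 0, 0]

lemma s0 : m0 * m1 = m2 := by
  unfold m0 m1 m2
  rw [Matrix.mul_fin_three]
  refine congrArg Matrix.of (Matrix.vec3_eq (Matrix.vec3_eq ?_ ?_ ?_) (Matrix.vec3_eq ?_ ?_ ?_) (Matrix.vec3_eq ?_ ?_ ?_))
  · ring1
  · ring1
  · ring1
  · linear_combination ((-(T 1)) : LL) * h5
  · linear_combination ((-(T 1)^2) : LL) * h5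
  · linear_combination ((-(T 1)) : LL) * h5
  · ring1
  · ring1
  · ring1

lemma s1 : m3 * m1 = m4 := by
  unfold m3 m1 m4
  rw [Matrix.mul_fin_three]
  refine congrArg Matrix.of (Matrix.vec3_eq (Matrix.vec3_eq ?_ ?_ ?_) (Matrix.vec3_eq ?_ ?_ ?_) (Matrix.vec3_eq ?_ ?_ ?_))
  · ring1
  · ring1
  · ring1
  · linear_combination ((-(T 1)) : LL) * h5
  · linear_combination ((-(T 1)^2) : LL) * h5
  · linear_combination ((-(T 1)) : LL) * h5
  · ring1
  · ring1
  · ring1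

lemma s2 : m0 * m4 = m5 := by
  unfold m0 m4 m5
  rw [Matrix.mul_fin_three]
  refine congrArg Matrix.of (Matrix.vec3_eq (Matrix.vec3_eq ?_ ?_ ?_) (Matrix.vec3_eq ?_ ?_ ?_) (Matrix.vec3_eq ?_ ?_ ?_))
  · linear_combination ((-(T 1)^2) : LL) * h5
  · linear_combination ((-(T 1)^3) : LL) * h5
  · linear_combination ((-(T 1)^2) : LL) * h5
  · ring1
  · ring1
  · ring1
  · ring1
  · ring1
  · ring1

lemma s3 : m2 * m5 = m6 := by
  unfold m2 m5 m6
  rw [Matrix.mul_fin_three]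
  refine congrArg Matrix.of (Matrix.vec3_eq (Matrix.vec3_eq ?_ ?_ ?_) (Matrix.vec3_eq ?_ ?_ ?_) (Matrix.vec3_eq ?_ ?_ ?_))
  · linear_combination (((T 1)^4) : LL) * h5
  · linear_combination (((T 1)^5) : LL) * h5
  · ring1
  · linear_combination ((4*(T 1)^3) : LL) * h5
  · linear_combination ((4*(T 1)^4) : LL) * h5
  · linear_combination ((4*(T 1)^3) : LL) * h5
  · ring1
  · ring1
  · ring1

lemma s4 : m1 * m0 = m7 := by
  unfold m1 m0 m7
  rw [Matrix.mul_fin_three]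
  refine congrArg Matrix.of (Matrix.vec3_eq (Matrix.vec3_eq ?_ ?_ ?_) (Matrix.vec3_eq ?_ ?_ ?_) (Matrix.vec3_eq ?_ ?_ ?_))
  · linear_combination ((-(T 1)^2) : LL) * h5
  · linear_combination ((-(T 1)) : LL) * h5
  · ring1
  · ring1
  · ring1
  · linear_combination ((-(T 1)) : LL) * h5
  · ring1
  · ring1
  · ring1

lemma s5 : m0 * m3 = m8 := by
  unfold m0 m3 m8
  rw [Matrix.mul_fin_three]
  refine congrArg Matrix.of (Matrix.vec3_eq (Matrix.vec3_eq ?_ ?_ ?_) (Matrix.vec3_eq ?_ ?_ ?_) (Matrix.vec3_eq ?_ ?_ ?_))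
  · linear_combination ((-(T 1)^2) : LL) * h5
  · linear_combination ((-(T 1)) : LL) * h5
  · ring1
  · ring1
  · ring1
  · ring1
  · ring1
  · linear_combination ((-(T 1)) : LL) * h5
  · linear_combination ((-(T 1)^2) : LL) * h5

lemma s6 : m3 * m8 = m9 := by
  unfold m3 m8 m9
  rw [Matrix.mul_fin_three]
  refine congrArg Matrix.of (Matrix.vec3_eq (Matrix.vec3_eq ?_ ?_ ?_) (Matrix.vec3_eq ?_ ?_ ?_) (Matrix.vec3_eq ?_ ?_ ?_))
  · ring1
  · ring1
  · ring1
  · ring1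
  · ring1
  · ring1
  · ring1
  · linear_combination ((-(T 1) + -(T 1)^3) : LL) * h5
  · linear_combination ((-(T 1)^4) : LL) * h5

lemma s7 : m7 * m9 = m10 := by
  unfold m7 m9 m10
  rw [Matrix.mul_fin_three]
  refine congrArg Matrix.of (Matrix.vec3_eq (Matrix.vec3_eq ?_ ?_ ?_) (Matrix.vec3_eq ?_ ?_ ?_) (Matrix.vec3_eq ?_ ?_ ?_))
  · linear_combination ((3*(T 1)^4) : LL) * h5
  · linear_combination ((3*(T 1)^3) : LL) * h5
  · ring1
  · ring1
  · linear_combination ((3*(T 1)^2 + (T 1)^4) : LL) * h5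
  · ring1
  · ring1
  · ring1
  · ring1

lemma s8 : m6 * m10 = m11 := by
  unfold m6 m10 m11
  rw [Matrix.mul_fin_three]
  refine congrArg Matrix.of (Matrix.vec3_eq (Matrix.vec3_eq ?_ ?_ ?_) (Matrix.vec3_eq ?_ ?_ ?_) (Matrix.vec3_eq ?_ ?_ ?_))
  · ring1
  · linear_combination ((3*(T 1)^5) : LL) * h5
  · ring1
  · linear_combination ((3*(T 1)^9) : LL) * h5
  · linear_combination ((2*(T 1)^8) : LL) * h5
  · linear_combination ((3*(T 1)^9) : LL) * h5
  · ring1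
  · ring1
  · ring1

lemma s9 : m1 * m1 = m12 := by
  unfold m1 m12
  rw [Matrix.mul_fin_three]
  refine congrArg Matrix.of (Matrix.vec3_eq (Matrix.vec3_eq ?_ ?_ ?_) (Matrix.vec3_eq ?_ ?_ ?_) (Matrix.vec3_eq ?_ ?_ ?_))
  · ring1
  · ring1
  · ring1
  · linear_combination ((-(T 1)) : LL) * h5
  · ring1
  · linear_combination ((-(T 1)) : LL) * h5
  · ring1
  · ring1
  · ring1

lemma s10 : m1 * m8 = m13 := by
  unfold m1 m8 m13
  rw [Matrix.mul_fin_three]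
  refine congrArg Matrix.of (Matrix.vec3_eq (Matrix.vec3_eq ?_ ?_ ?_) (Matrix.vec3_eq ?_ ?_ ?_) (Matrix.vec3_eq ?_ ?_ ?_))
  · ring1
  · ring1
  · ring1
  · linear_combination ((-(T 1)^3) : LL) * h5
  · linear_combination (((-2)*(T 1)^2) : LL) * h5
  · linear_combination ((-(T 1)^3) : LL) * h5
  · ring1
  · ring1
  · ring1

lemma s11 : m12 * m13 = m14 := by
  unfold m12 m13 m14
  rw [Matrix.mul_fin_three]
  refine congrArg Matrix.of (Matrix.vec3_eq (Matrix.vec3_eq ?_ ?_ ?_) (Matrix.vec3_eq ?_ ?_ ?_) (Matrix.vec3_eq ?_ ?_ ?_))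
  · ring1
  · ring1
  · ring1
  · linear_combination ((3*(T 1)^3) : LL) * h5
  · linear_combination ((6*(T 1)^2 + (T 1)^4) : LL) * h5
  · linear_combination ((3*(T 1)^3) : LL) * h5
  · ring1
  · ring1
  · ring1

lemma s12 : m0 * m12 = m15 := by
  unfold m0 m12 m15
  rw [Matrix.mul_fin_three]
  refine congrArg Matrix.of (Matrix.vec3_eq (Matrix.vec3_eq ?_ ?_ ?_) (Matrix.vec3_eq ?_ ?_ ?_) (Matrix.vec3_eq ?_ ?_ ?_))
  · linear_combination ((-(T 1)^2 + -(T 1)^4) : LL) * h5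
  · linear_combination ((-(T 1)^5) : LL) * h5
  · linear_combination ((-(T 1)^2 + -(T 1)^4) : LL) * h5
  · ring1
  · ring1
  · ring1
  · ring1
  · ring1
  · ring1

lemma s13 : m3 * m0 = m8 := by
  unfold m3 m0 m8
  rw [Matrix.mul_fin_three]
  refine congrArg Matrix.of (Matrix.vec3_eq (Matrix.vec3_eq ?_ ?_ ?_) (Matrix.vec3_eq ?_ ?_ ?_) (Matrix.vec3_eq ?_ ?_ ?_))
  · linear_combination ((-(T 1)^2) : LL) * h5
  · linear_combination ((-(T 1)) : LL) * h5
  · ring1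
  · ring1
  · ring1
  · ring1
  · ring1
  · linear_combination ((-(T 1)) : LL) * h5
  · linear_combination ((-(T 1)^2) : LL) * h5

lemma s14 : m0 * m8 = m16 := by
  unfold m0 m8 m16
  rw [Matrix.mul_fin_three]
  refine congrArg Matrix.of (Matrix.vec3_eq (Matrix.vec3_eq ?_ ?_ ?_) (Matrix.vec3_eq ?_ ?_ ?_) (Matrix.vec3_eq ?_ ?_ ?_))
  · linear_combination ((-(T 1)^4) : LL) * h5
  · linear_combination ((-(T 1) + -(T 1)^3) : LL) * h5
  · ring1
  · ring1
  · ring1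
  · ring1
  · ring1
  · ring1
  · ring1

lemma s15 : m15 * m16 = m17 := by
  unfold m15 m16 m17
  rw [Matrix.mul_fin_three]
  refine congrArg Matrix.of (Matrix.vec3_eq (Matrix.vec3_eq ?_ ?_ ?_) (Matrix.vec3_eq ?_ ?_ ?_) (Matrix.vec3_eq ?_ ?_ ?_))
  · ring1
  · linear_combination ((7*(T 1)^5) : LL) * h5
  · linear_combination ((3*(T 1)^6) : LL) * h5
  · ring1
  · linear_combination ((6*(T 1)^2 + 2*(T 1)^4) : LL) * h5
  · linear_combination ((3*(T 1)^3) : LL) * h5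
  · ring1
  · ring1
  · ring1

lemma s16 : m14 * m17 = m18 := by
  unfold m14 m17 m18
  rw [Matrix.mul_fin_three]
  refine congrArg Matrix.of (Matrix.vec3_eq (Matrix.vec3_eq ?_ ?_ ?_) (Matrix.vec3_eq ?_ ?_ ?_) (Matrix.vec3_eq ?_ ?_ ?_))
  · linear_combination ((3*(T 1)^6 + 3*(T 1)^10) : LL) * h5
  · linear_combination (((T 1)^3 + 5*(T 1)^5 + (T 1)^7 + 3*(T 1)^9) : LL) * h5
  · linear_combination ((6*(T 1)^6) : LL) * h5
  · linear_combination (((T 1)^7 + 2*(T 1)^9 + 2*(T 1)^11 + 3*(T 1)^13) : LL) * h5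
  · linear_combination (((T 1)^4 + 6*(T 1)^6 + 6*(T 1)^8 + 3*(T 1)^10 + 3*(T 1)^12) : LL) * h5
  · linear_combination (((T 1)^5 + 6*(T 1)^7 + 6*(T 1)^9 + 2*(T 1)^11) : LL) * h5
  · linear_combination ((3*(T 1)^6) : LL) * h5
  · linear_combination ((4*(T 1)^3 + 2*(T 1)^5) : LL) * h5
  · linear_combination ((4*(T 1)^4 + 3*(T 1)^6) : LL) * h5

lemma s17 : m11 * m18 = m19 := by
  unfold m11 m18 m19
  rw [Matrix.mul_fin_three]
  refine congrArg Matrix.of (Matrix.vec3_eq (Matrix.vec3_eq ?_ ?_ ?_) (Matrix.vec3_eq ?_ ?_ ?_) (Matrix.vec3_eq ?_ ?_ ?_))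
  · linear_combination ((4*(T 1)^14 + 6*(T 1)^16 + (T 1)^18 + 2*(T 1)^20 + 3*(T 1)^22) : LL) * h5
  · linear_combination ((6*(T 1)^11 + 4*(T 1)^13 + 7*(T 1)^15 + 3*(T 1)^17 + 3*(T 1)^19 + 3*(T 1)^21) : LL) * h5
  · linear_combination (((T 1)^12 + 2*(T 1)^14 + 3*(T 1)^16 + (T 1)^18) : LL) * h5
  · linear_combination ((2*(T 1)^13 + 4*(T 1)^15 + 4*(T 1)^17 + 2*(T 1)^19 + 4*(T 1)^21 + (T 1)^23) : LL) * h5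
  · linear_combination ((2*(T 1)^10 + 4*(T 1)^12 + 5*(T 1)^14 + 5*(T 1)^16 + 3*(T 1)^18 + 4*(T 1)^20 + (T 1)^22) : LL) * h5
  · linear_combination ((2*(T 1)^13 + 4*(T 1)^15 + 4*(T 1)^17 + (T 1)^19) : LL) * h5
  · linear_combination ((2*(T 1)^10 + 4*(T 1)^12 + 6*(T 1)^14 + 11*(T 1)^16 + 5*(T 1)^18 + 2*(T 1)^20 + 2*(T 1)^22) : LL) * h5
  · linear_combination ((2*(T 1)^7 + 3*(T 1)^9 + 12*(T 1)^11 + 9*(T 1)^13 + 11*(T 1)^15 + 7*(T 1)^17 + 3*(T 1)^19 + 2*(T 1)^21) : LL) * h5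
  · linear_combination ((2*(T 1)^10 + 7*(T 1)^12 + 7*(T 1)^14 + 7*(T 1)^16 + (T 1)^18) : LL) * h5

lemma s18 : m12 * m16 = m20 := by
  unfold m12 m16 m20
  rw [Matrix.mul_fin_three]
  refine congrArg Matrix.of (Matrix.vec3_eq (Matrix.vec3_eq ?_ ?_ ?_) (Matrix.vec3_eq ?_ ?_ ?_) (Matrix.vec3_eq ?_ ?_ ?_))
  · ring1
  · ring1
  · ring1
  · ring1
  · linear_combination ((6*(T 1)^2 + 2*(T 1)^4) : LL) * h5
  · linear_combination ((3*(T 1)^3) : LL) * h5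
  · ring1
  · ring1
  · ring1

lemma s19 : m3 * m2 = m5 := by
  unfold m3 m2 m5
  rw [Matrix.mul_fin_three]
  refine congrArg Matrix.of (Matrix.vec3_eq (Matrix.vec3_eq ?_ ?_ ?_) (Matrix.vec3_eq ?_ ?_ ?_) (Matrix.vec3_eq ?_ ?_ ?_))
  · ring1
  · ring1
  · ring1
  · ring1
  · ring1
  · ring1
  · linear_combination ((-(T 1)^2) : LL) * h5
  · linear_combination ((-(T 1)^3) : LL) * h5
  · linear_combination ((-(T 1)^2) : LL) * h5

lemma s20 : m3 * m7 = m21 := by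
  unfold m3 m7 m21
  rw [Matrix.mul_fin_three]
  refine congrArg Matrix.of (Matrix.vec3_eq (Matrix.vec3_eq ?_ ?_ ?_) (Matrix.vec3_eq ?_ ?_ ?_) (Matrix.vec3_eq ?_ ?_ ?_))
  · ring1
  · ring1
  · ring1
  · ring1
  · ring1
  · ring1
  · linear_combination ((-(T 1)^4) : LL) * h5
  · ring1
  · linear_combination ((-(T 1)^2) : LL) * h5

lemma s21 : m5 * m21 = m22 := by
  unfold m5 m21 m22
  rw [Matrix.mul_fin_three]
  refine congrArg Matrix.of (Matrix.vec3_eq (Matrix.vec3_eq ?_ ?_ ?_) (Matrix.vec3_eq ?_ ?_ ?_) (Matrix.vec3_eq ?_ ?_ ?_))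
  · linear_combination (((T 1)^6) : LL) * h5
  · ring1
  · ring1
  · linear_combination ((3*(T 1)^3 + 4*(T 1)^5) : LL) * h5
  · linear_combination ((3*(T 1)^2) : LL) * h5
  · linear_combination ((3*(T 1)^3) : LL) * h5
  · ring1
  · ring1
  · ring1

lemma s22 : m20 * m22 = m23 := by
  unfold m20 m22 m23
  rw [Matrix.mul_fin_three]
  refine congrArg Matrix.of (Matrix.vec3_eq (Matrix.vec3_eq ?_ ?_ ?_) (Matrix.vec3_eq ?_ ?_ ?_) (Matrix.vec3_eq ?_ ?_ ?_))
  · ring1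
  · ring1
  · ring1
  · linear_combination (((T 1)^7 + 3*(T 1)^9) : LL) * h5
  · linear_combination (((T 1)^6 + 3*(T 1)^8) : LL) * h5
  · linear_combination (((T 1)^7 + 6*(T 1)^9) : LL) * h5
  · linear_combination ((3*(T 1)^6) : LL) * h5
  · linear_combination ((3*(T 1)^5) : LL) * h5
  · linear_combination ((3*(T 1)^6) : LL) * h5

lemma s23 : m3 * m12 = m24 := by
  unfold m3 m12 m24
  rw [Matrix.mul_fin_three]
  refine congrArg Matrix.of (Matrix.vec3_eq (Matrix.vec3_eq ?_ ?_ ?_) (Matrix.vec3_eq ?_ ?_ ?_) (Matrix.vec3_eq ?_ ?_ ?_))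
  · ring1
  · ring1
  · ring1
  · ring1
  · ring1
  · ring1
  · linear_combination ((-(T 1)^2 + -(T 1)^4) : LL) * h5
  · linear_combination ((-(T 1)^5) : LL) * h5
  · linear_combination ((-(T 1)^2 + -(T 1)^4) : LL) * h5

lemma s24 : m2 * m24 = m25 := by
  unfold m2 m24 m25
  rw [Matrix.mul_fin_three]
  refine congrArg Matrix.of (Matrix.vec3_eq (Matrix.vec3_eq ?_ ?_ ?_) (Matrix.vec3_eq ?_ ?_ ?_) (Matrix.vec3_eq ?_ ?_ ?_))
  · linear_combination (((T 1)^4 + (T 1)^6) : LL) * h5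
  · linear_combination (((T 1)^7) : LL) * h5
  · linear_combination (((T 1)^6) : LL) * h5
  · linear_combination ((4*(T 1)^3 + 4*(T 1)^5) : LL) * h5
  · linear_combination ((4*(T 1)^6) : LL) * h5
  · linear_combination ((3*(T 1)^3 + 4*(T 1)^5) : LL) * h5
  · ring1
  · ring1
  · ring1

lemma s25 : m1 * m4 = m26 := by
  unfold m1 m4 m26
  rw [Matrix.mul_fin_three]
  refine congrArg Matrix.of (Matrix.vec3_eq (Matrix.vec3_eq ?_ ?_ ?_) (Matrix.vec3_eq ?_ ?_ ?_) (Matrix.vec3_eq ?_ ?_ ?_))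
  · ring1
  · ring1
  · ring1
  · linear_combination ((-(T 1) + -(T 1)^3) : LL) * h5
  · linear_combination ((-(T 1)^4) : LL) * h5
  · linear_combination ((-(T 1)^3) : LL) * h5
  · ring1
  · ring1
  · ring1

lemma s26 : m16 * m26 = m27 := by
  unfold m16 m26 m27
  rw [Matrix.mul_fin_three]
  refine congrArg Matrix.of (Matrix.vec3_eq (Matrix.vec3_eq ?_ ?_ ?_) (Matrix.vec3_eq ?_ ?_ ?_) (Matrix.vec3_eq ?_ ?_ ?_))
  · linear_combination ((3*(T 1)^2 + (T 1)^4) : LL) * h5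
  · ring1
  · ring1
  · ring1
  · ring1
  · ring1
  · linear_combination ((3*(T 1)^2) : LL) * h5
  · ring1
  · ring1

lemma s27 : m25 * m27 = m28 := by
  unfold m25 m27 m28
  rw [Matrix.mul_fin_three]
  refine congrArg Matrix.of (Matrix.vec3_eq (Matrix.vec3_eq ?_ ?_ ?_) (Matrix.vec3_eq ?_ ?_ ?_) (Matrix.vec3_eq ?_ ?_ ?_))
  · linear_combination ((3*(T 1)^8) : LL) * h5
  · linear_combination ((3*(T 1)^9) : LL) * h5
  · linear_combination ((3*(T 1)^8) : LL) * h5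
  · ring1
  · ring1
  · linear_combination ((3*(T 1)^5 + (T 1)^7) : LL) * h5
  · linear_combination ((4*(T 1)^6 + 3*(T 1)^8) : LL) * h5
  · linear_combination ((3*(T 1)^9) : LL) * h5
  · linear_combination ((7*(T 1)^8) : LL) * h5

lemma s28 : m23 * m28 = m29 := by
  unfold m23 m28 m29
  rw [Matrix.mul_fin_three]
  refine congrArg Matrix.of (Matrix.vec3_eq (Matrix.vec3_eq ?_ ?_ ?_) (Matrix.vec3_eq ?_ ?_ ?_) (Matrix.vec3_eq ?_ ?_ ?_))
  · linear_combination ((3*(T 1)^6 + 2*(T 1)^8 + 10*(T 1)^10 + 4*(T 1)^12 + 3*(T 1)^14) : LL) * h5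
  · linear_combination ((3*(T 1)^11 + 2*(T 1)^13) : LL) * h5
  · linear_combination ((5*(T 1)^10 + 3*(T 1)^12 + 7*(T 1)^14 + 2*(T 1)^16 + 3*(T 1)^18) : LL) * h5
  · linear_combination (((T 1)^7 + 2*(T 1)^9 + 7*(T 1)^11 + 6*(T 1)^13 + 8*(T 1)^15 + 7*(T 1)^17 + (T 1)^19) : LL) * h5
  · linear_combination (((T 1)^12 + 2*(T 1)^14 + 2*(T 1)^16 + (T 1)^18 + (T 1)^20) : LL) * h5
  · linear_combination ((3*(T 1)^11 + 4*(T 1)^13 + 6*(T 1)^15 + 6*(T 1)^17 + 4*(T 1)^19 + 3*(T 1)^21) : LL) * h5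
  · linear_combination ((3*(T 1)^6 + 2*(T 1)^8 + 10*(T 1)^10 + 4*(T 1)^12 + 3*(T 1)^14) : LL) * h5
  · linear_combination ((3*(T 1)^11 + 2*(T 1)^13) : LL) * h5
  · linear_combination ((5*(T 1)^10 + 3*(T 1)^12 + 3*(T 1)^14 + (T 1)^16) : LL) * h5

lemma s29 : m19 * m29 = m30 := by
  unfold m19 m29 m30
  rw [Matrix.mul_fin_three]
  refine congrArg Matrix.of (Matrix.vec3_eq (Matrix.vec3_eq ?_ ?_ ?_) (Matrix.vec3_eq ?_ ?_ ?_) (Matrix.vec3_eq ?_ ?_ ?_))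
  · linear_combination ((2*(T 1)^16 + 2*(T 1)^18 + 2*(T 1)^20 + 3*(T 1)^22 + 6*(T 1)^24 + 8*(T 1)^26 + 11*(T 1)^28 + 7*(T 1)^30 + 10*(T 1)^32 + 9*(T 1)^34 + 6*(T 1)^36 + 2*(T 1)^38) : LL) * h5
  · linear_combination ((2*(T 1)^21 + 2*(T 1)^23 + 3*(T 1)^25 + 4*(T 1)^27 + 8*(T 1)^29 + 7*(T 1)^31 + 10*(T 1)^33 + 7*(T 1)^35 + 5*(T 1)^37 + (T 1)^39) : LL) * h5
  · linear_combination ((2*(T 1)^18 + 3*(T 1)^20 + 6*(T 1)^22 + 10*(T 1)^24 + 12*(T 1)^26 + 19*(T 1)^28 + 15*(T 1)^30 + 12*(T 1)^32 + 8*(T 1)^34 + 4*(T 1)^36 + 2*(T 1)^38 + (T 1)^40) : LL) * h5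
  · linear_combination ((2*(T 1)^17 + 3*(T 1)^19 + 2*(T 1)^21 + 4*(T 1)^23 + 8*(T 1)^25 + 14*(T 1)^27 + 12*(T 1)^29 + 10*(T 1)^31 + 5*(T 1)^33 + 12*(T 1)^35 + 7*(T 1)^37 + 5*(T 1)^39 + (T 1)^41) : LL) * h5
  · linear_combination ((2*(T 1)^22 + 3*(T 1)^24 + 4*(T 1)^26 + 8*(T 1)^28 + 9*(T 1)^30 + 10*(T 1)^32 + 7*(T 1)^34 + 9*(T 1)^36 + 6*(T 1)^38 + 4*(T 1)^40 + (T 1)^42) : LL) * h5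
  · linear_combination ((4*(T 1)^19 + 5*(T 1)^21 + 9*(T 1)^23 + 10*(T 1)^25 + 13*(T 1)^27 + 11*(T 1)^29 + 15*(T 1)^31 + 11*(T 1)^33 + 12*(T 1)^35 + 7*(T 1)^37 + 5*(T 1)^39 + 3*(T 1)^41) : LL) * h5
  · linear_combination ((2*(T 1)^14 + 4*(T 1)^16 + 3*(T 1)^18 + 7*(T 1)^20 + 10*(T 1)^22 + 11*(T 1)^24 + 18*(T 1)^26 + 16*(T 1)^28 + 9*(T 1)^30 + 13*(T 1)^32 + 13*(T 1)^34 + 8*(T 1)^36 + 4*(T 1)^38 + (T 1)^40) : LL) * h5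
  · linear_combination ((2*(T 1)^19 + 4*(T 1)^21 + 5*(T 1)^23 + 11*(T 1)^25 + 11*(T 1)^27 + 12*(T 1)^29 + 9*(T 1)^31 + 11*(T 1)^33 + 11*(T 1)^35 + 7*(T 1)^37 + 3*(T 1)^39 + (T 1)^41) : LL) * h5
  · linear_combination ((4*(T 1)^16 + 6*(T 1)^18 + 11*(T 1)^20 + 16*(T 1)^22 + 15*(T 1)^24 + 16*(T 1)^26 + 20*(T 1)^28 + 19*(T 1)^30 + 17*(T 1)^32 + 12*(T 1)^34 + 6*(T 1)^36 + 4*(T 1)^38 + 2*(T 1)^40) : LL) * h5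

lemma s30 : m1 * m12 = m31 := by
  unfold m1 m12 m31
  rw [Matrix.mul_fin_three]
  refine congrArg Matrix.of (Matrix.vec3_eq (Matrix.vec3_eq ?_ ?_ ?_) (Matrix.vec3_eq ?_ ?_ ?_) (Matrix.vec3_eq ?_ ?_ ?_))
  · ring1
  · ring1
  · ring1
  · linear_combination ((-(T 1) + -(T 1)^3 + -(T 1)^5) : LL) * h5
  · linear_combination ((-(T 1)^6) : LL) * h5
  · linear_combination ((-(T 1) + -(T 1)^3 + -(T 1)^5) : LL) * h5
  · ring1
  · ring1
  · ring1

lemma s31 : m31 * m16 = m32 := by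
  unfold m31 m16 m32
  rw [Matrix.mul_fin_three]
  refine congrArg Matrix.of (Matrix.vec3_eq (Matrix.vec3_eq ?_ ?_ ?_) (Matrix.vec3_eq ?_ ?_ ?_) (Matrix.vec3_eq ?_ ?_ ?_))
  · ring1
  · ring1
  · ring1
  · ring1
  · linear_combination ((6*(T 1)^2 + 2*(T 1)^4 + 7*(T 1)^6) : LL) * h5
  · linear_combination ((3*(T 1)^3 + 3*(T 1)^7) : LL) * h5
  · ring1
  · ring1
  · ring1

lemma s32 : m10 * m32 = m33 := by
  unfold m10 m32 m33
  rw [Matrix.mul_fin_three]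
  refine congrArg Matrix.of (Matrix.vec3_eq (Matrix.vec3_eq ?_ ?_ ?_) (Matrix.vec3_eq ?_ ?_ ?_) (Matrix.vec3_eq ?_ ?_ ?_))
  · linear_combination ((3*(T 1)^6 + (T 1)^8 + 3*(T 1)^10) : LL) * h5
  · linear_combination (((T 1)^3 + 2*(T 1)^5 + 2*(T 1)^7 + 3*(T 1)^9) : LL) * h5
  · linear_combination ((3*(T 1)^6 + (T 1)^8) : LL) * h5
  · linear_combination ((3*(T 1)^9 + (T 1)^11 + 2*(T 1)^13) : LL) * h5
  · linear_combination ((8*(T 1)^6 + 2*(T 1)^8 + 2*(T 1)^10 + 2*(T 1)^12) : LL) * h5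
  · linear_combination ((4*(T 1)^7 + 2*(T 1)^9) : LL) * h5
  · linear_combination ((3*(T 1)^6 + (T 1)^8 + 3*(T 1)^10) : LL) * h5
  · linear_combination (((T 1)^3 + 2*(T 1)^5 + 2*(T 1)^7 + 3*(T 1)^9) : LL) * h5
  · linear_combination ((4*(T 1)^6 + (T 1)^8) : LL) * h5

lemma s33 : m20 * m32 = m34 := by
  unfold m20 m32 m34
  rw [Matrix.mul_fin_three]
  refine congrArg Matrix.of (Matrix.vec3_eq (Matrix.vec3_eq ?_ ?_ ?_) (Matrix.vec3_eq ?_ ?_ ?_) (Matrix.vec3_eq ?_ ?_ ?_))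
  · linear_combination ((3*(T 1)^6 + (T 1)^8 + 3*(T 1)^10) : LL) * h5
  · linear_combination (((T 1)^3 + 2*(T 1)^5 + 2*(T 1)^7 + 3*(T 1)^9) : LL) * h5
  · linear_combination ((3*(T 1)^6 + (T 1)^8) : LL) * h5
  · linear_combination (((T 1)^7 + 3*(T 1)^9 + 3*(T 1)^11 + 2*(T 1)^13) : LL) * h5
  · linear_combination (((T 1)^4 + 8*(T 1)^6 + 4*(T 1)^8 + 3*(T 1)^10 + 2*(T 1)^12) : LL) * h5
  · linear_combination (((T 1)^5 + 5*(T 1)^7 + 3*(T 1)^9 + (T 1)^11) : LL) * h5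
  · linear_combination ((3*(T 1)^6 + 3*(T 1)^10) : LL) * h5
  · linear_combination ((4*(T 1)^3 + (T 1)^5 + (T 1)^7 + 3*(T 1)^9) : LL) * h5
  · linear_combination ((4*(T 1)^4 + 3*(T 1)^6) : LL) * h5

lemma s34 : m33 * m34 = m35 := by
  unfold m33 m34 m35
  rw [Matrix.mul_fin_three]
  refine congrArg Matrix.of (Matrix.vec3_eq (Matrix.vec3_eq ?_ ?_ ?_) (Matrix.vec3_eq ?_ ?_ ?_) (Matrix.vec3_eq ?_ ?_ ?_))
  · linear_combination ((2*(T 1)^10 + 8*(T 1)^12 + 8*(T 1)^14 + 12*(T 1)^16 + 15*(T 1)^18 + 14*(T 1)^20 + 6*(T 1)^22 + 8*(T 1)^24 + 3*(T 1)^26) : LL) * h5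
  · linear_combination ((5*(T 1)^7 + 8*(T 1)^9 + 11*(T 1)^11 + 12*(T 1)^13 + 15*(T 1)^15 + 15*(T 1)^17 + 10*(T 1)^19 + 8*(T 1)^21 + 8*(T 1)^23 + 3*(T 1)^25) : LL) * h5
  · linear_combination ((3*(T 1)^10 + 9*(T 1)^12 + 8*(T 1)^14 + 13*(T 1)^16 + 7*(T 1)^18 + 4*(T 1)^20 + 3*(T 1)^22) : LL) * h5
  · linear_combination (((T 1)^11 + 3*(T 1)^13 + 8*(T 1)^15 + 9*(T 1)^17 + 12*(T 1)^19 + 7*(T 1)^21 + 4*(T 1)^23 + 2*(T 1)^25 + (T 1)^27) : LL) * h5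
  · linear_combination ((2*(T 1)^8 + 6*(T 1)^10 + 10*(T 1)^12 + 11*(T 1)^14 + 12*(T 1)^16 + 12*(T 1)^18 + 5*(T 1)^20 + 5*(T 1)^22 + 3*(T 1)^24 + (T 1)^26) : LL) * h5
  · linear_combination ((4*(T 1)^11 + 5*(T 1)^13 + 9*(T 1)^15 + 8*(T 1)^17 + 6*(T 1)^19 + 2*(T 1)^21 + (T 1)^23) : LL) * h5
  · linear_combination ((2*(T 1)^10 + 7*(T 1)^12 + 6*(T 1)^14 + 10*(T 1)^16 + 14*(T 1)^18 + 12*(T 1)^20 + 5*(T 1)^22 + 8*(T 1)^24 + 3*(T 1)^26) : LL) * h5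
  · linear_combination ((5*(T 1)^7 + 7*(T 1)^9 + 9*(T 1)^11 + 10*(T 1)^13 + 15*(T 1)^15 + 14*(T 1)^17 + 9*(T 1)^19 + 8*(T 1)^21 + 8*(T 1)^23 + 3*(T 1)^25) : LL) * h5
  · linear_combination ((3*(T 1)^10 + 7*(T 1)^12 + 6*(T 1)^14 + 12*(T 1)^16 + 6*(T 1)^18 + 4*(T 1)^20 + 3*(T 1)^22) : LL) * h5

lemma s35 : m1 * m3 = m36 := by
  unfold m1 m3 m36
  rw [Matrix.mul_fin_three]
  refine congrArg Matrix.of (Matrix.vec3_eq (Matrix.vec3_eq ?_ ?_ ?_) (Matrix.vec3_eq ?_ ?_ ?_) (Matrix.vec3_eq ?_ ?_ ?_))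
  · ring1
  · ring1
  · ring1
  · linear_combination ((-(T 1)) : LL) * h5
  · ring1
  · ring1
  · ring1
  · linear_combination ((-(T 1)) : LL) * h5
  · linear_combination ((-(T 1)^2) : LL) * h5

lemma s36 : m1 * m7 = m37 := by
  unfold m1 m7 m37
  rw [Matrix.mul_fin_three]
  refine congrArg Matrix.of (Matrix.vec3_eq (Matrix.vec3_eq ?_ ?_ ?_) (Matrix.vec3_eq ?_ ?_ ?_) (Matrix.vec3_eq ?_ ?_ ?_))
  · ring1
  · ring1
  · ring1
  · linear_combination ((-(T 1)^3 + -(T 1)^5) : LL) * h5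
  · linear_combination ((-(T 1)^2) : LL) * h5
  · linear_combination ((-(T 1) + -(T 1)^3) : LL) * h5
  · ring1
  · ring1
  · ring1

lemma s37 : m36 * m37 = m38 := by
  unfold m36 m37 m38
  rw [Matrix.mul_fin_three]
  refine congrArg Matrix.of (Matrix.vec3_eq (Matrix.vec3_eq ?_ ?_ ?_) (Matrix.vec3_eq ?_ ?_ ?_) (Matrix.vec3_eq ?_ ?_ ?_))
  · ring1
  · ring1
  · ring1
  · linear_combination ((3*(T 1)^3) : LL) * h5
  · linear_combination ((3*(T 1)^2) : LL) * h5
  · ring1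
  · linear_combination ((3*(T 1)^6) : LL) * h5
  · ring1
  · linear_combination ((4*(T 1)^2) : LL) * h5

lemma s38 : m5 * m24 = m39 := by
  unfold m5 m24 m39
  rw [Matrix.mul_fin_three]
  refine congrArg Matrix.of (Matrix.vec3_eq (Matrix.vec3_eq ?_ ?_ ?_) (Matrix.vec3_eq ?_ ?_ ?_) (Matrix.vec3_eq ?_ ?_ ?_))
  · linear_combination (((T 1)^4 + (T 1)^6) : LL) * h5
  · linear_combination (((T 1)^7) : LL) * h5
  · linear_combination (((T 1)^6) : LL) * h5
  · linear_combination ((4*(T 1)^3 + 4*(T 1)^5) : LL) * h5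
  · linear_combination ((4*(T 1)^6) : LL) * h5
  · linear_combination ((3*(T 1)^3 + 4*(T 1)^5) : LL) * h5
  · ring1
  · ring1
  · ring1

lemma s39 : m38 * m39 = m40 := by
  unfold m38 m39 m40
  rw [Matrix.mul_fin_three]
  refine congrArg Matrix.of (Matrix.vec3_eq (Matrix.vec3_eq ?_ ?_ ?_) (Matrix.vec3_eq ?_ ?_ ?_) (Matrix.vec3_eq ?_ ?_ ?_))
  · linear_combination ((3*(T 1)^2) : LL) * h5
  · ring1
  · linear_combination ((3*(T 1)^6) : LL) * h5
  · ring1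
  · ring1
  · linear_combination (((T 1)^7) : LL) * h5
  · linear_combination ((3*(T 1)^4 + 3*(T 1)^8) : LL) * h5
  · ring1
  · linear_combination ((6*(T 1)^8 + (T 1)^10) : LL) * h5

lemma s40 : m0 * m36 = m41 := by
  unfold m0 m36 m41
  rw [Matrix.mul_fin_three]
  refine congrArg Matrix.of (Matrix.vec3_eq (Matrix.vec3_eq ?_ ?_ ?_) (Matrix.vec3_eq ?_ ?_ ?_) (Matrix.vec3_eq ?_ ?_ ?_))
  · linear_combination ((-(T 1)^2) : LL) * h5
  · ring1
  · linear_combination ((-(T 1)^4) : LL) * h5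
  · ring1
  · ring1
  · ring1
  · ring1
  · ring1
  · ring1

lemma s41 : m8 * m41 = m42 := by
  unfold m8 m41 m42
  rw [Matrix.mul_fin_three]
  refine congrArg Matrix.of (Matrix.vec3_eq (Matrix.vec3_eq ?_ ?_ ?_) (Matrix.vec3_eq ?_ ?_ ?_) (Matrix.vec3_eq ?_ ?_ ?_))
  · linear_combination ((3*(T 1)^2) : LL) * h5
  · ring1
  · linear_combination ((3*(T 1)^6) : LL) * h5
  · ring1
  · ring1
  · ring1
  · linear_combination ((3*(T 1)^2) : LL) * h5
  · linear_combination ((3*(T 1)^3) : LL) * h5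
  · linear_combination ((4*(T 1)^4) : LL) * h5

lemma s42 : m0 * m0 = m43 := by
  unfold m0 m43
  rw [Matrix.mul_fin_three]
  refine congrArg Matrix.of (Matrix.vec3_eq (Matrix.vec3_eq ?_ ?_ ?_) (Matrix.vec3_eq ?_ ?_ ?_) (Matrix.vec3_eq ?_ ?_ ?_))
  · ring1
  · linear_combination ((-(T 1)) : LL) * h5
  · ring1
  · ring1
  · ring1
  · ring1
  · ring1
  · ring1
  · ring1

lemma s43 : m1 * m43 = m44 := by
  unfold m1 m43 m44
  rw [Matrix.mul_fin_three]
  refine congrArg Matrix.of (Matrix.vec3_eq (Matrix.vec3_eq ?_ ?_ ?_) (Matrix.vec3_eq ?_ ?_ ?_) (Matrix.vec3_eq ?_ ?_ ?_))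
  · ring1
  · ring1
  · ring1
  · linear_combination ((-(T 1)^5) : LL) * h5
  · linear_combination ((-(T 1)^2 + -(T 1)^4) : LL) * h5
  · linear_combination ((-(T 1)) : LL) * h5
  · ring1
  · ring1
  · ring1

lemma s44 : m44 * m9 = m45 := by
  unfold m44 m9 m45
  rw [Matrix.mul_fin_three]
  refine congrArg Matrix.of (Matrix.vec3_eq (Matrix.vec3_eq ?_ ?_ ?_) (Matrix.vec3_eq ?_ ?_ ?_) (Matrix.vec3_eq ?_ ?_ ?_))
  · ring1
  · ring1
  · ring1
  · linear_combination ((3*(T 1)^7) : LL) * h5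
  · linear_combination ((3*(T 1)^2 + (T 1)^4 + 3*(T 1)^6) : LL) * h5
  · ring1
  · ring1
  · ring1
  · ring1

lemma s45 : m42 * m45 = m46 := by
  unfold m42 m45 m46
  rw [Matrix.mul_fin_three]
  refine congrArg Matrix.of (Matrix.vec3_eq (Matrix.vec3_eq ?_ ?_ ?_) (Matrix.vec3_eq ?_ ?_ ?_) (Matrix.vec3_eq ?_ ?_ ?_))
  · ring1
  · linear_combination ((3*(T 1)^5 + 2*(T 1)^7) : LL) * h5
  · ring1
  · linear_combination ((3*(T 1)^7) : LL) * h5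
  · linear_combination ((3*(T 1)^2 + (T 1)^4 + 3*(T 1)^6) : LL) * h5
  · ring1
  · ring1
  · linear_combination (((T 1)^7) : LL) * h5
  · ring1

lemma s46 : m40 * m46 = m47 := by
  unfold m40 m46 m47
  rw [Matrix.mul_fin_three]
  refine congrArg Matrix.of (Matrix.vec3_eq (Matrix.vec3_eq ?_ ?_ ?_) (Matrix.vec3_eq ?_ ?_ ?_) (Matrix.vec3_eq ?_ ?_ ?_))
  · linear_combination ((3*(T 1)^12 + (T 1)^14) : LL) * h5
  · linear_combination ((3*(T 1)^7 + 2*(T 1)^9 + 2*(T 1)^11 + (T 1)^13) : LL) * h5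
  · linear_combination ((3*(T 1)^12) : LL) * h5
  · linear_combination ((3*(T 1)^11 + (T 1)^13 + 5*(T 1)^15 + 2*(T 1)^17) : LL) * h5
  · linear_combination ((3*(T 1)^6 + 3*(T 1)^8 + 8*(T 1)^10 + 6*(T 1)^12 + 4*(T 1)^14 + 2*(T 1)^16) : LL) * h5
  · linear_combination ((3*(T 1)^11 + 2*(T 1)^13 + 5*(T 1)^15 + 2*(T 1)^17) : LL) * h5
  · linear_combination ((6*(T 1)^14 + 3*(T 1)^16 + 6*(T 1)^18) : LL) * h5
  · linear_combination ((6*(T 1)^9 + 6*(T 1)^11 + 11*(T 1)^13 + 8*(T 1)^15 + 5*(T 1)^17 + (T 1)^19) : LL) * h5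
  · linear_combination ((6*(T 1)^14 + 3*(T 1)^16 + 6*(T 1)^18) : LL) * h5

lemma s47 : m35 * m47 = m48 := by
  unfold m35 m47 m48
  rw [Matrix.mul_fin_three]
  refine congrArg Matrix.of (Matrix.vec3_eq (Matrix.vec3_eq ?_ ?_ ?_) (Matrix.vec3_eq ?_ ?_ ?_) (Matrix.vec3_eq ?_ ?_ ?_))
  · linear_combination ((5*(T 1)^20 + 5*(T 1)^22 + 7*(T 1)^24 + 9*(T 1)^26 + 14*(T 1)^28 + 12*(T 1)^30 + 13*(T 1)^32 + 12*(T 1)^34 + 15*(T 1)^36 + 9*(T 1)^38 + 5*(T 1)^40 + 4*(T 1)^42 + 2*(T 1)^44) : LL) * h5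
  · linear_combination ((5*(T 1)^15 + 7*(T 1)^17 + 6*(T 1)^19 + 3*(T 1)^21 + 7*(T 1)^23 + 8*(T 1)^25 + 13*(T 1)^27 + 12*(T 1)^29 + 14*(T 1)^31 + 11*(T 1)^33 + 8*(T 1)^35 + 7*(T 1)^37 + 5*(T 1)^39 + 2*(T 1)^41 + 2*(T 1)^43) : LL) * h5
  · linear_combination ((5*(T 1)^20 + 6*(T 1)^22 + 7*(T 1)^24 + 7*(T 1)^26 + 14*(T 1)^28 + 13*(T 1)^30 + 14*(T 1)^32 + 12*(T 1)^34 + 16*(T 1)^36 + 10*(T 1)^38 + 6*(T 1)^40 + 3*(T 1)^42 + 3*(T 1)^44) : LL) * h5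
  · linear_combination ((3*(T 1)^21 + 4*(T 1)^23 + 6*(T 1)^25 + 11*(T 1)^27 + 11*(T 1)^29 + 9*(T 1)^31 + 8*(T 1)^33 + 10*(T 1)^35 + 11*(T 1)^37 + 9*(T 1)^39 + 6*(T 1)^41 + 4*(T 1)^43 + (T 1)^45) : LL) * h5
  · linear_combination ((3*(T 1)^16 + 5*(T 1)^18 + 6*(T 1)^20 + 8*(T 1)^22 + 9*(T 1)^24 + 9*(T 1)^26 + 10*(T 1)^28 + 11*(T 1)^30 + 13*(T 1)^32 + 11*(T 1)^34 + 6*(T 1)^36 + 5*(T 1)^38 + 4*(T 1)^40 + 3*(T 1)^42 + 2*(T 1)^44) : LL) * h5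
  · linear_combination ((3*(T 1)^21 + 5*(T 1)^23 + 7*(T 1)^25 + 11*(T 1)^27 + 12*(T 1)^29 + 10*(T 1)^31 + 8*(T 1)^33 + 10*(T 1)^35 + 12*(T 1)^37 + 10*(T 1)^39 + 6*(T 1)^41 + 4*(T 1)^43 + 2*(T 1)^45) : LL) * h5
  · linear_combination ((5*(T 1)^20 + 9*(T 1)^22 + 14*(T 1)^24 + 18*(T 1)^26 + 22*(T 1)^28 + 21*(T 1)^30 + 17*(T 1)^32 + 12*(T 1)^34 + 15*(T 1)^36 + 8*(T 1)^38 + 3*(T 1)^40 + 4*(T 1)^42 + 2*(T 1)^44) : LL) * h5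
  · linear_combination ((5*(T 1)^15 + 10*(T 1)^17 + 14*(T 1)^19 + 14*(T 1)^21 + 16*(T 1)^23 + 19*(T 1)^25 + 19*(T 1)^27 + 14*(T 1)^29 + 16*(T 1)^31 + 10*(T 1)^33 + 6*(T 1)^35 + 4*(T 1)^37 + 3*(T 1)^39 + 2*(T 1)^41 + 2*(T 1)^43) : LL) * h5
  · linear_combination ((5*(T 1)^20 + 10*(T 1)^22 + 15*(T 1)^24 + 18*(T 1)^26 + 23*(T 1)^28 + 22*(T 1)^30 + 20*(T 1)^32 + 13*(T 1)^34 + 14*(T 1)^36 + 8*(T 1)^38 + 4*(T 1)^40 + 3*(T 1)^42 + 3*(T 1)^44) : LL) * h5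

lemma s48 : m30 * m48 = m49 := by
  unfold m30 m48 m49
  rw [Matrix.mul_fin_three]
  refine congrArg Matrix.of (Matrix.vec3_eq (Matrix.vec3_eq ?_ ?_ ?_) (Matrix.vec3_eq ?_ ?_ ?_) (Matrix.vec3_eq ?_ ?_ ?_))
  · linear_combination (((T 1)^40 + (T 1)^42 + 3*(T 1)^44 + 4*(T 1)^46 + 6*(T 1)^48 + 10*(T 1)^50 + 12*(T 1)^52 + 12*(T 1)^54 + 14*(T 1)^56 + 17*(T 1)^58 + 21*(T 1)^60 + 19*(T 1)^62 + 24*(T 1)^64 + 19*(T 1)^66 + 22*(T 1)^68 + 14*(T 1)^70 + 15*(T 1)^72 + 10*(T 1)^74 + 14*(T 1)^76 + 12*(T 1)^78 + 9*(T 1)^80 + 10*(T 1)^82 + 6*(T 1)^84 + 3*(T 1)^86) : LL) * h5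
  · linear_combination (((T 1)^35 + 4*(T 1)^37 + 4*(T 1)^39 + 11*(T 1)^41 + 14*(T 1)^43 + 14*(T 1)^45 + 17*(T 1)^47 + 19*(T 1)^49 + 16*(T 1)^51 + 20*(T 1)^53 + 20*(T 1)^55 + 22*(T 1)^57 + 18*(T 1)^59 + 18*(T 1)^61 + 19*(T 1)^63 + 15*(T 1)^65 + 10*(T 1)^67 + 11*(T 1)^69 + 6*(T 1)^71 + 9*(T 1)^73 + 6*(T 1)^75 + 5*(T 1)^77 + 4*(T 1)^79 + 3*(T 1)^81 + (T 1)^83) : LL) * h5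
  · linear_combination (((T 1)^40 + (T 1)^42 + 6*(T 1)^44 + 9*(T 1)^46 + 11*(T 1)^48 + 15*(T 1)^50 + 13*(T 1)^52 + 12*(T 1)^54 + 14*(T 1)^56 + 17*(T 1)^58 + 20*(T 1)^60 + 26*(T 1)^62 + 27*(T 1)^64 + 25*(T 1)^66 + 24*(T 1)^68 + 17*(T 1)^70 + 15*(T 1)^72 + 13*(T 1)^74 + 13*(T 1)^76 + 13*(T 1)^78 + 8*(T 1)^80 + 7*(T 1)^82 + 3*(T 1)^84 + (T 1)^86) : LL) * h5
  · linear_combination (((T 1)^41 + 2*(T 1)^43 + 4*(T 1)^45 + 7*(T 1)^47 + 8*(T 1)^49 + 9*(T 1)^51 + 10*(T 1)^53 + 10*(T 1)^55 + 16*(T 1)^57 + 17*(T 1)^59 + 22*(T 1)^61 + 23*(T 1)^63 + 26*(T 1)^65 + 24*(T 1)^67 + 22*(T 1)^69 + 14*(T 1)^71 + 13*(T 1)^73 + 15*(T 1)^75 + 14*(T 1)^77 + 16*(T 1)^79 + 9*(T 1)^81 + 15*(T 1)^83 + 7*(T 1)^85 + 5*(T 1)^87) : LL) * h5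
  · linear_combination (((T 1)^36 + 5*(T 1)^38 + 9*(T 1)^40 + 14*(T 1)^42 + 15*(T 1)^44 + 13*(T 1)^46 + 15*(T 1)^48 + 18*(T 1)^50 + 20*(T 1)^52 + 22*(T 1)^54 + 23*(T 1)^56 + 23*(T 1)^58 + 27*(T 1)^60 + 22*(T 1)^62 + 23*(T 1)^64 + 19*(T 1)^66 + 12*(T 1)^68 + 14*(T 1)^70 + 10*(T 1)^72 + 12*(T 1)^74 + 9*(T 1)^76 + 6*(T 1)^78 + 7*(T 1)^80 + 4*(T 1)^82 + 2*(T 1)^84) : LL) * h5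
  · linear_combination (((T 1)^41 + 3*(T 1)^43 + 8*(T 1)^45 + 13*(T 1)^47 + 14*(T 1)^49 + 13*(T 1)^51 + 12*(T 1)^53 + 12*(T 1)^55 + 17*(T 1)^57 + 22*(T 1)^59 + 26*(T 1)^61 + 32*(T 1)^63 + 30*(T 1)^65 + 25*(T 1)^67 + 23*(T 1)^69 + 16*(T 1)^71 + 18*(T 1)^73 + 17*(T 1)^75 + 15*(T 1)^77 + 18*(T 1)^79 + 12*(T 1)^81 + 12*(T 1)^83 + 5*(T 1)^85 + 2*(T 1)^87) : LL) * h5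
  · linear_combination (((T 1)^40 + (T 1)^42 + 3*(T 1)^44 + 5*(T 1)^46 + 6*(T 1)^48 + 10*(T 1)^50 + 13*(T 1)^52 + 13*(T 1)^54 + 17*(T 1)^56 + 16*(T 1)^58 + 22*(T 1)^60 + 22*(T 1)^62 + 23*(T 1)^64 + 16*(T 1)^66 + 22*(T 1)^68 + 16*(T 1)^70 + 17*(T 1)^72 + 13*(T 1)^74 + 15*(T 1)^76 + 11*(T 1)^78 + 9*(T 1)^80 + 8*(T 1)^82 + 4*(T 1)^84 + 2*(T 1)^86) : LL) * h5
  · linear_combination (((T 1)^35 + 4*(T 1)^37 + 5*(T 1)^39 + 11*(T 1)^41 + 13*(T 1)^43 + 16*(T 1)^45 + 19*(T 1)^47 + 20*(T 1)^49 + 18*(T 1)^51 + 23*(T 1)^53 + 21*(T 1)^55 + 24*(T 1)^57 + 22*(T 1)^59 + 20*(T 1)^61 + 18*(T 1)^63 + 16*(T 1)^65 + 13*(T 1)^67 + 14*(T 1)^69 + 8*(T 1)^71 + 9*(T 1)^73 + 6*(T 1)^75 + 5*(T 1)^77 + 4*(T 1)^79 + 2*(T 1)^81 + (T 1)^83) :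 LL) * h5
  · linear_combination (((T 1)^40 + 2*(T 1)^42 + 7*(T 1)^44 + 9*(T 1)^46 + 12*(T 1)^48 + 16*(T 1)^50 + 13*(T 1)^52 + 14*(T 1)^54 + 17*(T 1)^56 + 20*(T 1)^58 + 23*(T 1)^60 + 27*(T 1)^62 + 25*(T 1)^64 + 25*(T 1)^66 + 25*(T 1)^68 + 18*(T 1)^70 + 18*(T 1)^72 + 15*(T 1)^74 + 15*(T 1)^76 + 12*(T 1)^78 + 8*(T 1)^80 + 6*(T 1)^82 + 3*(T 1)^84 + (T 1)^86) : LL) * h5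

lemma s49 : m8 * m37 = m50 := by
  unfold m8 m37 m50
  rw [Matrix.mul_fin_three]
  refine congrArg Matrix.of (Matrix.vec3_eq (Matrix.vec3_eq ?_ ?_ ?_) (Matrix.vec3_eq ?_ ?_ ?_) (Matrix.vec3_eq ?_ ?_ ?_))
  · linear_combination ((4*(T 1)^4 + 3*(T 1)^6) : LL) * h5
  · linear_combination ((4*(T 1)^3) : LL) * h5
  · linear_combination ((3*(T 1)^2) : LL) * h5
  · ring1
  · ring1
  · ring1
  · linear_combination ((3*(T 1)^6) : LL) * h5
  · ring1
  · linear_combination ((4*(T 1)^2) : LL) * h5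

lemma s50 : m50 * m50 = m51 := by
  unfold m50 m51
  rw [Matrix.mul_fin_three]
  refine congrArg Matrix.of (Matrix.vec3_eq (Matrix.vec3_eq ?_ ?_ ?_) (Matrix.vec3_eq ?_ ?_ ?_) (Matrix.vec3_eq ?_ ?_ ?_))
  · linear_combination ((3*(T 1)^8) : LL) * h5
  · linear_combination ((3*(T 1)^7) : LL) * h5
  · linear_combination ((3*(T 1)^8) : LL) * h5
  · linear_combination ((3*(T 1)^5 + 2*(T 1)^7) : LL) * h5
  · linear_combination ((3*(T 1)^4) : LL) * h5
  · linear_combination ((3*(T 1)^5 + 2*(T 1)^7 + 3*(T 1)^9) : LL) * h5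
  · linear_combination ((6*(T 1)^8 + (T 1)^10) : LL) * h5
  · linear_combination ((3*(T 1)^7) : LL) * h5
  · linear_combination ((3*(T 1)^4 + (T 1)^6 + 6*(T 1)^8) : LL) * h5

lemma s51 : m8 * m31 = m52 := by
  unfold m8 m31 m52
  rw [Matrix.mul_fin_three]
  refine congrArg Matrix.of (Matrix.vec3_eq (Matrix.vec3_eq ?_ ?_ ?_) (Matrix.vec3_eq ?_ ?_ ?_) (Matrix.vec3_eq ?_ ?_ ?_))
  · linear_combination ((4*(T 1)^2 + 3*(T 1)^6) : LL) * h5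
  · linear_combination ((3*(T 1)^7) : LL) * h5
  · linear_combination ((3*(T 1)^2 + 3*(T 1)^6) : LL) * h5
  · ring1
  · ring1
  · ring1
  · linear_combination ((3*(T 1)^2 + 3*(T 1)^6) : LL) * h5
  · linear_combination ((3*(T 1)^7) : LL) * h5
  · linear_combination ((4*(T 1)^2 + 3*(T 1)^6) : LL) * h5

lemma s52 : m5 * m13 = m53 := by
  unfold m5 m13 m53
  rw [Matrix.mul_fin_three]
  refine congrArg Matrix.of (Matrix.vec3_eq (Matrix.vec3_eq ?_ ?_ ?_) (Matrix.vec3_eq ?_ ?_ ?_) (Matrix.vec3_eq ?_ ?_ ?_))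
  · ring1
  · ring1
  · ring1
  · linear_combination ((3*(T 1)^3) : LL) * h5
  · linear_combination ((6*(T 1)^2) : LL) * h5
  · linear_combination ((3*(T 1)^3) : LL) * h5
  · ring1
  · ring1
  · ring1

lemma s53 : m52 * m53 = m54 := by
  unfold m52 m53 m54
  rw [Matrix.mul_fin_three]
  refine congrArg Matrix.of (Matrix.vec3_eq (Matrix.vec3_eq ?_ ?_ ?_) (Matrix.vec3_eq ?_ ?_ ?_) (Matrix.vec3_eq ?_ ?_ ?_))
  · linear_combination ((3*(T 1)^8 + 2*(T 1)^10 + (T 1)^12) : LL) * h5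
  · linear_combination ((6*(T 1)^7 + 3*(T 1)^9 + (T 1)^11) : LL) * h5
  · linear_combination ((3*(T 1)^8 + 2*(T 1)^10 + (T 1)^12) : LL) * h5
  · linear_combination ((3*(T 1)^5 + 2*(T 1)^7 + 4*(T 1)^9 + 4*(T 1)^11) : LL) * h5
  · linear_combination ((6*(T 1)^4 + 3*(T 1)^6 + 8*(T 1)^8 + 4*(T 1)^10) : LL) * h5
  · linear_combination ((3*(T 1)^5 + 2*(T 1)^7 + 4*(T 1)^9 + 4*(T 1)^11) : LL) * h5
  · linear_combination ((3*(T 1)^8 + 2*(T 1)^10 + (T 1)^12) : LL) * h5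
  · linear_combination ((6*(T 1)^7 + 3*(T 1)^9 + (T 1)^11) : LL) * h5
  · linear_combination ((3*(T 1)^8 + 2*(T 1)^10 + (T 1)^12) : LL) * h5

lemma s54 : m51 * m54 = m55 := by
  unfold m51 m54 m55
  rw [Matrix.mul_fin_three]
  refine congrArg Matrix.of (Matrix.vec3_eq (Matrix.vec3_eq ?_ ?_ ?_) (Matrix.vec3_eq ?_ ?_ ?_) (Matrix.vec3_eq ?_ ?_ ?_))
  · linear_combination ((5*(T 1)^12 + 6*(T 1)^14 + 13*(T 1)^16 + 8*(T 1)^18 + 6*(T 1)^20 + 2*(T 1)^22) : LL) * h5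
  · linear_combination (((T 1)^9 + 7*(T 1)^11 + 9*(T 1)^13 + 17*(T 1)^15 + 10*(T 1)^17 + 6*(T 1)^19 + 2*(T 1)^21) : LL) * h5
  · linear_combination ((5*(T 1)^12 + 6*(T 1)^14 + 13*(T 1)^16 + 8*(T 1)^18 + 6*(T 1)^20 + 2*(T 1)^22) : LL) * h5
  · linear_combination ((4*(T 1)^11 + 8*(T 1)^13 + 10*(T 1)^15 + 11*(T 1)^17 + 4*(T 1)^19 + 3*(T 1)^21) : LL) * h5
  · linear_combination ((4*(T 1)^8 + 8*(T 1)^10 + 10*(T 1)^12 + 11*(T 1)^14 + 11*(T 1)^16 + 5*(T 1)^18 + 3*(T 1)^20) : LL) * h5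
  · linear_combination ((3*(T 1)^9 + 5*(T 1)^11 + 8*(T 1)^13 + 9*(T 1)^15 + 7*(T 1)^17 + 4*(T 1)^19 + 3*(T 1)^21) : LL) * h5
  · linear_combination ((5*(T 1)^12 + 7*(T 1)^14 + 12*(T 1)^16 + 8*(T 1)^18 + 5*(T 1)^20 + 2*(T 1)^22) : LL) * h5
  · linear_combination ((2*(T 1)^9 + 7*(T 1)^11 + 10*(T 1)^13 + 16*(T 1)^15 + 10*(T 1)^17 + 5*(T 1)^19 + 2*(T 1)^21) : LL) * h5
  · linear_combination (((T 1)^10 + 4*(T 1)^12 + 7*(T 1)^14 + 13*(T 1)^16 + 8*(T 1)^18 + 5*(T 1)^20 + 2*(T 1)^22) : LL) * h5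

lemma s55 : m1 * m2 = m56 := by
  unfold m1 m2 m56
  rw [Matrix.mul_fin_three]
  refine congrArg Matrix.of (Matrix.vec3_eq (Matrix.vec3_eq ?_ ?_ ?_) (Matrix.vec3_eq ?_ ?_ ?_) (Matrix.vec3_eq ?_ ?_ ?_))
  · ring1
  · ring1
  · ring1
  · linear_combination ((-(T 1)^3) : LL) * h5
  · linear_combination ((-(T 1)^4) : LL) * h5
  · linear_combination ((-(T 1) + -(T 1)^3) : LL) * h5
  · ring1
  · ring1
  · ring1

lemma s56 : m8 * m56 = m57 := by
  unfold m8 m56 m57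
  rw [Matrix.mul_fin_three]
  refine congrArg Matrix.of (Matrix.vec3_eq (Matrix.vec3_eq ?_ ?_ ?_) (Matrix.vec3_eq ?_ ?_ ?_) (Matrix.vec3_eq ?_ ?_ ?_))
  · ring1
  · ring1
  · linear_combination ((3*(T 1)^2) : LL) * h5
  · ring1
  · ring1
  · ring1
  · ring1
  · ring1
  · linear_combination ((4*(T 1)^2) : LL) * h5

lemma s57 : m16 * m21 = m58 := by
  unfold m16 m21 m58
  rw [Matrix.mul_fin_three]
  refine congrArg Matrix.of (Matrix.vec3_eq (Matrix.vec3_eq ?_ ?_ ?_) (Matrix.vec3_eq ?_ ?_ ?_) (Matrix.vec3_eq ?_ ?_ ?_))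
  · linear_combination (((T 1)^6) : LL) * h5
  · ring1
  · linear_combination ((3*(T 1)^2) : LL) * h5
  · ring1
  · ring1
  · ring1
  · linear_combination ((3*(T 1)^6) : LL) * h5
  · ring1
  · linear_combination ((3*(T 1)^2) : LL) * h5

lemma s58 : m57 * m58 = m59 := by
  unfold m57 m58 m59
  rw [Matrix.mul_fin_three]
  refine congrArg Matrix.of (Matrix.vec3_eq (Matrix.vec3_eq ?_ ?_ ?_) (Matrix.vec3_eq ?_ ?_ ?_) (Matrix.vec3_eq ?_ ?_ ?_))
  · linear_combination ((7*(T 1)^8) : LL) * h5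
  · linear_combination ((3*(T 1)^9) : LL) * h5
  · linear_combination ((4*(T 1)^6 + 3*(T 1)^8) : LL) * h5
  · linear_combination ((3*(T 1)^5 + (T 1)^7) : LL) * h5
  · ring1
  · ring1
  · linear_combination ((3*(T 1)^8) : LL) * h5
  · linear_combination ((3*(T 1)^9) : LL) * h5
  · linear_combination ((3*(T 1)^8) : LL) * h5

lemma s59 : m7 * m5 = m60 := by
  unfold m7 m5 m60
  rw [Matrix.mul_fin_three]
  refine congrArg Matrix.of (Matrix.vec3_eq (Matrix.vec3_eq ?_ ?_ ?_) (Matrix.vec3_eq ?_ ?_ ?_) (Matrix.vec3_eq ?_ ?_ ?_))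
  · linear_combination ((3*(T 1)^2) : LL) * h5
  · linear_combination ((3*(T 1)^3) : LL) * h5
  · linear_combination ((3*(T 1)^2) : LL) * h5
  · ring1
  · ring1
  · ring1
  · ring1
  · ring1
  · ring1

lemma s60 : m21 * m5 = m61 := by
  unfold m21 m5 m61
  rw [Matrix.mul_fin_three]
  refine congrArg Matrix.of (Matrix.vec3_eq (Matrix.vec3_eq ?_ ?_ ?_) (Matrix.vec3_eq ?_ ?_ ?_) (Matrix.vec3_eq ?_ ?_ ?_))
  · linear_combination ((3*(T 1)^2) : LL) * h5
  · linear_combination ((3*(T 1)^3) : LL) * h5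
  · linear_combination ((3*(T 1)^2) : LL) * h5
  · ring1
  · ring1
  · ring1
  · ring1
  · ring1
  · ring1

lemma s61 : m60 * m61 = m62 := by
  unfold m60 m61 m62
  rw [Matrix.mul_fin_three]
  refine congrArg Matrix.of (Matrix.vec3_eq (Matrix.vec3_eq ?_ ?_ ?_) (Matrix.vec3_eq ?_ ?_ ?_) (Matrix.vec3_eq ?_ ?_ ?_))
  · linear_combination ((3*(T 1)^8) : LL) * h5
  · linear_combination (((T 1)^7 + 4*(T 1)^9 + 4*(T 1)^11) : LL) * h5
  · linear_combination (((T 1)^8 + 4*(T 1)^10) : LL) * h5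
  · linear_combination ((3*(T 1)^7) : LL) * h5
  · linear_combination ((6*(T 1)^8 + (T 1)^10 + (T 1)^12) : LL) * h5
  · linear_combination ((3*(T 1)^7 + (T 1)^11) : LL) * h5
  · ring1
  · linear_combination (((T 1)^7) : LL) * h5
  · ring1

lemma s62 : m59 * m62 = m63 := by
  unfold m59 m62 m63
  rw [Matrix.mul_fin_three]
  refine congrArg Matrix.of (Matrix.vec3_eq (Matrix.vec3_eq ?_ ?_ ?_) (Matrix.vec3_eq ?_ ?_ ?_) (Matrix.vec3_eq ?_ ?_ ?_))
  · linear_combination ((2*(T 1)^10 + 7*(T 1)^12 + 4*(T 1)^14 + 3*(T 1)^16 + (T 1)^18) : LL) * h5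
  · linear_combination ((2*(T 1)^11 + 5*(T 1)^13 + 5*(T 1)^15 + 3*(T 1)^17 + (T 1)^19) : LL) * h5
  · linear_combination ((2*(T 1)^10 + 7*(T 1)^12 + 4*(T 1)^14 + 3*(T 1)^16) : LL) * h5
  · linear_combination ((3*(T 1)^9 + 3*(T 1)^11 + 9*(T 1)^13 + (T 1)^15 + 3*(T 1)^17) : LL) * h5
  · linear_combination ((2*(T 1)^10 + 3*(T 1)^12 + 7*(T 1)^14 + 3*(T 1)^16 + 2*(T 1)^18) : LL) * h5
  · linear_combination ((3*(T 1)^9 + 3*(T 1)^11 + 9*(T 1)^13 + (T 1)^15 + 3*(T 1)^17) : LL) * h5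
  · linear_combination ((3*(T 1)^12 + 2*(T 1)^14) : LL) * h5
  · linear_combination ((2*(T 1)^13 + 2*(T 1)^15) : LL) * h5
  · linear_combination ((3*(T 1)^12 + 3*(T 1)^14) : LL) * h5

lemma s63 : m55 * m63 = m64 := by
  unfold m55 m63 m64
  rw [Matrix.mul_fin_three]
  refine congrArg Matrix.of (Matrix.vec3_eq (Matrix.vec3_eq ?_ ?_ ?_) (Matrix.vec3_eq ?_ ?_ ?_) (Matrix.vec3_eq ?_ ?_ ?_))
  · linear_combination ((2*(T 1)^16 + 5*(T 1)^18 + 9*(T 1)^20 + 6*(T 1)^22 + 13*(T 1)^24 + 13*(T 1)^26 + 16*(T 1)^28 + 8*(T 1)^30 + 13*(T 1)^32 + 7*(T 1)^34 + 4*(T 1)^36 + 3*(T 1)^38 + 2*(T 1)^40 + (T 1)^42) : LL) * h5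
  · linear_combination ((2*(T 1)^17 + 5*(T 1)^19 + 10*(T 1)^21 + 14*(T 1)^23 + 13*(T 1)^25 + 19*(T 1)^27 + 13*(T 1)^29 + 13*(T 1)^31 + 8*(T 1)^33 + 7*(T 1)^35 + 5*(T 1)^37 + 2*(T 1)^39 + 2*(T 1)^41 + (T 1)^43) : LL) * h5
  · linear_combination ((2*(T 1)^16 + 5*(T 1)^18 + 12*(T 1)^20 + 9*(T 1)^22 + 16*(T 1)^24 + 14*(T 1)^26 + 18*(T 1)^28 + 9*(T 1)^30 + 14*(T 1)^32 + 7*(T 1)^34 + 5*(T 1)^36 + 2*(T 1)^38 + 2*(T 1)^40 + (T 1)^42) : LL) * h5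
  · linear_combination ((2*(T 1)^17 + 6*(T 1)^19 + 10*(T 1)^21 + 12*(T 1)^23 + 13*(T 1)^25 + 15*(T 1)^27 + 17*(T 1)^29 + 11*(T 1)^31 + 10*(T 1)^33 + 6*(T 1)^35 + 7*(T 1)^37 + 5*(T 1)^39 + 5*(T 1)^41) : LL) * h5
  · linear_combination ((2*(T 1)^18 + 6*(T 1)^20 + 12*(T 1)^22 + 17*(T 1)^24 + 15*(T 1)^26 + 19*(T 1)^28 + 17*(T 1)^30 + 14*(T 1)^32 + 12*(T 1)^34 + 12*(T 1)^36 + 4*(T 1)^38 + 6*(T 1)^40 + 4*(T 1)^42) : LL) * h5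
  · linear_combination ((2*(T 1)^17 + 6*(T 1)^19 + 12*(T 1)^21 + 13*(T 1)^23 + 16*(T 1)^25 + 17*(T 1)^27 + 18*(T 1)^29 + 12*(T 1)^31 + 13*(T 1)^33 + 7*(T 1)^35 + 8*(T 1)^37 + 4*(T 1)^39 + 6*(T 1)^41) : LL) * h5
  · linear_combination (((T 1)^16 + 3*(T 1)^18 + 8*(T 1)^20 + 9*(T 1)^22 + 13*(T 1)^24 + 17*(T 1)^26 + 16*(T 1)^28 + 13*(T 1)^30 + 12*(T 1)^32 + 11*(T 1)^34 + 7*(T 1)^36 + 5*(T 1)^38 + (T 1)^40 + (T 1)^42) : LL) * h5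
  · linear_combination (((T 1)^17 + 4*(T 1)^19 + 8*(T 1)^21 + 14*(T 1)^23 + 15*(T 1)^25 + 20*(T 1)^27 + 20*(T 1)^29 + 16*(T 1)^31 + 13*(T 1)^33 + 7*(T 1)^35 + 9*(T 1)^37 + 3*(T 1)^39 + (T 1)^41 + (T 1)^43) : LL) * h5
  · linear_combination (((T 1)^16 + 3*(T 1)^18 + 9*(T 1)^20 + 11*(T 1)^22 + 15*(T 1)^24 + 18*(T 1)^26 + 17*(T 1)^28 + 18*(T 1)^30 + 12*(T 1)^32 + 12*(T 1)^34 + 7*(T 1)^36 + 6*(T 1)^38 + (T 1)^40 + (T 1)^42) : LL) * h5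

lemma s64 : m3 * m4 = m65 := by
  unfold m3 m4 m65
  rw [Matrix.mul_fin_three]
  refine congrArg Matrix.of (Matrix.vec3_eq (Matrix.vec3_eq ?_ ?_ ?_) (Matrix.vec3_eq ?_ ?_ ?_) (Matrix.vec3_eq ?_ ?_ ?_))
  · ring1
  · ring1
  · ring1
  · ring1
  · ring1
  · ring1
  · linear_combination ((-(T 1)^2 + -(T 1)^4) : LL) * h5
  · linear_combination ((-(T 1)^3 + -(T 1)^5) : LL) * h5
  · linear_combination ((-(T 1)^2) : LL) * h5

lemma s65 : m7 * m65 = m66 := by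
  unfold m7 m65 m66
  rw [Matrix.mul_fin_three]
  refine congrArg Matrix.of (Matrix.vec3_eq (Matrix.vec3_eq ?_ ?_ ?_) (Matrix.vec3_eq ?_ ?_ ?_) (Matrix.vec3_eq ?_ ?_ ?_))
  · linear_combination ((4*(T 1)^2) : LL) * h5
  · linear_combination ((3*(T 1)^3) : LL) * h5
  · linear_combination ((3*(T 1)^2) : LL) * h5
  · linear_combination (((T 1)^3 + 3*(T 1)^5) : LL) * h5
  · linear_combination ((3*(T 1)^6) : LL) * h5
  · ring1
  · ring1
  · ring1
  · ring1

lemma s66 : m13 * m24 = m67 := by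
  unfold m13 m24 m67
  rw [Matrix.mul_fin_three]
  refine congrArg Matrix.of (Matrix.vec3_eq (Matrix.vec3_eq ?_ ?_ ?_) (Matrix.vec3_eq ?_ ?_ ?_) (Matrix.vec3_eq ?_ ?_ ?_))
  · linear_combination ((4*(T 1)^2) : LL) * h5
  · ring1
  · linear_combination ((3*(T 1)^2) : LL) * h5
  · linear_combination (((T 1)^3) : LL) * h5
  · ring1
  · ring1
  · linear_combination ((3*(T 1)^2 + (T 1)^4 + 3*(T 1)^6) : LL) * h5
  · linear_combination ((3*(T 1)^7) : LL) * h5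
  · linear_combination ((3*(T 1)^2 + 3*(T 1)^6) : LL) * h5

lemma s67 : m66 * m67 = m68 := by
  unfold m66 m67 m68
  rw [Matrix.mul_fin_three]
  refine congrArg Matrix.of (Matrix.vec3_eq (Matrix.vec3_eq ?_ ?_ ?_) (Matrix.vec3_eq ?_ ?_ ?_) (Matrix.vec3_eq ?_ ?_ ?_))
  · ring1
  · ring1
  · linear_combination (((T 1)^6) : LL) * h5
  · linear_combination ((2*(T 1)^7 + 3*(T 1)^9 + 3*(T 1)^11) : LL) * h5
  · linear_combination ((3*(T 1)^8 + 2*(T 1)^10 + 3*(T 1)^12) : LL) * h5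
  · linear_combination ((6*(T 1)^7 + 3*(T 1)^9 + 3*(T 1)^11) : LL) * h5
  · linear_combination (((T 1)^6 + 3*(T 1)^8 + 2*(T 1)^10 + 3*(T 1)^12) : LL) * h5
  · linear_combination (((T 1)^7 + 3*(T 1)^9 + (T 1)^11 + 3*(T 1)^13) : LL) * h5
  · linear_combination ((3*(T 1)^6 + 6*(T 1)^8 + (T 1)^10 + 3*(T 1)^12) : LL) * h5

lemma s68 : m44 * m21 = m69 := by
  unfold m44 m21 m69
  rw [Matrix.mul_fin_three]
  refine congrArg Matrix.of (Matrix.vec3_eq (Matrix.vec3_eq ?_ ?_ ?_) (Matrix.vec3_eq ?_ ?_ ?_) (Matrix.vec3_eq ?_ ?_ ?_))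
  · linear_combination (((T 1)^6) : LL) * h5
  · ring1
  · linear_combination ((3*(T 1)^2) : LL) * h5
  · linear_combination ((3*(T 1)^5 + 4*(T 1)^7) : LL) * h5
  · linear_combination ((3*(T 1)^6) : LL) * h5
  · linear_combination ((3*(T 1)^5) : LL) * h5
  · ring1
  · ring1
  · ring1

lemma s69 : m42 * m69 = m70 := by
  unfold m42 m69 m70
  rw [Matrix.mul_fin_three]
  refine congrArg Matrix.of (Matrix.vec3_eq (Matrix.vec3_eq ?_ ?_ ?_) (Matrix.vec3_eq ?_ ?_ ?_) (Matrix.vec3_eq ?_ ?_ ?_))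
  · linear_combination ((3*(T 1)^8) : LL) * h5
  · ring1
  · ring1
  · linear_combination ((3*(T 1)^5) : LL) * h5
  · linear_combination ((3*(T 1)^6) : LL) * h5
  · linear_combination ((3*(T 1)^5) : LL) * h5
  · ring1
  · ring1
  · ring1

lemma s70 : m68 * m70 = m71 := by
  unfold m68 m70 m71
  rw [Matrix.mul_fin_three]
  refine congrArg Matrix.of (Matrix.vec3_eq (Matrix.vec3_eq ?_ ?_ ?_) (Matrix.vec3_eq ?_ ?_ ?_) (Matrix.vec3_eq ?_ ?_ ?_))
  · linear_combination (((T 1)^10 + 6*(T 1)^12 + 9*(T 1)^14 + 12*(T 1)^16 + 7*(T 1)^18 + 3*(T 1)^20) : LL) * h5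
  · linear_combination (((T 1)^11 + 5*(T 1)^13 + 5*(T 1)^15 + 7*(T 1)^17) : LL) * h5
  · linear_combination ((6*(T 1)^10 + 8*(T 1)^12 + 9*(T 1)^14 + 7*(T 1)^16) : LL) * h5
  · linear_combination ((6*(T 1)^11 + 5*(T 1)^13 + 7*(T 1)^15 + 8*(T 1)^17 + 10*(T 1)^19 + 7*(T 1)^21 + 3*(T 1)^23) : LL) * h5
  · linear_combination ((6*(T 1)^12 + 5*(T 1)^14 + 2*(T 1)^16 + 4*(T 1)^18 + 7*(T 1)^20) : LL) * h5
  · linear_combination (((T 1)^9 + 8*(T 1)^11 + 7*(T 1)^13 + 5*(T 1)^15 + 9*(T 1)^17 + 7*(T 1)^19) : LL) * h5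
  · linear_combination ((2*(T 1)^10 + 3*(T 1)^12 + 10*(T 1)^14 + 10*(T 1)^16 + 8*(T 1)^18 + 2*(T 1)^20) : LL) * h5
  · linear_combination ((2*(T 1)^11 + 3*(T 1)^13 + 7*(T 1)^15 + 5*(T 1)^17 + 2*(T 1)^19) : LL) * h5
  · linear_combination ((5*(T 1)^10 + 7*(T 1)^12 + 10*(T 1)^14 + 6*(T 1)^16 + 2*(T 1)^18) : LL) * h5

lemma s71 : m56 * m16 = m72 := by
  unfold m56 m16 m72
  rw [Matrix.mul_fin_three]
  refine congrArg Matrix.of (Matrix.vec3_eq (Matrix.vec3_eq ?_ ?_ ?_) (Matrix.vec3_eq ?_ ?_ ?_) (Matrix.vec3_eq ?_ ?_ ?_))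
  · ring1
  · linear_combination (((T 1)^3) : LL) * h5
  · ring1
  · ring1
  · linear_combination ((3*(T 1)^2) : LL) * h5
  · linear_combination ((3*(T 1)^3) : LL) * h5
  · ring1
  · ring1
  · ring1

lemma s72 : m10 * m72 = m73 := by
  unfold m10 m72 m73
  rw [Matrix.mul_fin_three]
  refine congrArg Matrix.of (Matrix.vec3_eq (Matrix.vec3_eq ?_ ?_ ?_) (Matrix.vec3_eq ?_ ?_ ?_) (Matrix.vec3_eq ?_ ?_ ?_))
  · ring1
  · linear_combination ((3*(T 1)^5 + (T 1)^7) : LL) * h5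
  · ring1
  · ring1
  · linear_combination ((4*(T 1)^6 + 2*(T 1)^8) : LL) * h5
  · linear_combination ((3*(T 1)^7 + 3*(T 1)^9) : LL) * h5
  · ring1
  · linear_combination ((4*(T 1)^5 + (T 1)^7) : LL) * h5
  · linear_combination (((T 1)^6) : LL) * h5

lemma s73 : m4 * m13 = m74 := by
  unfold m4 m13 m74
  rw [Matrix.mul_fin_three]
  refine congrArg Matrix.of (Matrix.vec3_eq (Matrix.vec3_eq ?_ ?_ ?_) (Matrix.vec3_eq ?_ ?_ ?_) (Matrix.vec3_eq ?_ ?_ ?_))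
  · ring1
  · ring1
  · ring1
  · linear_combination ((3*(T 1)^3) : LL) * h5
  · linear_combination ((6*(T 1)^2) : LL) * h5
  · linear_combination ((3*(T 1)^3) : LL) * h5
  · ring1
  · ring1
  · ring1

lemma s74 : m74 * m32 = m75 := by
  unfold m74 m32 m75
  rw [Matrix.mul_fin_three]
  refine congrArg Matrix.of (Matrix.vec3_eq (Matrix.vec3_eq ?_ ?_ ?_) (Matrix.vec3_eq ?_ ?_ ?_) (Matrix.vec3_eq ?_ ?_ ?_))
  · linear_combination ((4*(T 1)^6 + 3*(T 1)^10) : LL) * h5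
  · linear_combination ((4*(T 1)^3 + 2*(T 1)^5 + (T 1)^7 + 3*(T 1)^9) : LL) * h5
  · linear_combination ((3*(T 1)^6) : LL) * h5
  · linear_combination (((T 1)^7 + 4*(T 1)^9 + 2*(T 1)^11 + 3*(T 1)^13) : LL) * h5
  · linear_combination ((2*(T 1)^4 + 9*(T 1)^6 + 3*(T 1)^8 + 3*(T 1)^10 + 3*(T 1)^12) : LL) * h5
  · linear_combination (((T 1)^5 + 5*(T 1)^7 + 3*(T 1)^9) : LL) * h5
  · linear_combination ((4*(T 1)^8 + (T 1)^10 + 3*(T 1)^12) : LL) * h5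
  · linear_combination ((4*(T 1)^5 + 4*(T 1)^7 + 2*(T 1)^9 + 3*(T 1)^11) : LL) * h5
  · linear_combination ((4*(T 1)^8 + (T 1)^10) : LL) * h5

lemma s75 : m73 * m75 = m76 := by
  unfold m73 m75 m76
  rw [Matrix.mul_fin_three]
  refine congrArg Matrix.of (Matrix.vec3_eq (Matrix.vec3_eq ?_ ?_ ?_) (Matrix.vec3_eq ?_ ?_ ?_) (Matrix.vec3_eq ?_ ?_ ?_))
  · linear_combination ((3*(T 1)^10 + 3*(T 1)^12 + 8*(T 1)^14 + 9*(T 1)^16 + 10*(T 1)^18 + 3*(T 1)^20 + 3*(T 1)^22) : LL) * h5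
  · linear_combination (((T 1)^7 + 4*(T 1)^9 + 7*(T 1)^11 + 8*(T 1)^13 + 8*(T 1)^15 + 7*(T 1)^17 + 4*(T 1)^19 + 3*(T 1)^21) : LL) * h5
  · linear_combination ((6*(T 1)^10 + 9*(T 1)^12 + 13*(T 1)^14 + 9*(T 1)^16 + 6*(T 1)^18 + (T 1)^20) : LL) * h5
  · linear_combination ((2*(T 1)^13 + 4*(T 1)^15 + 9*(T 1)^17 + 8*(T 1)^19 + 6*(T 1)^21 + (T 1)^23) : LL) * h5
  · linear_combination ((2*(T 1)^10 + 5*(T 1)^12 + 7*(T 1)^14 + 5*(T 1)^16 + 7*(T 1)^18 + 5*(T 1)^20 + (T 1)^22) : LL) * h5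
  · linear_combination ((2*(T 1)^11 + 7*(T 1)^13 + 9*(T 1)^15 + 10*(T 1)^17 + 8*(T 1)^19 + 2*(T 1)^21) : LL) * h5
  · linear_combination ((3*(T 1)^10 + 2*(T 1)^12 + 7*(T 1)^14 + 8*(T 1)^16 + 6*(T 1)^18 + (T 1)^20) : LL) * h5
  · linear_combination (((T 1)^7 + 3*(T 1)^9 + 6*(T 1)^11 + 4*(T 1)^13 + 6*(T 1)^15 + 5*(T 1)^17 + (T 1)^19) : LL) * h5
  · linear_combination ((5*(T 1)^10 + 7*(T 1)^12 + 9*(T 1)^14 + 7*(T 1)^16 + 3*(T 1)^18) : LL) * h5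

lemma s76 : m71 * m76 = m77 := by
  unfold m71 m76 m77
  rw [Matrix.mul_fin_three]
  refine congrArg Matrix.of (Matrix.vec3_eq (Matrix.vec3_eq ?_ ?_ ?_) (Matrix.vec3_eq ?_ ?_ ?_) (Matrix.vec3_eq ?_ ?_ ?_))
  · linear_combination (((T 1)^20 + 4*(T 1)^22 + 7*(T 1)^24 + 11*(T 1)^26 + 13*(T 1)^28 + 17*(T 1)^30 + 16*(T 1)^32 + 11*(T 1)^34 + 11*(T 1)^36 + 6*(T 1)^38 + 3*(T 1)^40 + 2*(T 1)^42) : LL) * h5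
  · linear_combination (((T 1)^15 + 3*(T 1)^17 + 4*(T 1)^19 + 10*(T 1)^21 + 11*(T 1)^23 + 20*(T 1)^25 + 15*(T 1)^27 + 16*(T 1)^29 + 17*(T 1)^31 + 12*(T 1)^33 + 7*(T 1)^35 + 4*(T 1)^37 + 5*(T 1)^39 + 2*(T 1)^41) : LL) * h5
  · linear_combination (((T 1)^16 + 4*(T 1)^18 + 3*(T 1)^20 + 9*(T 1)^22 + 11*(T 1)^24 + 17*(T 1)^26 + 19*(T 1)^28 + 13*(T 1)^30 + 16*(T 1)^32 + 17*(T 1)^34 + 8*(T 1)^36 + 6*(T 1)^38 + 3*(T 1)^40) : LL) * h5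
  · linear_combination (((T 1)^21 + 5*(T 1)^23 + 3*(T 1)^25 + 7*(T 1)^27 + 11*(T 1)^29 + 16*(T 1)^31 + 17*(T 1)^33 + 16*(T 1)^35 + 10*(T 1)^37 + 11*(T 1)^39 + 8*(T 1)^41 + 3*(T 1)^43 + 2*(T 1)^45) : LL) * h5
  · linear_combination (((T 1)^16 + 3*(T 1)^18 + 6*(T 1)^20 + 4*(T 1)^22 + 10*(T 1)^24 + 13*(T 1)^26 + 14*(T 1)^28 + 16*(T 1)^30 + 15*(T 1)^32 + 16*(T 1)^34 + 11*(T 1)^36 + 8*(T 1)^38 + 6*(T 1)^40 + 5*(T 1)^42 + 2*(T 1)^44) : LL) * h5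
  · linear_combination ((2*(T 1)^17 + 4*(T 1)^19 + 6*(T 1)^21 + 3*(T 1)^23 + 7*(T 1)^25 + 16*(T 1)^27 + 16*(T 1)^29 + 15*(T 1)^31 + 16*(T 1)^33 + 13*(T 1)^35 + 13*(T 1)^37 + 11*(T 1)^39 + 6*(T 1)^41 + 3*(T 1)^43) : LL) * h5
  · linear_combination ((2*(T 1)^20 + 5*(T 1)^22 + 7*(T 1)^24 + 10*(T 1)^26 + 12*(T 1)^28 + 15*(T 1)^30 + 16*(T 1)^32 + 13*(T 1)^34 + 10*(T 1)^36 + 8*(T 1)^38 + 7*(T 1)^40 + 5*(T 1)^42 + 2*(T 1)^44) : LL) * h5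
  · linear_combination (((T 1)^15 + 4*(T 1)^17 + 7*(T 1)^19 + 10*(T 1)^21 + 14*(T 1)^23 + 19*(T 1)^25 + 18*(T 1)^27 + 19*(T 1)^29 + 16*(T 1)^31 + 16*(T 1)^33 + 11*(T 1)^35 + 8*(T 1)^37 + 5*(T 1)^39 + 4*(T 1)^41 + 2*(T 1)^43) : LL) * h5
  · linear_combination ((2*(T 1)^16 + 5*(T 1)^18 + 7*(T 1)^20 + 11*(T 1)^22 + 11*(T 1)^24 + 18*(T 1)^26 + 23*(T 1)^28 + 19*(T 1)^30 + 16*(T 1)^32 + 17*(T 1)^34 + 13*(T 1)^36 + 9*(T 1)^38 + 6*(T 1)^40 + 3*(T 1)^42) : LL) * h5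

lemma s77 : m64 * m77 = m78 := by
  unfold m64 m77 m78
  rw [Matrix.mul_fin_three]
  refine congrArg Matrix.of (Matrix.vec3_eq (Matrix.vec3_eq ?_ ?_ ?_) (Matrix.vec3_eq ?_ ?_ ?_) (Matrix.vec3_eq ?_ ?_ ?_))
  · linear_combination ((2*(T 1)^34 + 2*(T 1)^36 + 8*(T 1)^38 + 11*(T 1)^40 + 10*(T 1)^42 + 11*(T 1)^44 + 16*(T 1)^46 + 15*(T 1)^48 + 18*(T 1)^50 + 24*(T 1)^52 + 21*(T 1)^54 + 22*(T 1)^56 + 23*(T 1)^58 + 25*(T 1)^60 + 24*(T 1)^62 + 19*(T 1)^64 + 20*(T 1)^66 + 14*(T 1)^68 + 12*(T 1)^70 + 14*(T 1)^72 + 5*(T 1)^74 + 7*(T 1)^76 + 4*(T 1)^78) : LL) * h5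
  · linear_combination ((2*(T 1)^31 + 2*(T 1)^33 + 6*(T 1)^35 + 10*(T 1)^37 + 7*(T 1)^39 + 12*(T 1)^41 + 19*(T 1)^43 + 21*(T 1)^45 + 24*(T 1)^47 + 31*(T 1)^49 + 34*(T 1)^51 + 36*(T 1)^53 + 35*(T 1)^55 + 35*(T 1)^57 + 34*(T 1)^59 + 28*(T 1)^61 + 30*(T 1)^63 + 27*(T 1)^65 + 21*(T 1)^67 + 19*(T 1)^69 + 18*(T 1)^71 + 13*(T 1)^73 + 10*(T 1)^75 + 4*(T 1)^77) : LL) * h5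
  · linear_combination ((2*(T 1)^32 + 2*(T 1)^34 + 8*(T 1)^36 + 9*(T 1)^38 + 13*(T 1)^40 + 13*(T 1)^42 + 18*(T 1)^44 + 22*(T 1)^46 + 26*(T 1)^48 + 25*(T 1)^50 + 33*(T 1)^52 + 24*(T 1)^54 + 32*(T 1)^56 + 30*(T 1)^58 + 27*(T 1)^60 + 27*(T 1)^62 + 20*(T 1)^64 + 18*(T 1)^66 + 15*(T 1)^68 + 13*(T 1)^70 + 9*(T 1)^72 + 4*(T 1)^74 + 3*(T 1)^76 + 3*(T 1)^78) : LL) * h5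
  · linear_combination ((4*(T 1)^45 + 3*(T 1)^47 + 9*(T 1)^49 + 13*(T 1)^51 + 13*(T 1)^53 + 15*(T 1)^55 + 21*(T 1)^57 + 20*(T 1)^59 + 20*(T 1)^61 + 20*(T 1)^63 + 15*(T 1)^65 + 15*(T 1)^67 + 12*(T 1)^69 + 12*(T 1)^71 + 9*(T 1)^73 + 5*(T 1)^75 + 4*(T 1)^77) : LL) * h5
  · linear_combination ((4*(T 1)^42 + 2*(T 1)^44 + 5*(T 1)^46 + 9*(T 1)^48 + 9*(T 1)^50 + 11*(T 1)^52 + 18*(T 1)^54 + 16*(T 1)^56 + 21*(T 1)^58 + 24*(T 1)^60 + 24*(T 1)^62 + 25*(T 1)^64 + 21*(T 1)^66 + 19*(T 1)^68 + 19*(T 1)^70 + 11*(T 1)^72 + 9*(T 1)^74 + 4*(T 1)^76) : LL) * h5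
  · linear_combination ((4*(T 1)^43 + 4*(T 1)^45 + 9*(T 1)^47 + 10*(T 1)^49 + 15*(T 1)^51 + 19*(T 1)^53 + 17*(T 1)^55 + 25*(T 1)^57 + 27*(T 1)^59 + 19*(T 1)^61 + 21*(T 1)^63 + 17*(T 1)^65 + 15*(T 1)^67 + 11*(T 1)^69 + 10*(T 1)^71 + 5*(T 1)^73 + 2*(T 1)^75 + 2*(T 1)^77) : LL) * h5
  · linear_combination ((3*(T 1)^34 + 6*(T 1)^36 + 9*(T 1)^38 + 10*(T 1)^40 + 15*(T 1)^42 + 12*(T 1)^44 + 13*(T 1)^46 + 14*(T 1)^48 + 13*(T 1)^50 + 18*(T 1)^52 + 23*(T 1)^54 + 16*(T 1)^56 + 21*(T 1)^58 + 24*(T 1)^60 + 18*(T 1)^62 + 14*(T 1)^64 + 16*(T 1)^66 + 10*(T 1)^68 + 14*(T 1)^70 + 10*(T 1)^72 + 7*(T 1)^74 + 6*(T 1)^76 + 4*(T 1)^78) : LL) * h5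
  · linear_combination ((3*(T 1)^31 + 6*(T 1)^33 + 6*(T 1)^35 + 9*(T 1)^37 + 15*(T 1)^39 + 17*(T 1)^41 + 14*(T 1)^43 + 19*(T 1)^45 + 25*(T 1)^47 + 27*(T 1)^49 + 30*(T 1)^51 + 26*(T 1)^53 + 26*(T 1)^55 + 30*(T 1)^57 + 23*(T 1)^59 + 19*(T 1)^61 + 24*(T 1)^63 + 21*(T 1)^65 + 22*(T 1)^67 + 20*(T 1)^69 + 16*(T 1)^71 + 15*(T 1)^73 + 6*(T 1)^75 + 4*(T 1)^77) : LL) * h5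
  · linear_combination ((3*(T 1)^32 + 6*(T 1)^34 + 9*(T 1)^36 + 11*(T 1)^38 + 18*(T 1)^40 + 17*(T 1)^42 + 19*(T 1)^44 + 19*(T 1)^46 + 20*(T 1)^48 + 20*(T 1)^50 + 20*(T 1)^52 + 23*(T 1)^54 + 21*(T 1)^56 + 23*(T 1)^58 + 25*(T 1)^60 + 23*(T 1)^62 + 16*(T 1)^64 + 16*(T 1)^66 + 15*(T 1)^68 + 12*(T 1)^70 + 7*(T 1)^72 + 4*(T 1)^74 + 4*(T 1)^76 + 3*(T 1)^78) : LL) * h5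

lemma s78 : m49 * m78 = m79 := by
  unfold m49 m78 m79
  rw [Matrix.mul_fin_three]
  refine congrArg Matrix.of (Matrix.vec3_eq (Matrix.vec3_eq ?_ ?_ ?_) (Matrix.vec3_eq ?_ ?_ ?_) (Matrix.vec3_eq ?_ ?_ ?_))
  · linear_combination ((4*(T 1)^90 + 4*(T 1)^92 + 5*(T 1)^94 + 7*(T 1)^96 + 3*(T 1)^98 + 10*(T 1)^100 + 13*(T 1)^102 + 16*(T 1)^104 + 18*(T 1)^106 + 15*(T 1)^108 + 27*(T 1)^110 + 21*(T 1)^112 + 30*(T 1)^114 + 30*(T 1)^116 + 23*(T 1)^118 + 31*(T 1)^120 + 30*(T 1)^122 + 25*(T 1)^124 + 25*(T 1)^126 + 31*(T 1)^128 + 25*(T 1)^130 + 17*(T 1)^132 + 19*(T 1)^134 + 13*(T 1)^136 + 9*(T 1)^138 + 8*(T 1)^140 + 5*(T 1)^142 + 2*(T 1)^144) : LL) * h5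
  · linear_combination ((4*(T 1)^87 + 4*(T 1)^89 + 4*(T 1)^91 + 9*(T 1)^93 + 8*(T 1)^95 + 5*(T 1)^97 + 6*(T 1)^99 + 11*(T 1)^101 + 19*(T 1)^103 + 14*(T 1)^105 + 15*(T 1)^107 + 19*(T 1)^109 + 16*(T 1)^111 + 30*(T 1)^113 + 22*(T 1)^115 + 19*(T 1)^117 + 18*(T 1)^119 + 21*(T 1)^121 + 24*(T 1)^123 + 18*(T 1)^125 + 22*(T 1)^127 + 15*(T 1)^129 + 12*(T 1)^131 + 11*(T 1)^133 + 6*(T 1)^135 + 6*(T 1)^137 + 6*(T 1)^139 + 3*(T 1)^141) : LL) * h5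
  · linear_combination ((4*(T 1)^88 + 4*(T 1)^90 + 6*(T 1)^92 + 5*(T 1)^94 + 3*(T 1)^96 + 8*(T 1)^98 + 11*(T 1)^100 + 12*(T 1)^102 + 17*(T 1)^104 + 18*(T 1)^106 + 20*(T 1)^108 + 21*(T 1)^110 + 22*(T 1)^112 + 30*(T 1)^114 + 30*(T 1)^116 + 28*(T 1)^118 + 26*(T 1)^120 + 23*(T 1)^122 + 23*(T 1)^124 + 29*(T 1)^126 + 29*(T 1)^128 + 20*(T 1)^130 + 19*(T 1)^132 + 19*(T 1)^134 + 11*(T 1)^136 + 9*(T 1)^138 + 10*(T 1)^140 + 5*(T 1)^142 + (T 1)^144) : LL) * h5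
  · linear_combination ((3*(T 1)^91 + 5*(T 1)^93 + 4*(T 1)^95 + 5*(T 1)^97 + 6*(T 1)^99 + 10*(T 1)^101 + 13*(T 1)^103 + 12*(T 1)^105 + 12*(T 1)^107 + 17*(T 1)^109 + 25*(T 1)^111 + 23*(T 1)^113 + 23*(T 1)^115 + 28*(T 1)^117 + 25*(T 1)^119 + 27*(T 1)^121 + 23*(T 1)^123 + 21*(T 1)^125 + 24*(T 1)^127 + 21*(T 1)^129 + 20*(T 1)^131 + 17*(T 1)^133 + 17*(T 1)^135 + 11*(T 1)^137 + 10*(T 1)^139 + 6*(T 1)^141 + 2*(T 1)^143 + 2*(T 1)^145) : LL) * h5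
  · linear_combination ((3*(T 1)^88 + 6*(T 1)^90 + 6*(T 1)^92 + 6*(T 1)^94 + 6*(T 1)^96 + 9*(T 1)^98 + 11*(T 1)^100 + 10*(T 1)^102 + 12*(T 1)^104 + 14*(T 1)^106 + 15*(T 1)^108 + 19*(T 1)^110 + 22*(T 1)^112 + 23*(T 1)^114 + 21*(T 1)^116 + 14*(T 1)^118 + 19*(T 1)^120 + 19*(T 1)^122 + 18*(T 1)^124 + 12*(T 1)^126 + 13*(T 1)^128 + 12*(T 1)^130 + 12*(T 1)^132 + 11*(T 1)^134 + 6*(T 1)^136 + 7*(T 1)^138 + 3*(T 1)^140 + 3*(T 1)^142) : LL) * h5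
  · linear_combination ((3*(T 1)^89 + 4*(T 1)^91 + 6*(T 1)^93 + 6*(T 1)^95 + 3*(T 1)^97 + 8*(T 1)^99 + 11*(T 1)^101 + 10*(T 1)^103 + 13*(T 1)^105 + 18*(T 1)^107 + 20*(T 1)^109 + 25*(T 1)^111 + 23*(T 1)^113 + 26*(T 1)^115 + 32*(T 1)^117 + 22*(T 1)^119 + 23*(T 1)^121 + 25*(T 1)^123 + 22*(T 1)^125 + 23*(T 1)^127 + 20*(T 1)^129 + 13*(T 1)^131 + 19*(T 1)^133 + 15*(T 1)^135 + 13*(T 1)^137 + 8*(T 1)^139 + 6*(T 1)^141 + 4*(T 1)^143 + (T 1)^145) : LL) * h5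
  · linear_combination ((3*(T 1)^90 + 3*(T 1)^92 + 3*(T 1)^94 + 7*(T 1)^96 + 5*(T 1)^98 + 8*(T 1)^100 + 13*(T 1)^102 + 12*(T 1)^104 + 19*(T 1)^106 + 20*(T 1)^108 + 24*(T 1)^110 + 22*(T 1)^112 + 28*(T 1)^114 + 33*(T 1)^116 + 30*(T 1)^118 + 33*(T 1)^120 + 29*(T 1)^122 + 32*(T 1)^124 + 28*(T 1)^126 + 27*(T 1)^128 + 27*(T 1)^130 + 18*(T 1)^132 + 21*(T 1)^134 + 13*(T 1)^136 + 9*(T 1)^138 + 8*(T 1)^140 + 5*(T 1)^142 + 2*(T 1)^144) : LL) * h5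
  · linear_combination ((3*(T 1)^87 + 3*(T 1)^89 + 2*(T 1)^91 + 8*(T 1)^93 + 9*(T 1)^95 + 4*(T 1)^97 + 8*(T 1)^99 + 13*(T 1)^101 + 17*(T 1)^103 + 16*(T 1)^105 + 18*(T 1)^107 + 21*(T 1)^109 + 20*(T 1)^111 + 30*(T 1)^113 + 27*(T 1)^115 + 26*(T 1)^117 + 24*(T 1)^119 + 21*(T 1)^121 + 23*(T 1)^123 + 20*(T 1)^125 + 23*(T 1)^127 + 17*(T 1)^129 + 10*(T 1)^131 + 12*(T 1)^133 + 4*(T 1)^135 + 7*(T 1)^137 + 3*(T 1)^139 + 3*(T 1)^141) : LL) * h5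
  · linear_combination ((3*(T 1)^88 + 3*(T 1)^90 + 4*(T 1)^92 + 5*(T 1)^94 + 5*(T 1)^96 + 7*(T 1)^98 + 11*(T 1)^100 + 9*(T 1)^102 + 17*(T 1)^104 + 20*(T 1)^106 + 22*(T 1)^108 + 16*(T 1)^110 + 28*(T 1)^112 + 32*(T 1)^114 + 32*(T 1)^116 + 30*(T 1)^118 + 32*(T 1)^120 + 28*(T 1)^122 + 31*(T 1)^124 + 28*(T 1)^126 + 33*(T 1)^128 + 24*(T 1)^130 + 20*(T 1)^132 + 18*(T 1)^134 + 13*(T 1)^136 + 10*(T 1)^138 + 10*(T 1)^140 + 4*(T 1)^142 + (T 1)^144) : LL) * h5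

lemma p0 : prodw [1] = m0 := by
  show _ * 1 = _
  rw [mul_one]
  rfl

lemma p1 : prodw [2] = m1 := by
  show _ * 1 = _
  rw [mul_one]
  rfl

lemma p2 : prodw [1, 2] = m2 := by
  rw [show ([1, 2] : List ℕ) = [1] ++ [2] from rfl, prodw_append, p0, p1]
  exact s0

lemma p3 : prodw [3] = m3 := by
  show _ * 1 = _
  rw [mul_one]
  rfl

lemma p4 : prodw [3, 2] = m4 := by
  rw [show ([3, 2] : List ℕ) = [3] ++ [2] from rfl, prodw_append, p3, p1]
  exact s1

lemma p5 : prodw [1, 3, 2] = m5 := by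
  rw [show ([1, 3, 2] : List ℕ) = [1] ++ [3, 2] from rfl, prodw_append, p0, p4]
  exact s2

lemma p6 : prodw [1, 2, 1, 3, 2] = m6 := by
  rw [show ([1, 2, 1, 3, 2] : List ℕ) = [1, 2] ++ [1, 3, 2] from rfl, prodw_append, p2, p5]
  exact s3

lemma p7 : prodw [2, 1] = m7 := by
  rw [show ([2, 1] : List ℕ) = [2] ++ [1] from rfl, prodw_append, p1, p0]
  exact s4

lemma p8 : prodw [1, 3] = m8 := by
  rw [show ([1, 3] : List ℕ) = [1] ++ [3] from rfl, prodw_append, p0, p3]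
  exact s5

lemma p9 : prodw [3, 1, 3] = m9 := by
  rw [show ([3, 1, 3] : List ℕ) = [3] ++ [1, 3] from rfl, prodw_append, p3, p8]
  exact s6

lemma p10 : prodw [2, 1, 3, 1, 3] = m10 := by
  rw [show ([2, 1, 3, 1, 3] : List ℕ) = [2, 1] ++ [3, 1, 3] from rfl, prodw_append, p7, p9]
  exact s7

lemma p11 : prodw [1, 2, 1, 3, 2, 2, 1, 3, 1, 3] = m11 := by
  rw [show ([1, 2, 1, 3, 2, 2, 1, 3, 1, 3] : List ℕ) = [1, 2, 1, 3, 2] ++ [2, 1, 3, 1, 3] from rfl, prodw_append, p6, p10]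
  exact s8

lemma p12 : prodw [2, 2] = m12 := by
  rw [show ([2, 2] : List ℕ) = [2] ++ [2] from rfl, prodw_append, p1]
  exact s9

lemma p13 : prodw [2, 1, 3] = m13 := by
  rw [show ([2, 1, 3] : List ℕ) = [2] ++ [1, 3] from rfl, prodw_append, p1, p8]
  exact s10

lemma p14 : prodw [2, 2, 2, 1, 3] = m14 := by
  rw [show ([2, 2, 2, 1, 3] : List ℕ) = [2, 2] ++ [2, 1, 3] from rfl, prodw_append, p12, p13]
  exact s11

lemma p15 : prodw [1, 2, 2] = m15 := by
  rw [show ([1, 2, 2] : List ℕ) = [1] ++ [2, 2] from rfl, prodw_append, p0, p12]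
  exact s12

lemma p16 : prodw [3, 1] = m8 := by
  rw [show ([3, 1] : List ℕ) = [3] ++ [1] from rfl, prodw_append, p3, p0]
  exact s13

lemma p17 : prodw [1, 3, 1] = m16 := by
  rw [show ([1, 3, 1] : List ℕ) = [1] ++ [3, 1] from rfl, prodw_append, p0, p16]
  exact s14

lemma p18 : prodw [1, 2, 2, 1, 3, 1] = m17 := by
  rw [show ([1, 2, 2, 1, 3, 1] : List ℕ) = [1, 2, 2] ++ [1, 3, 1] from rfl, prodw_append, p15, p17]
  exact s15

lemma p19 : prodw [2, 2, 2, 1, 3, 1, 2, 2, 1, 3, 1] = m18 := by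
  rw [show ([2, 2, 2, 1, 3, 1, 2, 2, 1, 3, 1] : List ℕ) = [2, 2, 2, 1, 3] ++ [1, 2, 2, 1, 3, 1] from rfl, prodw_append, p14, p18]
  exact s16

lemma p20 : prodw [1, 2, 1, 3, 2, 2, 1, 3, 1, 3, 2, 2, 2, 1, 3, 1, 2, 2, 1, 3, 1] = m19 := by
  rw [show ([1, 2, 1, 3, 2, 2, 1, 3, 1, 3, 2, 2, 2, 1, 3, 1, 2, 2, 1, 3, 1] : List ℕ) = [1, 2, 1, 3, 2, 2, 1, 3, 1, 3] ++ [2, 2, 2, 1, 3, 1, 2, 2, 1, 3, 1] from rfl, prodw_append, p11, p19]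
  exact s17

lemma p21 : prodw [2, 2, 1, 3, 1] = m20 := by
  rw [show ([2, 2, 1, 3, 1] : List ℕ) = [2, 2] ++ [1, 3, 1] from rfl, prodw_append, p12, p17]
  exact s18

lemma p22 : prodw [3, 1, 2] = m5 := by
  rw [show ([3, 1, 2] : List ℕ) = [3] ++ [1, 2] from rfl, prodw_append, p3, p2]
  exact s19

lemma p23 : prodw [3, 2, 1] = m21 := by
  rw [show ([3, 2, 1] : List ℕ) = [3] ++ [2, 1] from rfl, prodw_append, p3, p7]
  exact s20

lemma p24 : prodw [3, 1, 2, 3, 2, 1] = m22 := by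
  rw [show ([3, 1, 2, 3, 2, 1] : List ℕ) = [3, 1, 2] ++ [3, 2, 1] from rfl, prodw_append, p22, p23]
  exact s21

lemma p25 : prodw [2, 2, 1, 3, 1, 3, 1, 2, 3, 2, 1] = m23 := by
  rw [show ([2, 2, 1, 3, 1, 3, 1, 2, 3, 2, 1] : List ℕ) = [2, 2, 1, 3, 1] ++ [3, 1, 2, 3, 2, 1] from rfl, prodw_append, p21, p24]
  exact s22

lemma p26 : prodw [3, 2, 2] = m24 := by
  rw [show ([3, 2, 2] : List ℕ) = [3] ++ [2, 2] from rfl, prodw_append, p3, p12]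
  exact s23

lemma p27 : prodw [1, 2, 3, 2, 2] = m25 := by
  rw [show ([1, 2, 3, 2, 2] : List ℕ) = [1, 2] ++ [3, 2, 2] from rfl, prodw_append, p2, p26]
  exact s24

lemma p28 : prodw [2, 3, 2] = m26 := by
  rw [show ([2, 3, 2] : List ℕ) = [2] ++ [3, 2] from rfl, prodw_append, p1, p4]
  exact s25

lemma p29 : prodw [1, 3, 1, 2, 3, 2] = m27 := by
  rw [show ([1, 3, 1, 2, 3, 2] : List ℕ) = [1, 3, 1] ++ [2, 3, 2] from rfl, prodw_append, p17, p28]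
  exact s26

lemma p30 : prodw [1, 2, 3, 2, 2, 1, 3, 1, 2, 3, 2] = m28 := by
  rw [show ([1, 2, 3, 2, 2, 1, 3, 1, 2, 3, 2] : List ℕ) = [1, 2, 3, 2, 2] ++ [1, 3, 1, 2, 3, 2] from rfl, prodw_append, p27, p29]
  exact s27

lemma p31 : prodw [2, 2, 1, 3, 1, 3, 1, 2, 3, 2, 1, 1, 2, 3, 2, 2, 1, 3, 1, 2, 3, 2] = m29 := by
  rw [show ([2, 2, 1, 3, 1, 3, 1, 2, 3, 2, 1, 1, 2, 3, 2, 2, 1, 3, 1, 2, 3, 2] : List ℕ) = [2, 2, 1, 3, 1, 3, 1, 2, 3, 2, 1] ++ [1, 2, 3, 2, 2, 1, 3, 1, 2, 3, 2] from rfl, prodw_append, p25, p30]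
  exact s28

lemma p32 : prodw [1, 2, 1, 3, 2, 2, 1, 3, 1, 3, 2, 2, 2, 1, 3, 1, 2, 2, 1, 3, 1, 2, 2, 1, 3, 1, 3, 1, 2, 3, 2, 1, 1, 2, 3, 2, 2, 1, 3, 1, 2, 3, 2] = m30 := by
  rw [show ([1, 2, 1, 3, 2, 2, 1, 3, 1, 3, 2, 2, 2, 1, 3, 1, 2, 2, 1, 3, 1, 2, 2, 1, 3, 1, 3, 1, 2, 3, 2, 1, 1, 2, 3, 2, 2, 1, 3, 1, 2, 3, 2] : List ℕ) = [1, 2, 1, 3, 2, 2, 1, 3, 1, 3, 2, 2, 2, 1, 3, 1, 2, 2, 1, 3, 1] ++ [2, 2, 1, 3, 1, 3, 1, 2, 3, 2, 1, 1, 2, 3, 2, 2, 1, 3, 1, 2, 3, 2] from rfl, prodw_append, p20, p31]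
  exact s29

lemma p33 : prodw [2, 2, 2] = m31 := by
  rw [show ([2, 2, 2] : List ℕ) = [2] ++ [2, 2] from rfl, prodw_append, p1, p12]
  exact s30

lemma p34 : prodw [2, 2, 2, 1, 3, 1] = m32 := by
  rw [show ([2, 2, 2, 1, 3, 1] : List ℕ) = [2, 2, 2] ++ [1, 3, 1] from rfl, prodw_append, p33, p17]
  exact s31

lemma p35 : prodw [2, 1, 3, 1, 3, 2, 2, 2, 1, 3, 1] = m33 := by
  rw [show ([2, 1, 3, 1, 3, 2, 2, 2, 1, 3, 1] : List ℕ) = [2, 1, 3, 1, 3] ++ [2, 2, 2, 1, 3, 1] from rfl, prodw_append, p10, p34]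
  exact s32

lemma p36 : prodw [2, 2, 1, 3, 1, 2, 2, 2, 1, 3, 1] = m34 := by
  rw [show ([2, 2, 1, 3, 1, 2, 2, 2, 1, 3, 1] : List ℕ) = [2, 2, 1, 3, 1] ++ [2, 2, 2, 1, 3, 1] from rfl, prodw_append, p21, p34]
  exact s33

lemma p37 : prodw [2, 1, 3, 1, 3, 2, 2, 2, 1, 3, 1, 2, 2, 1, 3, 1, 2, 2, 2, 1, 3, 1] = m35 := by
  rw [show ([2, 1, 3, 1, 3, 2, 2, 2, 1, 3, 1, 2, 2, 1, 3, 1, 2, 2, 2, 1, 3, 1] : List ℕ) = [2, 1, 3, 1, 3, 2, 2, 2, 1, 3, 1] ++ [2, 2, 1, 3, 1, 2, 2, 2, 1, 3, 1] from rfl, prodw_append, p35, p36]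
  exact s34

lemma p38 : prodw [2, 3] = m36 := by
  rw [show ([2, 3] : List ℕ) = [2] ++ [3] from rfl, prodw_append, p1, p3]
  exact s35

lemma p39 : prodw [2, 2, 1] = m37 := by
  rw [show ([2, 2, 1] : List ℕ) = [2] ++ [2, 1] from rfl, prodw_append, p1, p7]
  exact s36

lemma p40 : prodw [2, 3, 2, 2, 1] = m38 := by
  rw [show ([2, 3, 2, 2, 1] : List ℕ) = [2, 3] ++ [2, 2, 1] from rfl, prodw_append, p38, p39]
  exact s37

lemma p41 : prodw [3, 1, 2, 3, 2, 2] = m39 := by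
  rw [show ([3, 1, 2, 3, 2, 2] : List ℕ) = [3, 1, 2] ++ [3, 2, 2] from rfl, prodw_append, p22, p26]
  exact s38

lemma p42 : prodw [2, 3, 2, 2, 1, 3, 1, 2, 3, 2, 2] = m40 := by
  rw [show ([2, 3, 2, 2, 1, 3, 1, 2, 3, 2, 2] : List ℕ) = [2, 3, 2, 2, 1] ++ [3, 1, 2, 3, 2, 2] from rfl, prodw_append, p40, p41]
  exact s39

lemma p43 : prodw [1, 2, 3] = m41 := by
  rw [show ([1, 2, 3] : List ℕ) = [1] ++ [2, 3] from rfl, prodw_append, p0, p38]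
  exact s40

lemma p44 : prodw [1, 3, 1, 2, 3] = m42 := by
  rw [show ([1, 3, 1, 2, 3] : List ℕ) = [1, 3] ++ [1, 2, 3] from rfl, prodw_append, p8, p43]
  exact s41

lemma p45 : prodw [1, 1] = m43 := by
  rw [show ([1, 1] : List ℕ) = [1] ++ [1] from rfl, prodw_append, p0]
  exact s42

lemma p46 : prodw [2, 1, 1] = m44 := by
  rw [show ([2, 1, 1] : List ℕ) = [2] ++ [1, 1] from rfl, prodw_append, p1, p45]
  exact s43

lemma p47 : prodw [2, 1, 1, 3, 1, 3] = m45 := by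
  rw [show ([2, 1, 1, 3, 1, 3] : List ℕ) = [2, 1, 1] ++ [3, 1, 3] from rfl, prodw_append, p46, p9]
  exact s44

lemma p48 : prodw [1, 3, 1, 2, 3, 2, 1, 1, 3, 1, 3] = m46 := by
  rw [show ([1, 3, 1, 2, 3, 2, 1, 1, 3, 1, 3] : List ℕ) = [1, 3, 1, 2, 3] ++ [2, 1, 1, 3, 1, 3] from rfl, prodw_append, p44, p47]
  exact s45

lemma p49 : prodw [2, 3, 2, 2, 1, 3, 1, 2, 3, 2, 2, 1, 3, 1, 2, 3, 2, 1, 1, 3, 1, 3] = m47 := by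
  rw [show ([2, 3, 2, 2, 1, 3, 1, 2, 3, 2, 2, 1, 3, 1, 2, 3, 2, 1, 1, 3, 1, 3] : List ℕ) = [2, 3, 2, 2, 1, 3, 1, 2, 3, 2, 2] ++ [1, 3, 1, 2, 3, 2, 1, 1, 3, 1, 3] from rfl, prodw_append, p42, p48]
  exact s46

lemma p50 : prodw [2, 1, 3, 1, 3, 2, 2, 2, 1, 3, 1, 2, 2, 1, 3, 1, 2, 2, 2, 1, 3, 1, 2, 3, 2, 2, 1, 3, 1, 2, 3, 2, 2, 1, 3, 1, 2, 3, 2, 1, 1, 3, 1, 3] = m48 := by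
  rw [show ([2, 1, 3, 1, 3, 2, 2, 2, 1, 3, 1, 2, 2, 1, 3, 1, 2, 2, 2, 1, 3, 1, 2, 3, 2, 2, 1, 3, 1, 2, 3, 2, 2, 1, 3, 1, 2, 3, 2, 1, 1, 3, 1, 3] : List ℕ) = [2, 1, 3, 1, 3, 2, 2, 2, 1, 3, 1, 2, 2, 1, 3, 1, 2, 2, 2, 1, 3, 1] ++ [2, 3, 2, 2, 1, 3, 1, 2, 3, 2, 2, 1, 3, 1, 2, 3, 2, 1, 1, 3, 1, 3] from rfl, prodw_append, p37, p49]
  exact s47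

lemma p51 : prodw [1, 2, 1, 3, 2, 2, 1, 3, 1, 3, 2, 2, 2, 1, 3, 1, 2, 2, 1, 3, 1, 2, 2, 1, 3, 1, 3, 1, 2, 3, 2, 1, 1, 2, 3, 2, 2, 1, 3, 1, 2, 3, 2, 2, 1, 3, 1, 3, 2, 2, 2, 1, 3, 1, 2, 2, 1, 3, 1, 2, 2, 2, 1, 3, 1, 2, 3, 2, 2, 1, 3, 1, 2, 3, 2, 2, 1, 3, 1, 2, 3, 2, 1, 1, 3, 1, 3] = m49 := by
  rw [show ([1, 2, 1, 3, 2, 2, 1, 3, 1, 3, 2, 2, 2, 1, 3, 1, 2, 2, 1, 3, 1, 2, 2, 1, 3, 1, 3, 1, 2, 3, 2, 1, 1, 2, 3, 2, 2, 1, 3, 1, 2, 3, 2, 2, 1, 3, 1, 3, 2, 2, 2, 1, 3, 1, 2, 2, 1, 3, 1, 2, 2, 2, 1, 3, 1, 2, 3, 2, 2, 1, 3, 1, 2, 3, 2, 2, 1, 3, 1, 2, 3, 2, 1, 1, 3, 1, 3] : List ℕ) = [1, 2, 1, 3, 2, 2, 1, 3, 1, 3, 2, 2, 2, 1, 3, 1,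 2, 2, 1, 3, 1, 2, 2, 1, 3, 1, 3, 1, 2, 3, 2, 1, 1, 2, 3, 2, 2, 1, 3, 1, 2, 3, 2] ++ [2, 1, 3, 1, 3, 2, 2, 2, 1, 3, 1, 2, 2, 1, 3, 1, 2, 2, 2, 1, 3, 1, 2, 3, 2, 2, 1, 3, 1, 2, 3, 2, 2, 1, 3, 1, 2, 3, 2, 1, 1, 3, 1, 3] from rfl, prodw_append, p32, p50]
  exact s48

lemma p52 : prodw [1, 3, 2, 2, 1] = m50 := by
  rw [show ([1, 3, 2, 2, 1] : List ℕ) = [1, 3] ++ [2, 2, 1] from rfl, prodw_append, p8, p39]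
  exact s49

lemma p53 : prodw [3, 1, 2, 2, 1] = m50 := by
  rw [show ([3, 1, 2, 2, 1] : List ℕ) = [3, 1] ++ [2, 2, 1] from rfl, prodw_append, p16, p39]
  exact s49

lemma p54 : prodw [1, 3, 2, 2, 1, 3, 1, 2, 2, 1] = m51 := by
  rw [show ([1, 3, 2, 2, 1, 3, 1, 2, 2, 1] : List ℕ) = [1, 3, 2, 2, 1] ++ [3, 1, 2, 2, 1] from rfl, prodw_append, p52, p53]
  exact s50

lemma p55 : prodw [3, 1, 2, 2, 2] = m52 := by
  rw [show ([3, 1, 2, 2, 2] : List ℕ) = [3, 1] ++ [2, 2, 2] from rfl, prodw_append, p16, p33]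
  exact s51

lemma p56 : prodw [1, 3, 2, 2, 1, 3] = m53 := by
  rw [show ([1, 3, 2, 2, 1, 3] : List ℕ) = [1, 3, 2] ++ [2, 1, 3] from rfl, prodw_append, p5, p13]
  exact s52

lemma p57 : prodw [3, 1, 2, 2, 2, 1, 3, 2, 2, 1, 3] = m54 := by
  rw [show ([3, 1, 2, 2, 2, 1, 3, 2, 2, 1, 3] : List ℕ) = [3, 1, 2, 2, 2] ++ [1, 3, 2, 2, 1, 3] from rfl, prodw_append, p55, p56]
  exact s53

lemma p58 : prodw [1, 3, 2, 2, 1, 3, 1, 2, 2, 1, 3, 1, 2, 2, 2, 1, 3, 2, 2, 1, 3] = m55 := by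
  rw [show ([1, 3, 2, 2, 1, 3, 1, 2, 2, 1, 3, 1, 2, 2, 2, 1, 3, 2, 2, 1, 3] : List ℕ) = [1, 3, 2, 2, 1, 3, 1, 2, 2, 1] ++ [3, 1, 2, 2, 2, 1, 3, 2, 2, 1, 3] from rfl, prodw_append, p54, p57]
  exact s54

lemma p59 : prodw [2, 1, 2] = m56 := by
  rw [show ([2, 1, 2] : List ℕ) = [2] ++ [1, 2] from rfl, prodw_append, p1, p2]
  exact s55

lemma p60 : prodw [1, 3, 2, 1, 2] = m57 := by
  rw [show ([1, 3, 2, 1, 2] : List ℕ) = [1, 3] ++ [2, 1, 2] from rfl, prodw_append, p8, p59]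
  exact s56

lemma p61 : prodw [1, 3, 1, 3, 2, 1] = m58 := by
  rw [show ([1, 3, 1, 3, 2, 1] : List ℕ) = [1, 3, 1] ++ [3, 2, 1] from rfl, prodw_append, p17, p23]
  exact s57

lemma p62 : prodw [1, 3, 2, 1, 2, 1, 3, 1, 3, 2, 1] = m59 := by
  rw [show ([1, 3, 2, 1, 2, 1, 3, 1, 3, 2, 1] : List ℕ) = [1, 3, 2, 1, 2] ++ [1, 3, 1, 3, 2, 1] from rfl, prodw_append, p60, p61]
  exact s58

lemma p63 : prodw [2, 1, 3, 1, 2] = m60 := by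
  rw [show ([2, 1, 3, 1, 2] : List ℕ) = [2, 1] ++ [3, 1, 2] from rfl, prodw_append, p7, p22]
  exact s59

lemma p64 : prodw [3, 2, 1, 1, 3, 2] = m61 := by
  rw [show ([3, 2, 1, 1, 3, 2] : List ℕ) = [3, 2, 1] ++ [1, 3, 2] from rfl, prodw_append, p23, p5]
  exact s60

lemma p65 : prodw [2, 1, 3, 1, 2, 3, 2, 1, 1, 3, 2] = m62 := by
  rw [show ([2, 1, 3, 1, 2, 3, 2, 1, 1, 3, 2] : List ℕ) = [2, 1, 3, 1, 2] ++ [3, 2, 1, 1, 3, 2] from rfl, prodw_append, p63, p64]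
  exact s61

lemma p66 : prodw [1, 3, 2, 1, 2, 1, 3, 1, 3, 2, 1, 2, 1, 3, 1, 2, 3, 2, 1, 1, 3, 2] = m63 := by
  rw [show ([1, 3, 2, 1, 2, 1, 3, 1, 3, 2, 1, 2, 1, 3, 1, 2, 3, 2, 1, 1, 3, 2] : List ℕ) = [1, 3, 2, 1, 2, 1, 3, 1, 3, 2, 1] ++ [2, 1, 3, 1, 2, 3, 2, 1, 1, 3, 2] from rfl, prodw_append, p62, p65]
  exact s62

lemma p67 : prodw [1, 3, 2, 2, 1, 3, 1, 2, 2, 1, 3, 1, 2, 2, 2, 1, 3, 2, 2, 1, 3, 1, 3, 2, 1, 2, 1, 3, 1, 3, 2, 1, 2, 1, 3, 1, 2, 3, 2, 1, 1, 3, 2] = m64 := by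
  rw [show ([1, 3, 2, 2, 1, 3, 1, 2, 2, 1, 3, 1, 2, 2, 2, 1, 3, 2, 2, 1, 3, 1, 3, 2, 1, 2, 1, 3, 1, 3, 2, 1, 2, 1, 3, 1, 2, 3, 2, 1, 1, 3, 2] : List ℕ) = [1, 3, 2, 2, 1, 3, 1, 2, 2, 1, 3, 1, 2, 2, 2, 1, 3, 2, 2, 1, 3] ++ [1, 3, 2, 1, 2, 1, 3, 1, 3, 2, 1, 2, 1, 3, 1, 2, 3, 2, 1, 1, 3, 2] from rfl, prodw_append, p58, p66]
  exact s63

lemma p68 : prodw [3, 3, 2] = m65 := by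
  rw [show ([3, 3, 2] : List ℕ) = [3] ++ [3, 2] from rfl, prodw_append, p3, p4]
  exact s64

lemma p69 : prodw [2, 1, 3, 3, 2] = m66 := by
  rw [show ([2, 1, 3, 3, 2] : List ℕ) = [2, 1] ++ [3, 3, 2] from rfl, prodw_append, p7, p68]
  exact s65

lemma p70 : prodw [2, 1, 3, 3, 2, 2] = m67 := by
  rw [show ([2, 1, 3, 3, 2, 2] : List ℕ) = [2, 1, 3] ++ [3, 2, 2] from rfl, prodw_append, p13, p26]
  exact s66

lemma p71 : prodw [2, 1, 3, 3, 2, 2, 1, 3, 3, 2, 2] = m68 := by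
  rw [show ([2, 1, 3, 3, 2, 2, 1, 3, 3, 2, 2] : List ℕ) = [2, 1, 3, 3, 2] ++ [2, 1, 3, 3, 2, 2] from rfl, prodw_append, p69, p70]
  exact s67

lemma p72 : prodw [2, 1, 1, 3, 2, 1] = m69 := by
  rw [show ([2, 1, 1, 3, 2, 1] : List ℕ) = [2, 1, 1] ++ [3, 2, 1] from rfl, prodw_append, p46, p23]
  exact s68

lemma p73 : prodw [1, 3, 1, 2, 3, 2, 1, 1, 3, 2, 1] = m70 := by
  rw [show ([1, 3, 1, 2, 3, 2, 1, 1, 3, 2, 1] : List ℕ) = [1, 3, 1, 2, 3] ++ [2, 1, 1, 3, 2, 1] from rfl, prodw_append, p44, p72]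
  exact s69

lemma p74 : prodw [2, 1, 3, 3, 2, 2, 1, 3, 3, 2, 2, 1, 3, 1, 2, 3, 2, 1, 1, 3, 2, 1] = m71 := by
  rw [show ([2, 1, 3, 3, 2, 2, 1, 3, 3, 2, 2, 1, 3, 1, 2, 3, 2, 1, 1, 3, 2, 1] : List ℕ) = [2, 1, 3, 3, 2, 2, 1, 3, 3, 2, 2] ++ [1, 3, 1, 2, 3, 2, 1, 1, 3, 2, 1] from rfl, prodw_append, p71, p73]
  exact s70

lemma p75 : prodw [2, 1, 2, 1, 3, 1] = m72 := by
  rw [show ([2, 1, 2, 1, 3, 1] : List ℕ) = [2, 1, 2] ++ [1, 3, 1] from rfl, prodw_append, p59, p17]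
  exact s71

lemma p76 : prodw [2, 1, 3, 1, 3, 2, 1, 2, 1, 3, 1] = m73 := by
  rw [show ([2, 1, 3, 1, 3, 2, 1, 2, 1, 3, 1] : List ℕ) = [2, 1, 3, 1, 3] ++ [2, 1, 2, 1, 3, 1] from rfl, prodw_append, p10, p75]
  exact s72

lemma p77 : prodw [3, 2, 2, 1, 3] = m74 := by
  rw [show ([3, 2, 2, 1, 3] : List ℕ) = [3, 2] ++ [2, 1, 3] from rfl, prodw_append, p4, p13]
  exact s73

lemma p78 : prodw [3, 2, 2, 1, 3, 2, 2, 2, 1, 3, 1] = m75 := by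
  rw [show ([3, 2, 2, 1, 3, 2, 2, 2, 1, 3, 1] : List ℕ) = [3, 2, 2, 1, 3] ++ [2, 2, 2, 1, 3, 1] from rfl, prodw_append, p77, p34]
  exact s74

lemma p79 : prodw [2, 1, 3, 1, 3, 2, 1, 2, 1, 3, 1, 3, 2, 2, 1, 3, 2, 2, 2, 1, 3, 1] = m76 := by
  rw [show ([2, 1, 3, 1, 3, 2, 1, 2, 1, 3, 1, 3, 2, 2, 1, 3, 2, 2, 2, 1, 3, 1] : List ℕ) = [2, 1, 3, 1, 3, 2, 1, 2, 1, 3, 1] ++ [3, 2, 2, 1, 3, 2, 2, 2, 1, 3, 1] from rfl, prodw_append, p76, p78]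
  exact s75

lemma p80 : prodw [2, 1, 3, 3, 2, 2, 1, 3, 3, 2, 2, 1, 3, 1, 2, 3, 2, 1, 1, 3, 2, 1, 2, 1, 3, 1, 3, 2, 1, 2, 1, 3, 1, 3, 2, 2, 1, 3, 2, 2, 2, 1, 3, 1] = m77 := by
  rw [show ([2, 1, 3, 3, 2, 2, 1, 3, 3, 2, 2, 1, 3, 1, 2, 3, 2, 1, 1, 3, 2, 1, 2, 1, 3, 1, 3, 2, 1, 2, 1, 3, 1, 3, 2, 2, 1, 3, 2, 2, 2, 1, 3, 1] : List ℕ) = [2, 1, 3, 3, 2, 2, 1, 3, 3, 2, 2, 1, 3, 1, 2, 3, 2, 1, 1, 3, 2, 1] ++ [2, 1, 3, 1, 3, 2, 1, 2, 1, 3, 1, 3, 2, 2, 1, 3, 2, 2, 2, 1, 3, 1] from rfl, prodw_append, p74, p79]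
  exact s76

lemma p81 : prodw [1, 3, 2, 2, 1, 3, 1, 2, 2, 1, 3, 1, 2, 2, 2, 1, 3, 2, 2, 1, 3, 1, 3, 2, 1, 2, 1, 3, 1, 3, 2, 1, 2, 1, 3, 1, 2, 3, 2, 1, 1, 3, 2, 2, 1, 3, 3, 2, 2, 1, 3, 3, 2, 2, 1, 3, 1, 2, 3, 2, 1, 1, 3, 2, 1, 2, 1, 3, 1, 3, 2, 1, 2, 1, 3, 1, 3, 2, 2, 1, 3, 2, 2, 2, 1, 3, 1] = m78 := by
  rw [show ([1, 3, 2, 2, 1, 3, 1, 2, 2, 1, 3, 1, 2, 2, 2, 1, 3, 2, 2, 1, 3, 1, 3, 2, 1, 2, 1, 3, 1, 3, 2, 1, 2, 1, 3, 1, 2, 3, 2, 1, 1, 3, 2, 2, 1, 3, 3, 2, 2, 1, 3, 3, 2, 2, 1, 3, 1, 2, 3, 2, 1, 1, 3, 2, 1, 2, 1, 3, 1, 3, 2, 1, 2, 1, 3, 1, 3, 2, 2, 1, 3, 2, 2, 2, 1, 3, 1] : List ℕ) = [1, 3, 2, 2, 1, 3, 1, 2, 2, 1, 3, 1, 2, 2,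 2, 1, 3, 2, 2, 1, 3, 1, 3, 2, 1, 2, 1, 3, 1, 3, 2, 1, 2, 1, 3, 1, 2, 3, 2, 1, 1, 3, 2] ++ [2, 1, 3, 3, 2, 2, 1, 3, 3, 2, 2, 1, 3, 1, 2, 3, 2, 1, 1, 3, 2, 1, 2, 1, 3, 1, 3, 2, 1, 2, 1, 3, 1, 3, 2, 2, 1, 3, 2, 2, 2, 1, 3, 1] from rfl, prodw_append, p67, p80]
  exact s77

lemma p82 : prodw [1, 2, 1, 3, 2, 2, 1, 3, 1, 3, 2, 2, 2, 1, 3, 1, 2, 2, 1, 3, 1, 2, 2, 1, 3, 1, 3, 1, 2, 3, 2, 1, 1, 2, 3, 2, 2, 1, 3, 1, 2, 3, 2, 2, 1, 3, 1, 3, 2, 2, 2, 1, 3, 1, 2, 2, 1, 3, 1, 2, 2, 2, 1, 3, 1, 2, 3, 2, 2, 1, 3, 1, 2, 3, 2, 2, 1, 3, 1, 2, 3, 2, 1, 1, 3, 1, 3, 1, 3, 2, 2, 1, 3, 1, 2, 2, 1, 3, 1, 2, 2, 2, 1, 3, 2, 2, 1, 3, 1, 3, 2, 1, 2, 1, 3,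 1, 3, 2, 1, 2, 1, 3, 1, 2, 3, 2, 1, 1, 3, 2, 2, 1, 3, 3, 2, 2, 1, 3, 3, 2, 2, 1, 3, 1, 2, 3, 2, 1, 1, 3, 2, 1, 2, 1, 3, 1, 3, 2, 1, 2, 1, 3, 1, 3, 2, 2, 1, 3, 2, 2, 2, 1, 3, 1] = m79 := by
  rw [show ([1, 2, 1, 3, 2, 2, 1, 3, 1, 3, 2, 2, 2, 1, 3, 1, 2, 2, 1, 3, 1, 2, 2, 1, 3, 1, 3, 1, 2, 3, 2, 1, 1, 2, 3, 2, 2, 1, 3, 1, 2, 3, 2, 2, 1, 3, 1, 3, 2, 2, 2, 1, 3, 1, 2, 2, 1, 3, 1, 2, 2, 2, 1, 3, 1, 2, 3, 2, 2, 1, 3, 1, 2, 3, 2, 2, 1, 3, 1, 2, 3, 2, 1, 1, 3, 1, 3, 1, 3, 2, 2, 1, 3, 1, 2, 2, 1, 3, 1, 2, 2, 2, 1, 3, 2, 2, 1, 3, 1, 3, 2, 1, 2, 1, 3, 1, 3, 2, 1, 2, 1, 3, 1, 2, 3, 2, 1, 1, 3, 2, 2, 1, 3, 3, 2, 2, 1,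 3, 3, 2, 2, 1, 3, 1, 2, 3, 2, 1, 1, 3, 2, 1, 2, 1, 3, 1, 3, 2, 1, 2, 1, 3, 1, 3, 2, 2, 1, 3, 2, 2, 2, 1, 3, 1] : List ℕ) = [1, 2, 1, 3, 2, 2, 1, 3, 1, 3, 2, 2, 2, 1, 3, 1, 2, 2, 1, 3, 1, 2, 2, 1, 3, 1, 3, 1, 2, 3, 2, 1, 1, 2, 3, 2, 2, 1, 3, 1, 2, 3, 2, 2, 1, 3, 1, 3, 2, 2, 2, 1, 3, 1, 2, 2, 1, 3, 1, 2, 2, 2, 1, 3, 1, 2, 3, 2, 2, 1, 3, 1, 2, 3, 2, 2, 1, 3, 1, 2, 3, 2, 1, 1, 3, 1, 3] ++ [1, 3, 2, 2, 1, 3, 1, 2, 2, 1, 3, 1, 2, 2, 2, 1, 3, 2, 2, 1, 3, 1, 3, 2, 1, 2, 1, 3, 1, 3, 2, 1, 2, 1, 3, 1, 2, 3, 2, 1, 1, 3, 2, 2, 1, 3, 3, 2, 2, 1, 3, 3, 2, 2, 1, 3, 1, 2, 3, 2, 1, 1, 3, 2, 1, 2, 1, 3, 1, 3, 2, 1, 2,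 1, 3, 1, 3, 2, 2, 1, 3, 2, 2, 2, 1, 3, 1] from rfl, prodw_append, p51, p81]
  exact s78

lemma final_eq : m79 = (-(T 116 : LL)) • Jmat (ZMod 5) := by
  have hT : (T 116 : LL) = (T 1)^116 := by rw [T_pow]; norm_num
  unfold m79 Jmat
  rw [hT, smul3]
  refine congrArg Matrix.of (Matrix.vec3_eq (Matrix.vec3_eq ?_ ?_ ?_) (Matrix.vec3_eq ?_ ?_ ?_) (Matrix.vec3_eq ?_ ?_ ?_))
  · ring1
  · ring1
  · linear_combination ((T 1:LL)^116) * h5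
  · ring1
  · linear_combination ((T 1:LL)^116) * h5
  · ring1
  · linear_combination ((T 1:LL)^116) * h5
  · ring1
  · ring1

/-- Over `(ℤ/5ℤ)[v,v⁻¹]`, the product of the Burau matrices along the word `W1`
equals `-v^116 · J`, the 5-Burau matrix of `Δ^29`. -/
theorem burau_word_product_W1_mod_five :
    (W1word.map (BurauB (ZMod 5))).prod = (-(T 116 : LaurentPolynomial (ZMod 5))) • Jmat (ZMod 5) := by
  rw [show (W1word.map (BurauB (ZMod 5))).prod = prodw W1word from rfl,
    show W1word = [1, 2, 1, 3, 2, 2, 1, 3, 1, 3, 2, 2, 2, 1, 3, 1, 2, 2, 1, 3, 1, 2, 2, 1, 3, 1, 3, 1, 2, 3, 2, 1, 1, 2, 3, 2, 2, 1, 3, 1, 2, 3, 2, 2, 1, 3, 1, 3, 2, 2, 2, 1, 3, 1, 2, 2, 1, 3, 1, 2, 2, 2, 1, 3, 1, 2, 3, 2, 2, 1, 3, 1, 2, 3, 2, 2, 1, 3, 1, 2, 3, 2, 1, 1, 3, 1, 3, 1, 3, 2, 2, 1, 3, 1, 2, 2, 1, 3, 1, 2, 2, 2, 1, 3, 2, 2,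 1, 3, 1, 3, 2, 1, 2, 1, 3, 1, 3, 2, 1, 2, 1, 3, 1, 2, 3, 2, 1, 1, 3, 2, 2, 1, 3, 3, 2, 2, 1, 3, 3, 2, 2, 1, 3, 1, 2, 3, 2, 1, 1, 3, 2, 1, 2, 1, 3, 1, 3, 2, 1, 2, 1, 3, 1, 3, 2, 2, 1, 3, 2, 2, 2, 1, 3, 1] from rfl, p82]
  exact final_eq
end

section
/- The kernel element found modulo 5 does not lie in the kernel modulo 7: over the Laurent polynomial ring (Z/7Z)[v,v^{-1}], the ordered product of the Burau matrices B_{i_1}*...*B_{i_162} along the word W = (1,3,1,3,1,3,2,2,1,3,3,2,2,1,3,3,2,2,2,1,3,1,3,2,1,2,1,3,1,3,2,1,2,1,3,1,3,2,2,2,1,3,3,2,2,1,3,3,2,2,1,3,1,3,1,2,3,2,1,1,3,2,1,2,1,3,1,3,2,1,2,1,3,1,3,2,2,1,3,2,2,1,3,2,2,2,1,3,3,2,2,1,3,3,2,2,1,3,1,2,3,2,1,1,3,2,1,2,1,3,1,3,2,1,2,1,3,1,2,3,2,1,1,3,2,2,1,3,3,2,2,1,3,3,2,2,2,1,3,2,2,1,3,1,2,3,2,2,1,3,1,2,3,2,2,1,3,1,2,3,2,1)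 is NOT equal to -v^{108} * J, where J is the 3x3 antidiagonal permutation matrix. -/
open LaurentPolynomial

/-- The word `W` in the Artin generators (of length 162). -/
def Wword : List ℕ :=
  [1, 3, 1, 3, 1, 3, 2, 2, 1, 3, 3, 2, 2, 1, 3, 3, 2, 2, 2, 1, 3, 1,
   3, 2, 1, 2, 1, 3, 1, 3, 2, 1, 2, 1, 3, 1, 3, 2, 2, 2, 1, 3, 3,
   2, 2, 1, 3, 3, 2, 2, 1, 3, 1, 3, 1, 2, 3, 2, 1, 1, 3, 2, 1, 2, 1, 3,
   1, 3, 2, 1, 2, 1, 3, 1, 3, 2, 2, 1, 3, 2, 2, 1, 3, 2, 2, 2, 1,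
   3, 3, 2, 2, 1, 3, 3, 2, 2, 1, 3, 1, 2, 3, 2, 1, 1, 3, 2, 1, 2, 1,
   3, 1, 3, 2, 1, 2, 1, 3, 1, 2, 3, 2, 1, 1, 3, 2, 2, 1, 3, 3, 2,
   2, 1, 3, 3, 2, 2, 2, 1, 3, 2, 2, 1, 3, 1, 2, 3, 2, 2, 1, 3, 1, 2, 3,
   2, 2, 1, 3, 1, 2, 3, 2, 1]

/-!
Specialise `v` to the unit `2` of `ZMod 7` via the evaluation map `(ZMod 7)[v,v⁻¹] → ZMod 7`,
which turns both sides into matrices over `ZMod 7`. Since `2 ^ 3 = 1` in `ZMod 7`, the right-hand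
side becomes `-J`, whereas the product of the 162 specialised Burau matrices, a finite
computation, is not `-J`.
-/

def burauAt {A : Type*} [CommRing A] (v : A) : ℕ → Matrix (Fin 3) (Fin 3) A
  | 1 => !![-v ^ 2, -v, 0; 0, 1, 0; 0, 0, 1]
  | 2 => !![1, 0, 0; -v, -v ^ 2, -v; 0, 0, 1]
  | 3 => !![1, 0, 0; 0, 1, 0; 0, -v, -v ^ 2]
  | _ => 1

theorem BurauB_eq_burauAt (R : Type) [CommRing R] (k : ℕ) : BurauB R k = burauAt (T 1) k := by
  rcases k with _ | _ | _ | _ | k <;> rfl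

theorem map_burauAt {A B : Type*} [CommRing A] [CommRing B] (f : A →+* B) (v : A) (k : ℕ) :
    (burauAt v k).map f = burauAt (f v) k := by
  rcases k with _ | _ | _ | _ | k <;>
    simp [burauAt, ← Matrix.ext_iff, Fin.forall_fin_succ]

theorem mapMatrix_prod_map_burauAt {A B : Type*} [CommRing A] [CommRing B] (f : A →+* B)
    (v : A) (w : List ℕ) :
    f.mapMatrix (w.map (burauAt v)).prod = (w.map (burauAt (f v))).prod := by
  simp [map_list_prod, List.map_map, Function.comp_def, map_burauAt]

theorem map_Jmat {R S : Type} [CommRing R] [CommRing S] (f : LaurentPolynomial R →+* S) :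
    (Jmat R).map f = !![0, 0, 1; 0, 1, 0; 1, 0, 0] := by
  simp [Jmat, ← Matrix.ext_iff, Fin.forall_fin_succ]

set_option maxRecDepth 100000 in
theorem prod_burauAt_two_ne :
    (Wword.map (burauAt (2 : ZMod 7))).prod ≠ -!![0, 0, 1; 0, 1, 0; 1, 0, (0 : ZMod 7)] := by
  decide

/-- Over `(ℤ/7ℤ)[v,v⁻¹]`, the product of the Burau matrices along the word `W` is NOT
equal to `-v^108 · J`: the kernel element found modulo 5 does not lie in the kernel modulo 7. -/
theorem burau_word_product_mod_seven_ne :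
    (Wword.map (BurauB (ZMod 7))).prod ≠ (-(T 108 : LaurentPolynomial (ZMod 7))) • Jmat (ZMod 7) := by
  let ev := eval₂ (RingHom.id (ZMod 7)) (ZMod.unitOfCoprime 2 (by norm_num))
  have hv : ev (T 1) = 2 := by simp [ev]
  have hv108 : ev (T 108) = 1 :=
    calc ev (T 108) = ev (T 1) ^ (3 * 36) := by rw [← map_pow, T_pow]; norm_num
      _ = ((2 : ZMod 7) ^ 3) ^ 36 := by rw [hv, pow_mul]
      _ = 1 := by rw [show (2 : ZMod 7) ^ 3 = 1 by decide, one_pow]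
  intro h
  have hev := congrArg ev.mapMatrix h
  rw [funext (BurauB_eq_burauAt (ZMod 7)), mapMatrix_prod_map_burauAt, hv,
    RingHom.mapMatrix_apply, Matrix.map_smul' _ _ _ (map_mul ev), map_neg, hv108, map_Jmat,
    neg_one_smul] at hev
  exact prod_burauAt_two_ne hev
end

section
/- If the reduced Burau representation of the n-strand braid group admitted a projlen-type statistic exactly proportional to Garside length, it would be faithful; the concrete instance provable for matrices: for every matrix M in the image of the homomorphism from B3 = <s1,s2 | s1s2s1=s2s1s2> to GL_2(Z[v,v^{-1}]) sending s1 to A1 and s2 to A2, if projlen(M) = 0 then M = (v^3*J2)^d for some integer d; and (v^3*J2)^d = Identity if and only if d = 0. Consequently the only element of B3 mapping to the identity matrix is the identity braid. -/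
open LaurentPolynomial FreeGroup

/-- The two reduced Burau matrices `A1, A2` for the 3-strand braid group,
over the Laurent polynomial ring `ℤ[v,v⁻¹]` (here `v = T 1`). -/
noncomputable def BurauA : Fin 2 → Matrix (Fin 2) (Fin 2) (LaurentPolynomial ℤ)
  | 0 => !![-(T 1)^2, -(T 1); 0, 1]
  | 1 => !![1, 0; -(T 1), -(T 1)^2]

/-- The braid relation of the 3-strand braid group, as an element of the free group
on generators `s1 = of 0`, `s2 = of 1`. -/
def braidRels3 : Set (FreeGroup (Fin 2)) :=
  { of 0 * of 1 * of 0 * (of 1 * of 0 * of 1)⁻¹ }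

/-- The 3-strand braid group, presented by the Artin generators and the braid relation. -/
def B3 : Type := PresentedGroup braidRels3

noncomputable instance : Group B3 := by unfold B3; infer_instance

/-- The set of exponents of `v` occurring (with nonzero coefficient) in an entry
of a 2×2 matrix of Laurent polynomials. -/
def matExps (A : Matrix (Fin 2) (Fin 2) (LaurentPolynomial ℤ)) : Set ℤ :=
  {k | ∃ i j, (show ℤ →₀ ℤ from (A i j).coeff) k ≠ 0}

/-- `deg` of a matrix: the highest power of `v` occurring in an entry. -/
noncomputable def matDeg (A : Matrix (Fin 2) (Fin 2) (LaurentPolynomial ℤ)) : ℤ := sSup (matExps A)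

/-- `val` of a matrix: the lowest power of `v` occurring in an entry. -/
noncomputable def matVal (A : Matrix (Fin 2) (Fin 2) (LaurentPolynomial ℤ)) : ℤ := sInf (matExps A)

/-- `projlen` of a matrix: `deg` minus `val`. -/
noncomputable def projlen (A : Matrix (Fin 2) (Fin 2) (LaurentPolynomial ℤ)) : ℤ := matDeg A - matVal A

/-- The 2×2 antidiagonal permutation matrix `J2`. -/
noncomputable def J2 : Matrix (Fin 2) (Fin 2) (LaurentPolynomial ℤ) := !![0, 1; 1, 0]

/-!
Put `Δ = s1 s2 s1` and `δ = s1 s2`. Then `Δ² = δ³` is central, `s1 = δ⁻¹ Δ` and `s2 = Δ δ⁻¹`,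
so every braid is `Δ ^ e * w * Δ ^ k` with `w` a product of `n` letters `Δ δ` and `Δ δ²` (the
free-product normal form in `B3 / ⟨Δ²⟩ ≅ ℤ/2 ∗ ℤ/3`). The Burau matrix of `Δ` is the monomial
matrix `v³ J2`, which only shifts exponents, and each letter maps to a power of `v` times a matrix
over `ℤ[v]`; in a product of `n` of these, all exponents lie in `[0, 2n]` and the two diagonal
corners attain `0` and `2n`. So the image of `Δ ^ e * w * Δ ^ k` has `projlen = 2n`: `projlen = 0`
forces `w = 1`, i.e. the braid is a power of `Δ`, and `(v³ J2) ^ d`, whose exponents are `{3d}`,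
is the identity only for `d = 0`.
-/

local notation "M₂" => Matrix (Fin 2) (Fin 2) (LaurentPolynomial ℤ)

namespace LaurentPolynomial

variable {R : Type*} [Semiring R]

lemma T_natCast_eq_pow (n : ℕ) : (T n : R[T;T⁻¹]) = T 1 ^ n := by
  rw [T_pow, mul_one]

lemma coeff_T (n k : ℤ) : (T n : R[T;T⁻¹]).coeff k = if n = k then 1 else 0 :=
  Finsupp.single_apply

lemma coeff_mul_T (f : R[T;T⁻¹]) (n k : ℤ) : (f * T n).coeff k = f.coeff (k - n) := by
  rw [T, AddMonoidAlgebra.coeff_mul_single_apply, mul_one, sub_eq_add_neg]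

lemma coeff_T_mul (f : R[T;T⁻¹]) (n k : ℤ) : (T n * f).coeff k = f.coeff (k - n) := by
  rw [T_mul, coeff_mul_T]

def SupportedIn (f : R[T;T⁻¹]) (a b : ℤ) : Prop :=
  ∀ k ∉ Set.Icc a b, f.coeff k = 0

lemma supportedIn_zero (a b : ℤ) : SupportedIn (0 : R[T;T⁻¹]) a b :=
  fun _ _ => rfl

lemma supportedIn_T (n : ℤ) : SupportedIn (T n : R[T;T⁻¹]) n n := by
  intro k hk
  rw [coeff_T, if_neg]
  rintro rfl
  exact hk ⟨le_rfl, le_rfl⟩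

namespace SupportedIn

variable {f g : R[T;T⁻¹]} {a b a' b' : ℤ}

lemma mono (h : SupportedIn f a b) (ha : a' ≤ a) (hb : b ≤ b') : SupportedIn f a' b' :=
  fun k hk => h k fun ⟨h₁, h₂⟩ => hk ⟨ha.trans h₁, h₂.trans hb⟩

lemma add (hf : SupportedIn f a b) (hg : SupportedIn g a b) : SupportedIn (f + g) a b := by
  intro k hk
  simp [AddMonoidAlgebra.coeff_add, hf k hk, hg k hk]

lemma mul_T (hf : SupportedIn f a b) (n : ℤ) : SupportedIn (f * T n) (a + n) (b + n) := by
  intro k hk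
  rw [coeff_mul_T]
  exact hf _ fun ⟨h₁, h₂⟩ => hk ⟨by linarith, by linarith⟩

end SupportedIn

end LaurentPolynomial

lemma LaurentPolynomial.SupportedIn.neg {R : Type*} [Ring R] {f : R[T;T⁻¹]} {a b : ℤ}
    (hf : SupportedIn f a b) : SupportedIn (-f) a b := by
  intro k hk
  simp [AddMonoidAlgebra.coeff_neg, hf k hk]

open LaurentPolynomial

lemma mem_matExps {A : M₂} {k : ℤ} : k ∈ matExps A ↔ ∃ i j, (A i j).coeff k ≠ 0 := Iff.rfl

lemma projlen_eq_of_isLeast_of_isGreatest {A : M₂} {lo hi : ℤ} (hlo : IsLeast (matExps A) lo)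
    (hhi : IsGreatest (matExps A) hi) : projlen A = hi - lo := by
  rw [projlen, matDeg, matVal, hhi.csSup_eq, hlo.csInf_eq]

lemma matExps_T_smul (c : ℤ) (A : M₂) :
    matExps ((T c : ℤ[T;T⁻¹]) • A) = (· + c) '' matExps A := by
  rw [Set.image_add_right]
  ext k
  simp only [Set.mem_preimage, mem_matExps, Matrix.smul_apply, smul_eq_mul, coeff_T_mul,
    sub_eq_add_neg]

lemma J2_mul_apply (A : M₂) (i j : Fin 2) : (J2 * A) i j = A i.rev j := by
  fin_cases i <;> simp [J2, Matrix.mul_apply, Fin.sum_univ_two]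

lemma mul_J2_apply (A : M₂) (i j : Fin 2) : (A * J2) i j = A i j.rev := by
  fin_cases j <;> simp [J2, Matrix.mul_apply, Fin.sum_univ_two]

lemma matExps_J2_mul (A : M₂) : matExps (J2 * A) = matExps A := by
  ext k
  simp only [mem_matExps, J2_mul_apply]
  exact ⟨fun ⟨i, j, h⟩ => ⟨i.rev, j, h⟩, fun ⟨i, j, h⟩ => ⟨i.rev, j, by rwa [Fin.rev_rev]⟩⟩

lemma matExps_mul_J2 (A : M₂) : matExps (A * J2) = matExps A := by
  ext k
  simp only [mem_matExps, mul_J2_apply]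
  exact ⟨fun ⟨i, j, h⟩ => ⟨i, j.rev, h⟩, fun ⟨i, j, h⟩ => ⟨i, j.rev, by rwa [Fin.rev_rev]⟩⟩

lemma projlen_eq_of_matExps_eq_image {A B : M₂} {c lo hi : ℤ}
    (h : matExps B = (· + c) '' matExps A) (hlo : IsLeast (matExps A) lo)
    (hhi : IsGreatest (matExps A) hi) : projlen B = hi - lo := by
  rw [projlen_eq_of_isLeast_of_isGreatest (h ▸ add_left_mono.map_isLeast hlo)
    (h ▸ add_left_mono.map_isGreatest hhi)]
  ring

lemma J2_mul_J2 : J2 * J2 = 1 := by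
  simp [J2, Matrix.one_fin_two]

lemma T_smul_J2_mul_T_smul_J2 (a b : ℤ) :
    ((T a : ℤ[T;T⁻¹]) • J2) * ((T b : ℤ[T;T⁻¹]) • J2) = (T (a + b) : ℤ[T;T⁻¹]) • 1 := by
  rw [smul_mul_smul_comm, ← T_add, J2_mul_J2]

lemma matExps_T_smul_J2_mul (c : ℤ) (A : M₂) :
    matExps (((T c : ℤ[T;T⁻¹]) • J2) * A) = (· + c) '' matExps A := by
  rw [smul_mul_assoc, matExps_T_smul, matExps_J2_mul]

lemma matExps_mul_T_smul_J2 (c : ℤ) (A : M₂) :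
    matExps (A * ((T c : ℤ[T;T⁻¹]) • J2)) = (· + c) '' matExps A := by
  rw [mul_smul_comm, matExps_T_smul, matExps_mul_J2]

section

variable {u : GL (Fin 2) ℤ[T;T⁻¹]} {c : ℤ}

lemma val_inv_of_val_eq_T_smul_J2 (hu : (u : M₂) = (T c : ℤ[T;T⁻¹]) • J2) :
    ((u⁻¹ : GL (Fin 2) ℤ[T;T⁻¹]) : M₂) = (T (-c) : ℤ[T;T⁻¹]) • J2 :=
  Units.inv_eq_of_mul_eq_one_right <| by
    rw [hu, T_smul_J2_mul_T_smul_J2, add_neg_cancel, T_zero, one_smul]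

lemma matExps_zpow_mul (hu : (u : M₂) = (T c : ℤ[T;T⁻¹]) • J2) (n : ℤ) (A : M₂) :
    matExps ((u ^ n : GL (Fin 2) ℤ[T;T⁻¹]) * A) = (· + c * n) '' matExps A := by
  induction n using Int.induction_on generalizing A with
  | zero => simp
  | succ n ih =>
    rw [zpow_add_one, Units.val_mul, mul_assoc, ih, hu, matExps_T_smul_J2_mul, Set.image_image]
    congr 1
    ext
    ring
  | pred n ih =>
    rw [zpow_sub_one, Units.val_mul, mul_assoc, ih, val_inv_of_val_eq_T_smul_J2 hu,
      matExps_T_smul_J2_mul, Set.image_image]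
    congr 1
    ext
    ring

lemma matExps_mul_zpow (hu : (u : M₂) = (T c : ℤ[T;T⁻¹]) • J2) (n : ℤ) (A : M₂) :
    matExps (A * (u ^ n : GL (Fin 2) ℤ[T;T⁻¹])) = (· + c * n) '' matExps A := by
  induction n using Int.induction_on with
  | zero => simp
  | succ n ih =>
    rw [zpow_add_one, Units.val_mul, ← mul_assoc, hu, matExps_mul_T_smul_J2, ih,
      Set.image_image]
    congr 1
    ext
    ring
  | pred n ih =>
    rw [zpow_sub_one, Units.val_mul, ← mul_assoc, val_inv_of_val_eq_T_smul_J2 hu,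
      matExps_mul_T_smul_J2, ih, Set.image_image]
    congr 1
    ext
    ring

end

/-- `v⁻⁴` and `v⁻⁶` times the Burau matrices of the letters `Δ δ` and `Δ δ²`. -/
noncomputable def letterMat : Fin 2 → M₂
  | 0 => !![-1, -T 1; 0, T 1 ^ 2]
  | 1 => !![1, 0; -T 1, -T 1 ^ 2]

noncomputable def letterProd (l : List (Fin 2)) : M₂ := (l.map letterMat).prod

structure HasCornerExps (W : M₂) (d : ℤ) : Prop where
  supportedIn : ∀ i j, SupportedIn (W i j) 0 d
  coeff_zero_ne_zero : (W 0 0).coeff 0 ≠ 0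
  coeff_top_ne_zero : (W 1 1).coeff d ≠ 0

namespace HasCornerExps

variable {W : M₂} {d : ℤ}

lemma isLeast (h : HasCornerExps W d) : IsLeast (matExps W) 0 :=
  ⟨⟨0, 0, h.coeff_zero_ne_zero⟩, fun _ ⟨i, j, hk⟩ => (not_not.1 (mt (h.supportedIn i j _) hk)).1⟩

lemma isGreatest (h : HasCornerExps W d) : IsGreatest (matExps W) d :=
  ⟨⟨1, 1, h.coeff_top_ne_zero⟩, fun _ ⟨i, j, hk⟩ => (not_not.1 (mt (h.supportedIn i j _) hk)).2⟩

lemma mul_letterMat_zero (h : HasCornerExps W d) : HasCornerExps (W * letterMat 0) (d + 2) := by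
  have col0 : ∀ i, (W * letterMat 0) i 0 = -W i 0 := fun i => by
    simp [letterMat, Matrix.mul_apply]
  have col1 : ∀ i, (W * letterMat 0) i 1 = -(W i 0 * T 1) + W i 1 * T 2 := fun i => by
    simp [letterMat, Matrix.mul_apply]
  have hd : 0 ≤ d := h.isLeast.2 h.isGreatest.1
  refine ⟨fun i j => ?_, ?_, ?_⟩
  · fin_cases j
    · simpa [col0] using (h.supportedIn i 0).neg.mono le_rfl (by omega)
    · simpa [col1] using (((h.supportedIn i 0).mul_T 1).neg.mono (by omega) (by omega)).add
        (((h.supportedIn i 1).mul_T 2).mono (by omega) le_rfl)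
  · simpa [col0] using h.coeff_zero_ne_zero
  · have : (W 1 0).coeff (d + 2 - 1) = 0 :=
      h.supportedIn 1 0 _ (by simp only [Set.mem_Icc]; omega)
    simpa [col1, coeff_mul_T, this] using h.coeff_top_ne_zero

lemma mul_letterMat_one (h : HasCornerExps W d) : HasCornerExps (W * letterMat 1) (d + 2) := by
  have col0 : ∀ i, (W * letterMat 1) i 0 = W i 0 + -(W i 1 * T 1) := fun i => by
    simp [letterMat, Matrix.mul_apply]
  have col1 : ∀ i, (W * letterMat 1) i 1 = -(W i 1 * T 2) := fun i => by
    simp [letterMat, Matrix.mul_apply]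
  have hd : 0 ≤ d := h.isLeast.2 h.isGreatest.1
  refine ⟨fun i j => ?_, ?_, ?_⟩
  · fin_cases j
    · simpa [col0] using ((h.supportedIn i 0).mono le_rfl (by omega)).add
        (((h.supportedIn i 1).mul_T 1).neg.mono (by omega) (by omega))
    · simpa [col1] using ((h.supportedIn i 1).mul_T 2).neg.mono (by omega) le_rfl
  · have : (W 0 1).coeff (-1) = 0 :=
      h.supportedIn 0 1 _ (by simp only [Set.mem_Icc]; omega)
    simpa [col0, coeff_mul_T, this] using h.coeff_zero_ne_zero
  · simpa [col1, coeff_mul_T] using h.coeff_top_ne_zero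

end HasCornerExps

lemma hasCornerExps_one : HasCornerExps 1 0 := by
  refine ⟨fun i j => ?_, by simp, by simp⟩
  rw [Matrix.one_apply]
  split_ifs
  · simpa using supportedIn_T (R := ℤ) 0
  · exact supportedIn_zero 0 0

lemma HasCornerExps.mul_letterMat {W : M₂} {d : ℤ} (h : HasCornerExps W d) (i : Fin 2) :
    HasCornerExps (W * letterMat i) (d + 2) := by
  fin_cases i
  exacts [h.mul_letterMat_zero, h.mul_letterMat_one]

lemma HasCornerExps.mul_letterProd {W : M₂} {d : ℤ} (h : HasCornerExps W d)
    (l : List (Fin 2)) :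
    HasCornerExps (W * letterProd l) (d + 2 * l.length) := by
  induction l generalizing W d with
  | nil => simpa [letterProd] using h
  | cons i l ih =>
    convert ih (h.mul_letterMat i) using 1
    · simp [letterProd, mul_assoc]
    · push_cast [List.length_cons]
      ring

lemma hasCornerExps_letterProd (l : List (Fin 2)) :
    HasCornerExps (letterProd l) (2 * l.length) := by
  simpa using hasCornerExps_one.mul_letterProd l

lemma burauA_mul_burauA_mul_burauA :
    BurauA 0 * BurauA 1 * BurauA 0 = (T 3 : ℤ[T;T⁻¹]) • J2 := by
  rw [show (3 : ℤ) = (3 : ℕ) from rfl, T_natCast_eq_pow]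
  refine Matrix.ext fun i j => ?_
  fin_cases i <;> fin_cases j <;>
    simp only [BurauA, J2, Matrix.mul_apply, Fin.sum_univ_two, Matrix.smul_apply, smul_eq_mul,
      Matrix.of_apply, Matrix.cons_val', Matrix.cons_val_zero, Matrix.cons_val_one,
      Matrix.empty_val', Matrix.cons_val_fin_one, Fin.zero_eta, Fin.mk_one] <;> ring

lemma T_smul_J2_mul_burauA_mul_burauA :
    (T 3 : ℤ[T;T⁻¹]) • J2 * (BurauA 0 * BurauA 1) = (T 4 : ℤ[T;T⁻¹]) • letterMat 0 := by
  rw [show (3 : ℤ) = (3 : ℕ) from rfl, show (4 : ℤ) = (4 : ℕ) from rfl, T_natCast_eq_pow,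
    T_natCast_eq_pow]
  refine Matrix.ext fun i j => ?_
  fin_cases i <;> fin_cases j <;>
    simp only [BurauA, J2, letterMat, Matrix.mul_apply, Fin.sum_univ_two, Matrix.smul_apply,
      smul_eq_mul, Matrix.of_apply, Matrix.cons_val', Matrix.cons_val_zero, Matrix.cons_val_one,
      Matrix.empty_val', Matrix.cons_val_fin_one, Fin.zero_eta, Fin.mk_one] <;> ring

lemma T_smul_J2_mul_burauA_mul_burauA_sq :
    (T 3 : ℤ[T;T⁻¹]) • J2 * (BurauA 0 * BurauA 1) ^ 2 = (T 6 : ℤ[T;T⁻¹]) • letterMat 1 := by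
  rw [show (3 : ℤ) = (3 : ℕ) from rfl, show (6 : ℤ) = (6 : ℕ) from rfl, T_natCast_eq_pow,
    T_natCast_eq_pow, sq]
  refine Matrix.ext fun i j => ?_
  fin_cases i <;> fin_cases j <;>
    simp only [BurauA, J2, letterMat, Matrix.mul_apply, Fin.sum_univ_two, Matrix.smul_apply,
      smul_eq_mul, Matrix.of_apply, Matrix.cons_val', Matrix.cons_val_zero, Matrix.cons_val_one,
      Matrix.empty_val', Matrix.cons_val_fin_one, Fin.zero_eta, Fin.mk_one] <;> ring

namespace B3

def s1 : B3 := PresentedGroup.of 0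

def s2 : B3 := PresentedGroup.of 1

noncomputable def Δ : B3 := s1 * s2 * s1

noncomputable def δ : B3 := s1 * s2

lemma braid_rel : s1 * s2 * s1 = s2 * s1 * s2 :=
  PresentedGroup.mk_eq_mk_of_mul_inv_mem (rels := braidRels3) rfl

lemma Δ_sq_eq_δ_pow_three : Δ ^ 2 = δ ^ 3 := by
  rw [Δ, δ, pow_two, pow_three]
  nth_rewrite 2 [braid_rel]
  group

lemma s1_eq_δ_inv_mul_Δ : s1 = δ⁻¹ * Δ := by
  rw [Δ, δ]; group

lemma s2_eq_Δ_mul_δ_inv : s2 = Δ * δ⁻¹ := by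
  rw [Δ, δ, braid_rel]; group

lemma δ_inv_eq : δ⁻¹ = δ ^ 2 * Δ ^ (-2 : ℤ) := by
  rw [zpow_neg, zpow_ofNat, Δ_sq_eq_δ_pow_three]; group

lemma commute_Δ_zpow_two_mul (m : ℤ) : Commute (Δ ^ (2 * m)) δ := by
  rw [zpow_mul, zpow_ofNat, Δ_sq_eq_δ_pow_three]
  exact ((Commute.refl δ).pow_left 3).zpow_left m

noncomputable def letter : Fin 2 → B3
  | 0 => Δ * δ
  | 1 => Δ * δ ^ 2

noncomputable def word (l : List (Fin 2)) : B3 := (l.map letter).prod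

def normalForms : Set B3 := {g | ∃ (e k : ℤ) (l : List (Fin 2)), g = Δ ^ e * word l * Δ ^ k}

lemma mul_Δ_zpow_mem {g : B3} (hg : g ∈ normalForms) (n : ℤ) : g * Δ ^ n ∈ normalForms := by
  obtain ⟨e, k, l, rfl⟩ := hg
  exact ⟨e, k + n, l, by rw [mul_assoc, ← zpow_add]⟩

lemma Δ_zpow_mul_word_mul_δ_mem (e : ℤ) (l : List (Fin 2)) :
    Δ ^ e * word l * δ ∈ normalForms := by
  rcases l.eq_nil_or_concat' with rfl | ⟨l, i, rfl⟩
  · refine ⟨e - 1, 0, [0], ?_⟩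
    simp only [word, letter, List.map_cons, List.map_nil, List.prod_cons, List.prod_nil]
    group
  · fin_cases i
    · refine ⟨e, 0, l ++ [1], ?_⟩
      simp only [word, letter, List.map_append, List.prod_append, List.map_cons, List.map_nil,
        List.prod_cons, List.prod_nil, pow_two]
      group
    · refine ⟨e, 3, l, ?_⟩
      simp only [word, letter, List.map_append, List.prod_append, List.map_cons, List.map_nil,
        List.prod_cons, List.prod_nil]
      rw [show (3 : ℤ) = 1 + 2 from rfl, zpow_add, zpow_one, zpow_ofNat, Δ_sq_eq_δ_pow_three]
      group

lemma mul_δ_mem {g : B3} (hg : g ∈ normalForms) : g * δ ∈ normalForms := by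
  obtain ⟨e, k, l, rfl⟩ := hg
  obtain ⟨m, rfl | rfl⟩ := k.even_or_odd'
  · rw [mul_assoc, (commute_Δ_zpow_two_mul m).eq, ← mul_assoc]
    exact mul_Δ_zpow_mem (Δ_zpow_mul_word_mul_δ_mem e l) _
  · refine ⟨e, 2 * m, l ++ [0], ?_⟩
    simp only [word, letter, List.map_append, List.prod_append, List.map_cons, List.map_nil,
      List.prod_cons, List.prod_nil]
    rw [add_comm, zpow_one_add]
    simp only [mul_assoc, (commute_Δ_zpow_two_mul m).eq, mul_one]

lemma mul_δ_inv_mem {g : B3} (hg : g ∈ normalForms) : g * δ⁻¹ ∈ normalForms := by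
  rw [δ_inv_eq, pow_two, ← mul_assoc, ← mul_assoc]
  exact mul_Δ_zpow_mem (mul_δ_mem (mul_δ_mem hg)) _

lemma mul_generator_mem {g s : B3} (hg : g ∈ normalForms)
    (hs : s ∈ Set.range (PresentedGroup.of : Fin 2 → B3)) : g * s ∈ normalForms := by
  obtain ⟨i, rfl⟩ := hs
  fin_cases i
  · change g * s1 ∈ _
    rw [s1_eq_δ_inv_mul_Δ, ← mul_assoc]
    simpa using mul_Δ_zpow_mem (mul_δ_inv_mem hg) 1
  · change g * s2 ∈ _
    rw [s2_eq_Δ_mul_δ_inv, ← mul_assoc]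
    exact mul_δ_inv_mem (by simpa using mul_Δ_zpow_mem hg 1)

lemma mul_generator_inv_mem {g s : B3} (hg : g ∈ normalForms)
    (hs : s ∈ Set.range (PresentedGroup.of : Fin 2 → B3)) : g * s⁻¹ ∈ normalForms := by
  obtain ⟨i, rfl⟩ := hs
  fin_cases i
  · change g * s1⁻¹ ∈ _
    rw [s1_eq_δ_inv_mul_Δ, mul_inv_rev, inv_inv, ← mul_assoc]
    exact mul_δ_mem (by simpa using mul_Δ_zpow_mem hg (-1))
  · change g * s2⁻¹ ∈ _
    rw [s2_eq_Δ_mul_δ_inv, mul_inv_rev, inv_inv, ← mul_assoc]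
    simpa using mul_Δ_zpow_mem (mul_δ_mem hg) (-1)

lemma mem_normalForms (g : B3) : g ∈ normalForms := by
  have hg : g ∈ Subgroup.closure (Set.range (PresentedGroup.of : Fin 2 → B3)) := by
    rw [show Subgroup.closure (Set.range (PresentedGroup.of : Fin 2 → B3)) = ⊤ from
      PresentedGroup.closure_range_of braidRels3]
    trivial
  induction hg using Subgroup.closure_induction_right with
  | one => exact ⟨0, 0, [], by simp [word]⟩
  | mul_right _ _ _ hs hg => exact mul_generator_mem hg hs
  | mul_inv_cancel _ _ _ hs hg => exact mul_generator_inv_mem hg hs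

end B3

def IsBurau (π : B3 →* GL (Fin 2) ℤ[T;T⁻¹]) : Prop :=
  ∀ i : Fin 2, (π (PresentedGroup.of i) : M₂) = BurauA i

namespace IsBurau

open B3

variable {π : B3 →* GL (Fin 2) ℤ[T;T⁻¹]}

lemma val_s1 (hπ : IsBurau π) : (π s1 : M₂) = BurauA 0 := hπ 0

lemma val_s2 (hπ : IsBurau π) : (π s2 : M₂) = BurauA 1 := hπ 1

lemma val_Δ (hπ : IsBurau π) : (π Δ : M₂) = (T 3 : ℤ[T;T⁻¹]) • J2 := by
  rw [Δ, _root_.map_mul, _root_.map_mul, Units.val_mul, Units.val_mul, hπ.val_s1, hπ.val_s2,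
    burauA_mul_burauA_mul_burauA]

lemma val_δ (hπ : IsBurau π) : (π δ : M₂) = BurauA 0 * BurauA 1 := by
  rw [δ, _root_.map_mul, Units.val_mul, hπ.val_s1, hπ.val_s2]

lemma exists_val_letter (hπ : IsBurau π) (i : Fin 2) :
    ∃ c : ℤ, (π (letter i) : M₂) = (T c : ℤ[T;T⁻¹]) • letterMat i := by
  match i with
  | 0 => exact ⟨4, by
      rw [letter, _root_.map_mul, Units.val_mul, hπ.val_Δ, hπ.val_δ,
        T_smul_J2_mul_burauA_mul_burauA]⟩
  | 1 => exact ⟨6, by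
      rw [letter, _root_.map_mul, _root_.map_pow, Units.val_mul, Units.val_pow_eq_pow_val,
        hπ.val_Δ, hπ.val_δ, T_smul_J2_mul_burauA_mul_burauA_sq]⟩

lemma exists_val_word (hπ : IsBurau π) (l : List (Fin 2)) :
    ∃ c : ℤ, (π (word l) : M₂) = (T c : ℤ[T;T⁻¹]) • letterProd l := by
  induction l with
  | nil => exact ⟨0, by simp [word, letterProd]⟩
  | cons i l ih =>
    obtain ⟨a, ha⟩ := hπ.exists_val_letter i
    obtain ⟨c, hc⟩ := ih
    refine ⟨a + c, ?_⟩
    simp only [word, letterProd, List.map_cons, List.prod_cons, _root_.map_mul,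
      Units.val_mul] at hc ⊢
    rw [ha, hc, smul_mul_smul_comm, ← T_add]

lemma val_Δ_zpow (hπ : IsBurau π) (n : ℤ) :
    (π (Δ ^ n) : M₂) = ((T 3 : ℤ[T;T⁻¹]) • J2) ^ n := by
  rw [_root_.map_zpow, Matrix.coe_units_zpow, hπ.val_Δ]

lemma projlen_normalForm (hπ : IsBurau π) (e k : ℤ) (l : List (Fin 2)) :
    projlen (π (Δ ^ e * word l * Δ ^ k) : M₂) = 2 * l.length := by
  obtain ⟨c, hc⟩ := hπ.exists_val_word l
  have hexps : matExps (π (Δ ^ e * word l * Δ ^ k) : M₂) =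
      (· + (c + 3 * e + 3 * k)) '' matExps (letterProd l) := by
    rw [_root_.map_mul, _root_.map_mul, Units.val_mul, Units.val_mul, _root_.map_zpow,
      _root_.map_zpow, matExps_mul_zpow hπ.val_Δ, matExps_zpow_mul hπ.val_Δ, hc, matExps_T_smul,
      Set.image_image, Set.image_image]
    congr 1
    ext
    ring
  have h := hasCornerExps_letterProd l
  rw [projlen_eq_of_matExps_eq_image hexps h.isLeast h.isGreatest, sub_zero]

lemma exists_eq_Δ_zpow_of_projlen_eq_zero (hπ : IsBurau π) (g : B3)
    (hg : projlen (π g : M₂) = 0) : ∃ n : ℤ, g = Δ ^ n := by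
  obtain ⟨e, k, l, rfl⟩ := mem_normalForms g
  rw [hπ.projlen_normalForm] at hg
  obtain rfl : l = [] := List.length_eq_zero_iff.mp (by omega)
  exact ⟨e + k, by simp [word, zpow_add]⟩

end IsBurau

lemma T_smul_J2_zpow_eq_one_iff (d : ℤ) : ((T 3 : ℤ[T;T⁻¹]) • J2) ^ d = 1 ↔ d = 0 := by
  refine ⟨fun h => ?_, fun h => h ▸ zpow_zero _⟩
  let u : GL (Fin 2) ℤ[T;T⁻¹] :=
    ⟨(T 3 : ℤ[T;T⁻¹]) • J2, (T (-3) : ℤ[T;T⁻¹]) • J2, by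
      rw [T_smul_J2_mul_T_smul_J2, add_neg_cancel, T_zero, one_smul], by
      rw [T_smul_J2_mul_T_smul_J2, neg_add_cancel, T_zero, one_smul]⟩
  have hu := matExps_zpow_mul (u := u) rfl d 1
  rw [mul_one, Matrix.coe_units_zpow, h] at hu
  have h0 := hasCornerExps_one.isLeast
  have h1 : IsLeast (matExps 1) (0 + 3 * d) := hu ▸ add_left_mono.map_isLeast h0
  have := h0.unique h1
  omega

/-- A `projlen`-type statistic detecting Garside length implies faithfulness; concretely for
`B3`: every matrix `M` in the image of the Burau representation with `projlen M = 0` is an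
integer power of `v³ · J2` (the Burau matrix of `Δ`); `(v³ · J2)^d = 1` iff `d = 0`; and
consequently the only element of `B3` mapping to the identity matrix is the identity braid. -/
theorem burau_three_strand_projlen_faithful :
    (∀ π : B3 →* GL (Fin 2) (LaurentPolynomial ℤ),
      (∀ i : Fin 2, (π (PresentedGroup.of i) : Matrix (Fin 2) (Fin 2) (LaurentPolynomial ℤ)) = BurauA i) →
      ∀ x : B3, projlen (π x) = 0 →
        ∃ d : ℤ, (π x : Matrix (Fin 2) (Fin 2) (LaurentPolynomial ℤ)) =
          ((T 3 : LaurentPolynomial ℤ) • J2) ^ d) ∧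
    (∀ d : ℤ, ((T 3 : LaurentPolynomial ℤ) • J2) ^ d = 1 ↔ d = 0) ∧
    (∀ π : B3 →* GL (Fin 2) (LaurentPolynomial ℤ),
      (∀ i : Fin 2, (π (PresentedGroup.of i) : Matrix (Fin 2) (Fin 2) (LaurentPolynomial ℤ)) = BurauA i) →
      ∀ x : B3, (π x : Matrix (Fin 2) (Fin 2) (LaurentPolynomial ℤ)) = 1 → x = 1) := by
  refine ⟨fun π hπ x hx => ?_, T_smul_J2_zpow_eq_one_iff, fun π hπ x hx => ?_⟩
  · obtain ⟨n, rfl⟩ := IsBurau.exists_eq_Δ_zpow_of_projlen_eq_zero hπ x hx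
    exact ⟨n, IsBurau.val_Δ_zpow hπ n⟩
  · have hpl : projlen (π x : M₂) = 0 := by
      rw [hx, projlen_eq_of_isLeast_of_isGreatest hasCornerExps_one.isLeast
        hasCornerExps_one.isGreatest, sub_zero]
    obtain ⟨n, rfl⟩ := IsBurau.exists_eq_Δ_zpow_of_projlen_eq_zero hπ x hpl
    rw [IsBurau.val_Δ_zpow hπ, T_smul_J2_zpow_eq_one_iff] at hx
    rw [hx, zpow_zero]
end
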